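/- arXiv:1107.3608 — 12 statements merged into one kernel-verified Lean document; each statement's English description precedes it below -/
import Mathlib

section
/- Every compact closed paracategory C admits a faithful strict symmetric monoidal functor of paracategories F into a compact closed (total) category D, which moreover preserves and reflects the trace: for all f : A⊗U → B⊗U and g : A → B in C, the trace Tr^U_{A,B}(f) = [1_A⊗η_U, 1_A⊗σ_{U*,U}, f⊗1_{U*}, 1_B⊗ε_U] is defined and equals g in C if and only if the canonical trace of F(f) in D equals F(g). -/
universe w w' u v u' v'

/-- Composable paths of arrows in a directed graph. -/
inductive PPath {Obj : Type u} (Hom : Obj → Obj → Type v) : Obj → Obj → Type (max u v)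
  | nil (A : Obj) : PPath Hom A A
  | cons {A B C : Obj} (f : Hom A B) (p : PPath Hom B C) : PPath Hom A C

namespace PPath

variable {Obj : Type u} {Hom : Obj → Obj → Type v}

/-- Concatenation of paths. -/
def append : ∀ {A B C : Obj}, PPath Hom A B → PPath Hom B C → PPath Hom A C
  | _, _, _, .nil _, q => q
  | _, _, _, .cons f p, q => .cons f (append p q)

/-- The path of length one on an arrow. -/
def single {A B : Obj} (f : Hom A B) : PPath Hom A B := .cons f (.nil B)

/-- The image of a path under a graph homomorphism. -/
def map {Obj' : Type u'} {Hom' : Obj' → Obj' → Type v'} (φ : Obj → Obj')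
    (F : ∀ {A B : Obj}, Hom A B → Hom' (φ A) (φ B)) :
    ∀ {A B : Obj}, PPath Hom A B → PPath Hom' (φ A) (φ B)
  | _, _, .nil A => .nil (φ A)
  | _, _, .cons f p => .cons (F f) (map φ (fun f => F f) p)

end PPath

/-- Transport of an arrow of a graph along equalities of its endpoints. -/
def castHom {Obj : Type u} {Hom : Obj → Obj → Type v} {A A' B B' : Obj}
    (h₁ : A = A') (h₂ : B = B') (f : Hom A B) : Hom A' B' := h₁ ▸ h₂ ▸ f

/-- A paracategory: a directed graph together with a partial composition operation on
paths, such that empty paths compose (to the identity `pid`), singleton paths compose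
to themselves, and composition satisfies the splicing (flattening) law. -/
structure Paracategory : Type (max (u + 1) (v + 1)) where
  Obj : Type u
  Hom : Obj → Obj → Type v
  comp : ∀ {A B : Obj}, PPath Hom A B → Option (Hom A B)
  pid : ∀ A : Obj, Hom A A
  comp_nil : ∀ A : Obj, comp (.nil A) = some (pid A)
  comp_single : ∀ {A B : Obj} (f : Hom A B), comp (PPath.single f) = some f
  comp_splice : ∀ {A B C D : Obj} (r : PPath Hom A B) (p : PPath Hom B C)
    (s : PPath Hom C D) (v : Hom B C), comp p = some v →
    comp (r.append (.cons v s)) = comp (r.append (p.append s))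

/-- A paracategory is total when every path composes; total paracategories are
precisely (the underlying graphs with path-composition of) ordinary categories. -/
def Paracategory.total (C : Paracategory.{u, v}) : Prop :=
  ∀ (A B : C.Obj) (p : PPath C.Hom A B), (C.comp p).isSome

/-- Pointwise tensor of two paths of the same length. -/
inductive PathTensor {Obj : Type u} {Hom : Obj → Obj → Type v}
    (tObj : Obj → Obj → Obj)
    (tHom : ∀ (A B C D : Obj), Hom A B → Hom C D → Hom (tObj A C) (tObj B D)) :
    ∀ {A B C D : Obj}, PPath Hom A B → PPath Hom C D →
      PPath Hom (tObj A C) (tObj B D) → Prop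
  | nil (A C : Obj) : PathTensor tObj tHom (.nil A) (.nil C) (.nil (tObj A C))
  | cons {A B C D E F : Obj} (f : Hom A B) (g : Hom C D) {p : PPath Hom B E}
      {q : PPath Hom D F} {r : PPath Hom (tObj B D) (tObj E F)} :
      PathTensor tObj tHom p q r →
      PathTensor tObj tHom (.cons f p) (.cons g q) (.cons (tHom _ _ _ _ f g) r)

/-- A strict symmetric monoidal paracategory. -/
structure SSMParacategory extends Paracategory.{u, v} where
  tObj : Obj → Obj → Obj
  unit : Obj
  tHom : ∀ {A B C D : Obj}, Hom A B → Hom C D → Hom (tObj A C) (tObj B D)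
  tObj_assoc : ∀ A B C, tObj (tObj A B) C = tObj A (tObj B C)
  tObj_unit_left : ∀ A, tObj unit A = A
  tObj_unit_right : ∀ A, tObj A unit = A
  tHom_assoc : ∀ {A B C D E F : Obj} (f : Hom A B) (g : Hom C D) (h : Hom E F),
    castHom (tObj_assoc A C E) (tObj_assoc B D F) (tHom (tHom f g) h) =
      tHom f (tHom g h)
  tHom_unit_left : ∀ {A B : Obj} (f : Hom A B),
    castHom (tObj_unit_left A) (tObj_unit_left B) (tHom (pid unit) f) = f
  tHom_unit_right : ∀ {A B : Obj} (f : Hom A B),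
    castHom (tObj_unit_right A) (tObj_unit_right B) (tHom f (pid unit)) = f
  tensor_comp : ∀ {A B C D : Obj} {p : PPath Hom A B} {q : PPath Hom C D}
    {r : PPath Hom (tObj A C) (tObj B D)},
    PathTensor tObj (fun _ _ _ _ f g => tHom f g) p q r →
    ∀ (vp : Hom A B) (vq : Hom C D), comp p = some vp → comp q = some vq →
      comp r = some (tHom vp vq)
  braid : ∀ A B : Obj, Hom (tObj A B) (tObj B A)
  braid_total_left : ∀ {X A B Y : Obj} (f : Hom (tObj X (tObj B A)) Y),
    (comp (.cons (tHom (pid X) (braid A B)) (PPath.single f))).isSome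
  braid_total_right : ∀ {X A B Y : Obj} (g : Hom Y (tObj X (tObj A B))),
    (comp (.cons g (PPath.single (tHom (pid X) (braid A B))))).isSome
  braid_natural_left : ∀ {A A' B : Obj} (f : Hom A A'),
    ∃ w, comp (.cons (tHom f (pid B)) (PPath.single (braid A' B))) = some w ∧
      comp (.cons (braid A B) (PPath.single (tHom (pid B) f))) = some w
  braid_natural_right : ∀ {A B B' : Obj} (g : Hom B B'),
    ∃ w, comp (.cons (tHom (pid A) g) (PPath.single (braid A B'))) = some w ∧
      comp (.cons (braid A B) (PPath.single (tHom g (pid A)))) = some w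
  braid_symmetry : ∀ A B : Obj,
    comp (.cons (braid A B) (PPath.single (braid B A))) = some (pid (tObj A B))
  braid_hexagon : ∀ A B C : Obj,
    comp (.cons (tHom (braid A B) (pid C))
        (PPath.single (castHom (tObj_assoc B A C).symm (tObj_assoc B C A).symm
          (tHom (pid B) (braid A C))))) =
      some (castHom (tObj_assoc A B C).symm rfl (braid A (tObj B C)))

/-- A strict symmetric monoidal functor of paracategories. -/
structure SSMFunctor (C : SSMParacategory.{u, v}) (D : SSMParacategory.{u', v'}) where
  obj : C.Obj → D.Obj
  map : ∀ {A B : C.Obj}, C.Hom A B → D.Hom (obj A) (obj B)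
  map_comp : ∀ {A B : C.Obj} (p : PPath C.Hom A B) (v : C.Hom A B),
    C.comp p = some v → D.comp (p.map obj (fun f => map f)) = some (map v)
  obj_tensor : ∀ A B : C.Obj, obj (C.tObj A B) = D.tObj (obj A) (obj B)
  obj_unit : obj C.unit = D.unit
  map_tensor : ∀ {A B A' B' : C.Obj} (f : C.Hom A B) (g : C.Hom A' B'),
    castHom (obj_tensor A A') (obj_tensor B B') (map (C.tHom f g)) =
      D.tHom (map f) (map g)
  map_braid : ∀ A B : C.Obj,
    castHom (obj_tensor A B) (obj_tensor B A) (map (C.braid A B)) =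
      D.braid (obj A) (obj B)

/-- Faithfulness of a functor of paracategories. -/
def SSMFunctor.Faithful {C : SSMParacategory.{u, v}} {D : SSMParacategory.{u', v'}}
    (F : SSMFunctor C D) : Prop :=
  ∀ (A B : C.Obj) (f g : C.Hom A B), F.map f = F.map g → f = g

/-- Fullness of a functor of paracategories. -/
def SSMFunctor.Full {C : SSMParacategory.{u, v}} {D : SSMParacategory.{u', v'}}
    (F : SSMFunctor C D) : Prop :=
  ∀ (A B : C.Obj) (g : D.Hom (F.obj A) (F.obj B)), ∃ f : C.Hom A B, F.map f = g

/-- A (strict symmetric) compact closed paracategory. -/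
structure CompactClosedPara extends SSMParacategory.{u, v} where
  dual : Obj → Obj
  eta : ∀ A : Obj, Hom unit (tObj (dual A) A)
  eps : ∀ A : Obj, Hom (tObj A (dual A)) unit
  total_eta_left : ∀ {A B C : Obj} (f : Hom (tObj A (dual C)) B),
    (comp (.cons (castHom (tObj_unit_right A) rfl (tHom (pid A) (eta C)))
      (PPath.single (castHom (tObj_assoc A (dual C) C) rfl
        (tHom f (pid C)))))).isSome
  total_eps_left : ∀ {A B C : Obj} (g : Hom A (tObj B C)),
    (comp (.cons (tHom g (pid (dual C)))
      (PPath.single (castHom (tObj_assoc B C (dual C)).symm (tObj_unit_right B)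
        (tHom (pid B) (eps C)))))).isSome
  total_eta_right : ∀ {A B C : Obj} (h : Hom (tObj A B) C),
    (comp (.cons (castHom (tObj_unit_left B) (tObj_assoc (dual A) A B)
        (tHom (eta A) (pid B)))
      (PPath.single (tHom (pid (dual A)) h)))).isSome
  total_eps_right : ∀ {A B C : Obj} (k : Hom B (tObj (dual A) C)),
    (comp (.cons (tHom (pid A) k)
      (PPath.single (castHom (tObj_assoc A (dual A) C) (tObj_unit_left C)
        (tHom (eps A) (pid C)))))).isSome
  triangle_left : ∀ A : Obj,
    comp (.cons (castHom (tObj_unit_right A) rfl (tHom (pid A) (eta A)))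
        (PPath.single (castHom (tObj_assoc A (dual A) A) (tObj_unit_left A)
          (tHom (eps A) (pid A))))) = some (pid A)
  triangle_right : ∀ A : Obj,
    comp (.cons (castHom (tObj_unit_left (dual A)) (tObj_assoc (dual A) A (dual A))
        (tHom (eta A) (pid (dual A))))
        (PPath.single (castHom rfl (tObj_unit_right (dual A))
          (tHom (pid (dual A)) (eps A))))) = some (pid (dual A))

/-- The (partially defined) trace of `f : A⊗U ⟶ B⊗U` in a compact closed
paracategory: `Tr^U(f) :≃ [1_A⊗η_U, 1_A⊗σ_{U*,U}, f⊗1_{U*}, 1_B⊗ε_U]`. -/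
def CompactClosedPara.ccTrace (C : CompactClosedPara.{u, v}) {A B U : C.Obj}
    (f : C.Hom (C.tObj A U) (C.tObj B U)) : Option (C.Hom A B) :=
  C.comp (.cons (castHom (C.tObj_unit_right A) rfl (C.tHom (C.pid A) (C.eta U)))
    (.cons (C.tHom (C.pid A) (C.braid (C.dual U) U))
      (.cons (castHom (C.tObj_assoc A U (C.dual U)) (C.tObj_assoc B U (C.dual U))
          (C.tHom f (C.pid (C.dual U))))
        (PPath.single (castHom rfl (C.tObj_unit_right B)
          (C.tHom (C.pid B) (C.eps U)))))))

/-!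
Arrows of the envelope of `C` are paths in `C` modulo the congruence generated by
contracting a subpath `p⃗` with `[p⃗]↓` to the single arrow `[p⃗]`. Concatenation makes this
a total category, and `[−]` descends to its arrows, so `f ↦ [f]` is faithful and reflects
every equation `[p⃗] = g`. The tensor of classes is `[p⃗] ⊗ [q⃗] := [p⃗ ⊗ 1, 1 ⊗ q⃗]`; it is
well defined because whiskering preserves defined composites, and bifunctorial because the
interchange law `[f ⊗ 1, 1 ⊗ g] = f ⊗ g = [1 ⊗ g, f ⊗ 1]` lets whiskered blocks commute. The
braiding, units and counits are those of `C`, and each coherence axiom of the envelope is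
a contraction of the corresponding axiom of `C`. Since whiskering a single arrow by an
identity class is again a single arrow, the trace of `[f]` in the envelope is the class of
the trace path of `f` in `C`, and evaluating that class gives back `Tr^U(f)`.
-/

namespace PPath

variable {Obj : Type u} {Hom : Obj → Obj → Type v}

@[simp] theorem append_nil : ∀ {A B : Obj} (p : PPath Hom A B), p.append (.nil B) = p
  | _, _, .nil _ => rfl
  | _, _, .cons f p => by rw [append, append_nil p]

theorem append_assoc : ∀ {A B C D : Obj} (p : PPath Hom A B) (q : PPath Hom B C)
    (r : PPath Hom C D), (p.append q).append r = p.append (q.append r)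
  | _, _, _, _, .nil _, _, _ => rfl
  | _, _, _, _, .cons f p, q, r => by rw [append, append, append, append_assoc p]

theorem map_append {Obj' : Type u'} {Hom' : Obj' → Obj' → Type v'} (φ : Obj → Obj')
    (F : ∀ {A B : Obj}, Hom A B → Hom' (φ A) (φ B)) :
    ∀ {A B C : Obj} (p : PPath Hom A B) (q : PPath Hom B C),
      (p.append q).map φ F = (p.map φ F).append (q.map φ F)
  | _, _, _, .nil _, _ => rfl
  | _, _, _, .cons f p, q => by rw [append, map, map, append, map_append φ F p]

theorem castHom_single {A A' B B' : Obj} (h₁ : A = A') (h₂ : B = B') (f : Hom A B) :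
    castHom (Hom := PPath Hom) h₁ h₂ (single f) = single (castHom h₁ h₂ f) := by
  subst h₁ h₂; rfl

theorem nil_heq_nil {A A' : Obj} (h : A = A') :
    HEq (PPath.nil (Hom := Hom) A) (PPath.nil (Hom := Hom) A') := by
  subst h; rfl

theorem cons_heq_cons {A B C A' B' C' : Obj} (hA : A = A') (hB : B = B') (hC : C = C')
    {f : Hom A B} {p : PPath Hom B C} {f' : Hom A' B'} {p' : PPath Hom B' C'}
    (hf : HEq f f') (hp : HEq p p') : HEq (PPath.cons f p) (PPath.cons f' p') := by
  subst hA hB hC; rw [eq_of_heq hf, eq_of_heq hp]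

theorem append_heq_append {A B C A' B' C' : Obj} (hA : A = A') (hB : B = B') (hC : C = C')
    {p : PPath Hom A B} {q : PPath Hom B C} {p' : PPath Hom A' B'} {q' : PPath Hom B' C'}
    (hp : HEq p p') (hq : HEq q q') : HEq (p.append q) (p'.append q') := by
  subst hA hB hC; rw [eq_of_heq hp, eq_of_heq hq]

end PPath

theorem heq_of_castHom_eq {Obj : Type u} {Hom : Obj → Obj → Type v} {A A' B B' : Obj}
    {h₁ : A = A'} {h₂ : B = B'} {f : Hom A B} {g : Hom A' B'}
    (h : castHom h₁ h₂ f = g) : HEq f g := by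
  subst h₁ h₂; exact heq_of_eq h

namespace Paracategory

variable {C : Paracategory.{u, v}}

theorem comp_cons_pid {X Y : C.Obj} (q : PPath C.Hom X Y) :
    C.comp (.cons (C.pid X) q) = C.comp q := by
  simpa [PPath.append] using C.comp_splice (.nil X) (.nil X) q (C.pid X) (C.comp_nil X)

theorem comp_pid_single {X Y : C.Obj} (f : C.Hom X Y) :
    C.comp (.cons (C.pid X) (PPath.single f)) = some f := by
  rw [comp_cons_pid, C.comp_single]

theorem comp_single_pid {X Y : C.Obj} (f : C.Hom X Y) :
    C.comp (.cons f (PPath.single (C.pid Y))) = some f := by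
  have h := C.comp_splice (PPath.single f) (.nil Y) (.nil Y) (C.pid Y) (C.comp_nil Y)
  simp only [PPath.append, PPath.single] at h
  rw [PPath.single, h, ← PPath.single, C.comp_single]

def pidPath (E : C.Obj) : ∀ {X Y : C.Obj}, PPath C.Hom X Y → PPath C.Hom E E
  | _, _, .nil _ => .nil E
  | _, _, .cons _ p => .cons (C.pid E) (pidPath E p)

theorem comp_pidPath (E : C.Obj) : ∀ {X Y : C.Obj} (p : PPath C.Hom X Y),
    C.comp (pidPath E p) = some (C.pid E)
  | _, _, .nil _ => C.comp_nil E
  | _, _, .cons _ p => by rw [pidPath, comp_cons_pid, comp_pidPath E p]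

inductive SpliceRel (C : Paracategory.{u, v}) {X Y : C.Obj} :
    PPath C.Hom X Y → PPath C.Hom X Y → Prop
  | mk {X' Y' : C.Obj} (r : PPath C.Hom X X') (p : PPath C.Hom X' Y')
      (s : PPath C.Hom Y' Y) (v : C.Hom X' Y') (h : C.comp p = some v) :
      SpliceRel C (r.append (.cons v s)) (r.append (p.append s))

theorem SpliceRel.append_left {X Y Z : C.Obj} (p : PPath C.Hom X Y)
    {q q' : PPath C.Hom Y Z} (h : SpliceRel C q q') :
    SpliceRel C (p.append q) (p.append q') := by
  obtain ⟨r, p₀, s, v, hv⟩ := h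
  rw [← PPath.append_assoc, ← PPath.append_assoc]
  exact .mk _ p₀ s v hv

theorem SpliceRel.append_right {X Y Z : C.Obj} {p p' : PPath C.Hom X Y}
    (q : PPath C.Hom Y Z) (h : SpliceRel C p p') :
    SpliceRel C (p.append q) (p'.append q) := by
  obtain ⟨r, p₀, s, v, hv⟩ := h
  rw [PPath.append_assoc, PPath.append_assoc, PPath.append_assoc]
  exact .mk r p₀ (s.append q) v hv

def EnvHom (C : Paracategory.{u, v}) (X Y : C.Obj) : Type (max u v) :=
  Quot (SpliceRel C (X := X) (Y := Y))

namespace EnvHom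

def mk {X Y : C.Obj} (p : PPath C.Hom X Y) : C.EnvHom X Y := Quot.mk _ p

theorem ind {X Y : C.Obj} {motive : C.EnvHom X Y → Prop} (h : ∀ p, motive (mk p))
    (a : C.EnvHom X Y) : motive a :=
  Quot.ind h a

def eval {X Y : C.Obj} : C.EnvHom X Y → Option (C.Hom X Y) :=
  Quot.lift C.comp fun _ _ h => by
    obtain ⟨r, p, s, v, hv⟩ := h
    exact C.comp_splice r p s v hv

theorem eval_mk {X Y : C.Obj} (p : PPath C.Hom X Y) : eval (mk p) = C.comp p := rfl

theorem mk_eq_single_of_comp {X Y : C.Obj} {p : PPath C.Hom X Y} {v : C.Hom X Y}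
    (h : C.comp p = some v) : mk p = mk (PPath.single v) := by
  have := Quot.sound (SpliceRel.mk (C := C) (.nil X) p (.nil Y) v h)
  simp only [PPath.append, PPath.append_nil] at this
  exact this.symm

theorem mk_single_pid (X : C.Obj) : mk (PPath.single (C.pid X)) = mk (.nil X) :=
  (mk_eq_single_of_comp (C.comp_nil X)).symm

theorem mk_eq_mk_single_iff {X Y : C.Obj} {p : PPath C.Hom X Y} {v : C.Hom X Y} :
    mk p = mk (PPath.single v) ↔ C.comp p = some v :=
  ⟨fun h => by rw [← eval_mk, h, eval_mk, C.comp_single], mk_eq_single_of_comp⟩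

theorem mk_single_injective {X Y : C.Obj} :
    Function.Injective fun f : C.Hom X Y => mk (PPath.single f) := fun f _ h =>
  Option.some.inj ((C.comp_single f).symm.trans (mk_eq_mk_single_iff.mp h))

def comp {X Y Z : C.Obj} : C.EnvHom X Y → C.EnvHom Y Z → C.EnvHom X Z :=
  Quot.map₂ PPath.append (fun p _ _ h => h.append_left p) (fun _ _ q h => h.append_right q)

@[simp] theorem mk_comp_mk {X Y Z : C.Obj} (p : PPath C.Hom X Y) (q : PPath C.Hom Y Z) :
    (mk p).comp (mk q) = mk (p.append q) := rfl

theorem mk_cons {X Y Z : C.Obj} (f : C.Hom X Y) (p : PPath C.Hom Y Z) :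
    mk (.cons f p) = (mk (PPath.single f)).comp (mk p) := rfl

theorem comp_assoc {X Y Z W : C.Obj} (a : C.EnvHom X Y) (b : C.EnvHom Y Z)
    (c : C.EnvHom Z W) : (a.comp b).comp c = a.comp (b.comp c) := by
  induction a using ind
  induction b using ind
  induction c using ind
  exact congrArg mk (PPath.append_assoc _ _ _)

@[simp] theorem nil_comp {X Y : C.Obj} (a : C.EnvHom X Y) : (mk (.nil X)).comp a = a := by
  induction a using ind
  rfl

@[simp] theorem comp_nil {X Y : C.Obj} (a : C.EnvHom X Y) : a.comp (mk (.nil Y)) = a := by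
  induction a using ind
  exact congrArg mk (PPath.append_nil _)

def flatten : ∀ {X Y : C.Obj}, PPath C.EnvHom X Y → C.EnvHom X Y
  | _, _, .nil X => mk (.nil X)
  | _, _, .cons a p => a.comp (flatten p)

@[simp] theorem flatten_cons {X Y Z : C.Obj} (a : C.EnvHom X Y) (p : PPath C.EnvHom Y Z) :
    flatten (.cons a p) = a.comp (flatten p) := rfl

@[simp] theorem flatten_single {X Y : C.Obj} (a : C.EnvHom X Y) :
    flatten (PPath.single a) = a :=
  comp_nil a

theorem flatten_pair {X Y Z : C.Obj} (a : C.EnvHom X Y) (b : C.EnvHom Y Z) :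
    flatten (.cons a (PPath.single b)) = a.comp b := by
  rw [flatten_cons, flatten_single]

theorem flatten_append {X Y Z : C.Obj} (p : PPath C.EnvHom X Y) (q : PPath C.EnvHom Y Z) :
    flatten (p.append q) = (flatten p).comp (flatten q) := by
  induction p with
  | nil => exact (nil_comp _).symm
  | cons a p ih => rw [PPath.append, flatten_cons, ih, flatten_cons, comp_assoc]

theorem flatten_map_mk_single : ∀ {X Y : C.Obj} (p : PPath C.Hom X Y),
    flatten (p.map id fun f => mk (PPath.single f)) = mk p
  | _, _, .nil _ => rfl
  | _, _, .cons f p => by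
    rw [PPath.map, flatten_cons, flatten_map_mk_single p]
    rfl

theorem castHom_mk {X X' Y Y' : C.Obj} (h₁ : X = X') (h₂ : Y = Y') (p : PPath C.Hom X Y) :
    castHom (Hom := C.EnvHom) h₁ h₂ (mk p) = mk (castHom h₁ h₂ p) := by
  subst h₁ h₂; rfl

theorem castHom_mk_single {X X' Y Y' : C.Obj} (h₁ : X = X') (h₂ : Y = Y')
    (f : C.Hom X Y) :
    castHom (Hom := C.EnvHom) h₁ h₂ (mk (PPath.single f)) =
      mk (PPath.single (castHom h₁ h₂ f)) := by
  rw [castHom_mk, PPath.castHom_single]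

theorem castHom_mk_of_heq {X X' Y Y' : C.Obj} (h₁ : X = X') (h₂ : Y = Y')
    {p : PPath C.Hom X Y} {p' : PPath C.Hom X' Y'} (h : HEq p p') :
    castHom (Hom := C.EnvHom) h₁ h₂ (mk p) = mk p' := by
  subst h₁ h₂; exact congrArg mk (eq_of_heq h)

end EnvHom

def envelope (C : Paracategory.{u, v}) : Paracategory.{u, max u v} where
  Obj := C.Obj
  Hom := C.EnvHom
  comp p := some (EnvHom.flatten p)
  pid X := EnvHom.mk (.nil X)
  comp_nil _ := rfl
  comp_single a := congrArg some (EnvHom.flatten_single a)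
  comp_splice r p s v h := by
    cases Option.some.inj h
    simp only [EnvHom.flatten_append, EnvHom.flatten_cons]

theorem envelope_total (C : Paracategory.{u, v}) : C.envelope.total := fun _ _ _ => rfl

end Paracategory

namespace SSMParacategory

open Paracategory

variable {C : SSMParacategory.{u, v}}

theorem tHom_pid_pid (X Y : C.Obj) : C.tHom (C.pid X) (C.pid Y) = C.pid (C.tObj X Y) := by
  have h := C.tensor_comp (PathTensor.nil X Y) (C.pid X) (C.pid Y) (C.comp_nil X)
    (C.comp_nil Y)
  rw [C.comp_nil] at h
  exact (Option.some.inj h).symm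

theorem comp_whiskerRight_whiskerLeft {X Y Z W : C.Obj} (f : C.Hom X Y) (g : C.Hom Z W) :
    C.comp (.cons (C.tHom f (C.pid Z)) (PPath.single (C.tHom (C.pid Y) g))) =
      some (C.tHom f g) :=
  C.tensor_comp (.cons f (C.pid Z) (.cons (C.pid Y) g (.nil Y W))) f g
    (comp_single_pid f) (comp_pid_single g)

theorem comp_whiskerLeft_whiskerRight {X Y Z W : C.Obj} (f : C.Hom X Y) (g : C.Hom Z W) :
    C.comp (.cons (C.tHom (C.pid X) g) (PPath.single (C.tHom f (C.pid W)))) =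
      some (C.tHom f g) :=
  C.tensor_comp (.cons (C.pid X) g (.cons f (C.pid W) (.nil Y W))) f g
    (comp_pid_single f) (comp_single_pid g)

def whiskerRightPath {X Y : C.Obj} (p : PPath C.Hom X Y) (E : C.Obj) :
    PPath C.Hom (C.tObj X E) (C.tObj Y E) :=
  p.map (fun Z => C.tObj Z E) fun f => C.tHom f (C.pid E)

def whiskerLeftPath (E : C.Obj) {X Y : C.Obj} (p : PPath C.Hom X Y) :
    PPath C.Hom (C.tObj E X) (C.tObj E Y) :=
  p.map (fun Z => C.tObj E Z) fun f => C.tHom (C.pid E) f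

@[simp] theorem whiskerRightPath_nil (X E : C.Obj) :
    whiskerRightPath (.nil X) E = .nil (C.tObj X E) := rfl

@[simp] theorem whiskerRightPath_cons {X Y Z : C.Obj} (f : C.Hom X Y) (p : PPath C.Hom Y Z)
    (E : C.Obj) :
    whiskerRightPath (.cons f p) E = .cons (C.tHom f (C.pid E)) (whiskerRightPath p E) :=
  rfl

@[simp] theorem whiskerLeftPath_cons (E : C.Obj) {X Y Z : C.Obj} (f : C.Hom X Y)
    (p : PPath C.Hom Y Z) :
    whiskerLeftPath E (.cons f p) = .cons (C.tHom (C.pid E) f) (whiskerLeftPath E p) :=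
  rfl

@[simp] theorem whiskerRightPath_append {X Y Z : C.Obj} (p : PPath C.Hom X Y)
    (q : PPath C.Hom Y Z) (E : C.Obj) :
    whiskerRightPath (p.append q) E = (whiskerRightPath p E).append (whiskerRightPath q E) :=
  PPath.map_append _ _ p q

@[simp] theorem whiskerLeftPath_append (E : C.Obj) {X Y Z : C.Obj} (p : PPath C.Hom X Y)
    (q : PPath C.Hom Y Z) :
    whiskerLeftPath E (p.append q) = (whiskerLeftPath E p).append (whiskerLeftPath E q) :=
  PPath.map_append _ _ p q

theorem pathTensor_pidPath_right (E : C.Obj) : ∀ {X Y : C.Obj} (p : PPath C.Hom X Y),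
    PathTensor C.tObj (fun _ _ _ _ f g => C.tHom f g) p (pidPath E p) (whiskerRightPath p E)
  | _, _, .nil X => .nil X E
  | _, _, .cons f p => .cons f (C.pid E) (pathTensor_pidPath_right E p)

theorem pathTensor_pidPath_left (E : C.Obj) : ∀ {X Y : C.Obj} (p : PPath C.Hom X Y),
    PathTensor C.tObj (fun _ _ _ _ f g => C.tHom f g) (pidPath E p) p (whiskerLeftPath E p)
  | _, _, .nil X => .nil E X
  | _, _, .cons f p => .cons (C.pid E) f (pathTensor_pidPath_left E p)

theorem comp_whiskerRightPath {X Y : C.Obj} {p : PPath C.Hom X Y} {v : C.Hom X Y}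
    (h : C.comp p = some v) (E : C.Obj) :
    C.comp (whiskerRightPath p E) = some (C.tHom v (C.pid E)) :=
  C.tensor_comp (pathTensor_pidPath_right E p) v (C.pid E) h (comp_pidPath E p)

theorem comp_whiskerLeftPath (E : C.Obj) {X Y : C.Obj} {p : PPath C.Hom X Y}
    {v : C.Hom X Y} (h : C.comp p = some v) :
    C.comp (whiskerLeftPath E p) = some (C.tHom (C.pid E) v) :=
  C.tensor_comp (pathTensor_pidPath_left E p) (C.pid E) v (comp_pidPath E p) h

theorem spliceRel_whiskerRightPath {X Y : C.Obj} {p p' : PPath C.Hom X Y}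
    (h : SpliceRel C.toParacategory p p') (E : C.Obj) :
    SpliceRel C.toParacategory (whiskerRightPath p E) (whiskerRightPath p' E) := by
  obtain ⟨r, p₀, s, v, hv⟩ := h
  simp only [whiskerRightPath_append, whiskerRightPath_cons]
  exact .mk _ _ _ _ (comp_whiskerRightPath hv E)

theorem spliceRel_whiskerLeftPath (E : C.Obj) {X Y : C.Obj} {p p' : PPath C.Hom X Y}
    (h : SpliceRel C.toParacategory p p') :
    SpliceRel C.toParacategory (whiskerLeftPath E p) (whiskerLeftPath E p') := by
  obtain ⟨r, p₀, s, v, hv⟩ := h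
  simp only [whiskerLeftPath_append, whiskerLeftPath_cons]
  exact .mk _ _ _ _ (comp_whiskerLeftPath E hv)

def tensorPath {X Y Z W : C.Obj} (p : PPath C.Hom X Y) (q : PPath C.Hom Z W) :
    PPath C.Hom (C.tObj X Z) (C.tObj Y W) :=
  (whiskerRightPath p Z).append (whiskerLeftPath Y q)

theorem whiskerRightPath_whiskerRightPath_heq (Z E : C.Obj) :
    ∀ {X Y : C.Obj} (p : PPath C.Hom X Y),
      HEq (whiskerRightPath (whiskerRightPath p Z) E) (whiskerRightPath p (C.tObj Z E))
  | _, _, .nil X => PPath.nil_heq_nil (C.tObj_assoc X Z E)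
  | _, _, .cons (B := M) f p => by
    refine PPath.cons_heq_cons (C.tObj_assoc _ Z E) (C.tObj_assoc M Z E)
      (C.tObj_assoc _ Z E) ?_ (whiskerRightPath_whiskerRightPath_heq Z E p)
    rw [← tHom_pid_pid]
    exact heq_of_castHom_eq (C.tHom_assoc f (C.pid Z) (C.pid E))

theorem whiskerRightPath_whiskerLeftPath_heq (B E : C.Obj) :
    ∀ {Z W : C.Obj} (q : PPath C.Hom Z W),
      HEq (whiskerRightPath (whiskerLeftPath B q) E) (whiskerLeftPath B (whiskerRightPath q E))
  | _, _, .nil Z => PPath.nil_heq_nil (C.tObj_assoc B Z E)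
  | _, _, .cons (B := M) g q => by
    refine PPath.cons_heq_cons (C.tObj_assoc B _ E) (C.tObj_assoc B M E)
      (C.tObj_assoc B _ E) ?_ (whiskerRightPath_whiskerLeftPath_heq B E q)
    exact heq_of_castHom_eq (C.tHom_assoc (C.pid B) g (C.pid E))

theorem whiskerLeftPath_whiskerLeftPath_heq (B D : C.Obj) :
    ∀ {E F : C.Obj} (s : PPath C.Hom E F),
      HEq (whiskerLeftPath (C.tObj B D) s) (whiskerLeftPath B (whiskerLeftPath D s))
  | _, _, .nil E => PPath.nil_heq_nil (C.tObj_assoc B D E)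
  | _, _, .cons (B := M) h s => by
    refine PPath.cons_heq_cons (C.tObj_assoc B D _) (C.tObj_assoc B D M)
      (C.tObj_assoc B D _) ?_ (whiskerLeftPath_whiskerLeftPath_heq B D s)
    rw [← tHom_pid_pid]
    exact heq_of_castHom_eq (C.tHom_assoc (C.pid B) (C.pid D) h)

theorem whiskerLeftPath_unit_heq : ∀ {X Y : C.Obj} (p : PPath C.Hom X Y),
    HEq (whiskerLeftPath C.unit p) p
  | _, _, .nil X => PPath.nil_heq_nil (C.tObj_unit_left X)
  | _, _, .cons (B := M) f p => by
    refine PPath.cons_heq_cons (C.tObj_unit_left _) (C.tObj_unit_left M)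
      (C.tObj_unit_left _) ?_ (whiskerLeftPath_unit_heq p)
    exact heq_of_castHom_eq (C.tHom_unit_left f)

theorem whiskerRightPath_unit_heq : ∀ {X Y : C.Obj} (p : PPath C.Hom X Y),
    HEq (whiskerRightPath p C.unit) p
  | _, _, .nil X => PPath.nil_heq_nil (C.tObj_unit_right X)
  | _, _, .cons (B := M) f p => by
    refine PPath.cons_heq_cons (C.tObj_unit_right _) (C.tObj_unit_right M)
      (C.tObj_unit_right _) ?_ (whiskerRightPath_unit_heq p)
    exact heq_of_castHom_eq (C.tHom_unit_right f)

end SSMParacategory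

namespace Paracategory.EnvHom

open SSMParacategory

variable {C : SSMParacategory.{u, v}}

def tensor {X Y Z W : C.Obj} :
    C.EnvHom X Y → C.EnvHom Z W → C.EnvHom (C.tObj X Z) (C.tObj Y W) :=
  Quot.map₂ tensorPath
    (fun _ _ _ h => (spliceRel_whiskerLeftPath _ h).append_left _)
    (fun _ _ _ h => (spliceRel_whiskerRightPath h _).append_right _)

theorem mk_tensor_nil {X Y : C.Obj} (p : PPath C.Hom X Y) (E : C.Obj) :
    (mk p).tensor (mk (.nil E)) = mk (whiskerRightPath p E) :=
  congrArg mk (PPath.append_nil _)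

theorem mk_single_tensor_nil {X Y : C.Obj} (f : C.Hom X Y) (E : C.Obj) :
    (mk (PPath.single f)).tensor (mk (.nil E)) = mk (PPath.single (C.tHom f (C.pid E))) :=
  rfl

theorem mk_nil_tensor_single (E : C.Obj) {X Y : C.Obj} (f : C.Hom X Y) :
    (mk (.nil E)).tensor (mk (PPath.single f)) = mk (PPath.single (C.tHom (C.pid E) f)) :=
  rfl

theorem mk_whiskerLeftPath_append_single {Z W : C.Obj} :
    ∀ (q : PPath C.Hom Z W) {X Y : C.Obj} (f : C.Hom X Y),
      mk ((whiskerLeftPath X q).append (PPath.single (C.tHom f (C.pid W)))) =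
        mk (.cons (C.tHom f (C.pid Z)) (whiskerLeftPath Y q))
  | .nil _, _, _, _ => rfl
  | .cons g q, X, Y, f => by
    have interchange : mk (.cons (C.tHom (C.pid X) g) (PPath.single (C.tHom f (C.pid _)))) =
        mk (.cons (C.tHom f (C.pid _)) (PPath.single (C.tHom (C.pid Y) g))) := by
      rw [mk_eq_single_of_comp (comp_whiskerLeft_whiskerRight f g),
        mk_eq_single_of_comp (comp_whiskerRight_whiskerLeft f g)]
    calc _ = (mk (PPath.single (C.tHom (C.pid X) g))).comp
          (mk (.cons (C.tHom f (C.pid _)) (whiskerLeftPath Y q))) := by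
          rw [← mk_whiskerLeftPath_append_single q f]; rfl
      _ = (mk (.cons (C.tHom (C.pid X) g) (PPath.single (C.tHom f (C.pid _))))).comp
          (mk (whiskerLeftPath Y q)) := rfl
      _ = _ := by rw [interchange]; rfl

theorem mk_whiskerLeftPath_append_whiskerRightPath {X Y Z W : C.Obj} :
    ∀ (p : PPath C.Hom X Y) (q : PPath C.Hom Z W),
      mk ((whiskerLeftPath X q).append (whiskerRightPath p W)) =
        mk ((whiskerRightPath p Z).append (whiskerLeftPath Y q))
  | .nil _, q => by rw [whiskerRightPath_nil, PPath.append_nil]; rfl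
  | .cons f p, q => by
    calc _ = (mk ((whiskerLeftPath _ q).append (PPath.single (C.tHom f (C.pid _))))).comp
          (mk (whiskerRightPath p _)) := by
          rw [mk_comp_mk, PPath.append_assoc]; rfl
      _ = (mk (PPath.single (C.tHom f (C.pid _)))).comp
          (mk ((whiskerLeftPath _ q).append (whiskerRightPath p _))) := by
          rw [mk_whiskerLeftPath_append_single, mk_cons, comp_assoc, mk_comp_mk]
      _ = _ := by rw [mk_whiskerLeftPath_append_whiskerRightPath p q]; rfl

theorem tensor_comp_tensor {X₀ X₁ X₂ Y₀ Y₁ Y₂ : C.Obj} (a : C.EnvHom X₀ X₁)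
    (c : C.EnvHom X₁ X₂) (b : C.EnvHom Y₀ Y₁) (d : C.EnvHom Y₁ Y₂) :
    (a.tensor b).comp (c.tensor d) = (a.comp c).tensor (b.comp d) := by
  induction a using ind with | _ pa =>
  induction c using ind with | _ pc =>
  induction b using ind with | _ pb =>
  induction d using ind with | _ pd =>
  change mk ((tensorPath pa pb).append (tensorPath pc pd)) =
    mk (tensorPath (pa.append pc) (pb.append pd))
  have key := congrArg (fun z => ((mk (whiskerRightPath pa Y₀)).comp z).comp
    (mk (whiskerLeftPath X₂ pd))) (mk_whiskerLeftPath_append_whiskerRightPath pc pb)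
  simpa [tensorPath, PPath.append_assoc] using key

theorem flatten_of_pathTensor {A B Z W : C.Obj} {p : PPath C.EnvHom A B}
    {q : PPath C.EnvHom Z W} {r : PPath C.EnvHom (C.tObj A Z) (C.tObj B W)}
    (h : PathTensor C.tObj (fun _ _ _ _ a b => tensor a b) p q r) :
    flatten r = (flatten p).tensor (flatten q) := by
  induction h with
  | nil => rfl
  | cons a b _ ih => rw [flatten_cons, flatten_cons, flatten_cons, ih, tensor_comp_tensor]

theorem tensor_assoc {A B Z W E F : C.Obj} (f : C.EnvHom A B) (g : C.EnvHom Z W)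
    (h : C.EnvHom E F) :
    castHom (Hom := C.EnvHom) (C.tObj_assoc A Z E) (C.tObj_assoc B W F)
      ((f.tensor g).tensor h) = f.tensor (g.tensor h) := by
  induction f using ind with | _ p =>
  induction g using ind with | _ q =>
  induction h using ind with | _ s =>
  refine castHom_mk_of_heq _ _ ?_
  simp only [tensorPath, whiskerRightPath_append, whiskerLeftPath_append, PPath.append_assoc]
  exact PPath.append_heq_append (C.tObj_assoc A Z E) (C.tObj_assoc B Z E)
    (C.tObj_assoc B W F) (whiskerRightPath_whiskerRightPath_heq Z E p)
    (PPath.append_heq_append (C.tObj_assoc B Z E) (C.tObj_assoc B W E)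
      (C.tObj_assoc B W F) (whiskerRightPath_whiskerLeftPath_heq B E q)
      (whiskerLeftPath_whiskerLeftPath_heq B W s))

theorem unit_tensor {A B : C.Obj} (f : C.EnvHom A B) :
    castHom (Hom := C.EnvHom) (C.tObj_unit_left A) (C.tObj_unit_left B)
      ((mk (.nil C.unit)).tensor f) = f := by
  induction f using ind with | _ p =>
  exact castHom_mk_of_heq _ _ (whiskerLeftPath_unit_heq p)

theorem tensor_unit {A B : C.Obj} (f : C.EnvHom A B) :
    castHom (Hom := C.EnvHom) (C.tObj_unit_right A) (C.tObj_unit_right B)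
      (f.tensor (mk (.nil C.unit))) = f := by
  induction f using ind with | _ p =>
  rw [mk_tensor_nil]
  exact castHom_mk_of_heq _ _ (whiskerRightPath_unit_heq p)

theorem mk_whiskerRightPath_append_braid : ∀ {X X' : C.Obj} (p : PPath C.Hom X X')
    (B : C.Obj), mk ((whiskerRightPath p B).append (PPath.single (C.braid X' B))) =
      mk (.cons (C.braid X B) (whiskerLeftPath B p))
  | _, _, .nil _, _ => rfl
  | _, _, .cons (B := M) f p, B => by
    obtain ⟨w, hw₁, hw₂⟩ := C.braid_natural_left (B := B) f
    calc _ = (mk (.cons (C.tHom f (C.pid B)) (PPath.single (C.braid M B)))).comp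
          (mk (whiskerLeftPath B p)) := by
          rw [whiskerRightPath_cons, PPath.append, mk_cons,
            mk_whiskerRightPath_append_braid p B, mk_cons, ← comp_assoc, mk_comp_mk]; rfl
      _ = _ := by rw [mk_eq_single_of_comp hw₁, ← mk_eq_single_of_comp hw₂]; rfl

theorem mk_whiskerLeftPath_append_braid : ∀ {X X' : C.Obj} (p : PPath C.Hom X X')
    (A : C.Obj), mk ((whiskerLeftPath A p).append (PPath.single (C.braid A X'))) =
      mk (.cons (C.braid A X) (whiskerRightPath p A))
  | _, _, .nil _, _ => rfl
  | _, _, .cons (B := M) f p, A => by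
    obtain ⟨w, hw₁, hw₂⟩ := C.braid_natural_right (A := A) f
    calc _ = (mk (.cons (C.tHom (C.pid A) f) (PPath.single (C.braid A M)))).comp
          (mk (whiskerRightPath p A)) := by
          rw [whiskerLeftPath_cons, PPath.append, mk_cons,
            mk_whiskerLeftPath_append_braid p A, mk_cons, ← comp_assoc, mk_comp_mk]; rfl
      _ = _ := by rw [mk_eq_single_of_comp hw₁, ← mk_eq_single_of_comp hw₂]; rfl

theorem tensor_nil_comp_braid {A A' : C.Obj} (f : C.EnvHom A A') (B : C.Obj) :
    (f.tensor (mk (.nil B))).comp (mk (PPath.single (C.braid A' B))) =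
      (mk (PPath.single (C.braid A B))).comp ((mk (.nil B)).tensor f) := by
  induction f using ind with | _ p =>
  rw [mk_tensor_nil, mk_comp_mk, mk_whiskerRightPath_append_braid]
  rfl

theorem nil_tensor_comp_braid (A : C.Obj) {B B' : C.Obj} (g : C.EnvHom B B') :
    ((mk (.nil A)).tensor g).comp (mk (PPath.single (C.braid A B'))) =
      (mk (PPath.single (C.braid A B))).comp (g.tensor (mk (.nil A))) := by
  induction g using ind with | _ p =>
  rw [mk_tensor_nil, mk_comp_mk]
  exact mk_whiskerLeftPath_append_braid p A

theorem braid_hexagon (A B Z : C.Obj) :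
    ((mk (PPath.single (C.braid A B))).tensor (mk (.nil Z))).comp
        (castHom (Hom := C.EnvHom) (C.tObj_assoc B A Z).symm (C.tObj_assoc B Z A).symm
          ((mk (.nil B)).tensor (mk (PPath.single (C.braid A Z))))) =
      castHom (Hom := C.EnvHom) (C.tObj_assoc A B Z).symm rfl
        (mk (PPath.single (C.braid A (C.tObj B Z)))) := by
  rw [mk_single_tensor_nil, mk_nil_tensor_single, castHom_mk_single, castHom_mk_single]
  exact mk_eq_single_of_comp (C.braid_hexagon A B Z)

end Paracategory.EnvHom

namespace SSMParacategory

open Paracategory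

def envelope (C : SSMParacategory.{u, v}) : SSMParacategory.{u, max u v} where
  toParacategory := C.toParacategory.envelope
  tObj := C.tObj
  unit := C.unit
  tHom := EnvHom.tensor
  tObj_assoc := C.tObj_assoc
  tObj_unit_left := C.tObj_unit_left
  tObj_unit_right := C.tObj_unit_right
  tHom_assoc := EnvHom.tensor_assoc
  tHom_unit_left := EnvHom.unit_tensor
  tHom_unit_right := EnvHom.tensor_unit
  tensor_comp h _ _ hp hq := by
    cases Option.some.inj hp
    cases Option.some.inj hq
    exact congrArg some (EnvHom.flatten_of_pathTensor h)
  braid A B := EnvHom.mk (PPath.single (C.braid A B))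
  braid_total_left _ := rfl
  braid_total_right _ := rfl
  braid_natural_left {_ _ B} f := ⟨_, rfl, congrArg some <| (EnvHom.flatten_pair _ _).trans <|
    (EnvHom.tensor_nil_comp_braid f B).symm.trans (EnvHom.flatten_pair _ _).symm⟩
  braid_natural_right {A _ _} g := ⟨_, rfl, congrArg some <| (EnvHom.flatten_pair _ _).trans <|
    (EnvHom.nil_tensor_comp_braid A g).symm.trans (EnvHom.flatten_pair _ _).symm⟩
  braid_symmetry A B := congrArg some <| (EnvHom.flatten_pair _ _).trans <|
    (EnvHom.mk_eq_single_of_comp (C.braid_symmetry A B)).trans (EnvHom.mk_single_pid _)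
  braid_hexagon A B Z := congrArg some <|
    (EnvHom.flatten_pair _ _).trans (EnvHom.braid_hexagon A B Z)

def toEnvelope (C : SSMParacategory.{u, v}) : SSMFunctor C C.envelope where
  obj := id
  map f := EnvHom.mk (PPath.single f)
  map_comp p _ h := congrArg some
    ((EnvHom.flatten_map_mk_single p).trans (EnvHom.mk_eq_single_of_comp h))
  obj_tensor _ _ := rfl
  obj_unit := rfl
  map_tensor f g := (EnvHom.mk_eq_single_of_comp (comp_whiskerRight_whiskerLeft f g)).symm
  map_braid _ _ := rfl

theorem toEnvelope_faithful (C : SSMParacategory.{u, v}) : C.toEnvelope.Faithful :=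
  fun _ _ _ _ h => EnvHom.mk_single_injective h

end SSMParacategory

namespace Paracategory.EnvHom

variable {C : CompactClosedPara.{u, v}}

theorem triangle_left (A : C.Obj) :
    (castHom (Hom := C.EnvHom) (C.tObj_unit_right A) rfl
        ((mk (.nil A)).tensor (mk (PPath.single (C.eta A))))).comp
      (castHom (Hom := C.EnvHom) (C.tObj_assoc A (C.dual A) A) (C.tObj_unit_left A)
        ((mk (PPath.single (C.eps A))).tensor (mk (.nil A)))) =
      mk (.nil A) := by
  rw [mk_nil_tensor_single, mk_single_tensor_nil, castHom_mk_single,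
    castHom_mk_single]
  exact (mk_eq_single_of_comp (C.triangle_left A)).trans (mk_single_pid A)

theorem triangle_right (A : C.Obj) :
    (castHom (Hom := C.EnvHom) (C.tObj_unit_left (C.dual A))
        (C.tObj_assoc (C.dual A) A (C.dual A))
        ((mk (PPath.single (C.eta A))).tensor (mk (.nil (C.dual A))))).comp
      (castHom (Hom := C.EnvHom) rfl (C.tObj_unit_right (C.dual A))
        ((mk (.nil (C.dual A))).tensor (mk (PPath.single (C.eps A))))) =
      mk (.nil (C.dual A)) := by
  rw [mk_nil_tensor_single, mk_single_tensor_nil, castHom_mk_single,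
    castHom_mk_single]
  exact (mk_eq_single_of_comp (C.triangle_right A)).trans (mk_single_pid _)

end Paracategory.EnvHom

namespace CompactClosedPara

open Paracategory

variable {C : CompactClosedPara.{u, v}}

def tracePath {A B U : C.Obj} (f : C.Hom (C.tObj A U) (C.tObj B U)) : PPath C.Hom A B :=
  .cons (castHom (C.tObj_unit_right A) rfl (C.tHom (C.pid A) (C.eta U)))
    (.cons (C.tHom (C.pid A) (C.braid (C.dual U) U))
      (.cons (castHom (C.tObj_assoc A U (C.dual U)) (C.tObj_assoc B U (C.dual U))
          (C.tHom f (C.pid (C.dual U))))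
        (PPath.single (castHom rfl (C.tObj_unit_right B) (C.tHom (C.pid B) (C.eps U))))))

def envelope (C : CompactClosedPara.{u, v}) : CompactClosedPara.{u, max u v} where
  toSSMParacategory := C.toSSMParacategory.envelope
  dual := C.dual
  eta A := EnvHom.mk (PPath.single (C.eta A))
  eps A := EnvHom.mk (PPath.single (C.eps A))
  total_eta_left _ := rfl
  total_eps_left _ := rfl
  total_eta_right _ := rfl
  total_eps_right _ := rfl
  triangle_left A := congrArg some <|
    (EnvHom.flatten_pair _ _).trans (EnvHom.triangle_left (C := C) A)
  triangle_right A := congrArg some <|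
    (EnvHom.flatten_pair _ _).trans (EnvHom.triangle_right (C := C) A)

theorem envelope_ccTrace_mk_single {A B U : C.Obj} (f : C.Hom (C.tObj A U) (C.tObj B U)) :
    C.envelope.ccTrace (A := A) (B := B) (U := U) (EnvHom.mk (PPath.single f)) =
      some (EnvHom.mk (tracePath f)) := by
  change some (EnvHom.flatten
    (.cons (castHom (Hom := C.EnvHom) (C.tObj_unit_right A) rfl
        ((EnvHom.mk (.nil A)).tensor (EnvHom.mk (PPath.single (C.eta U)))))
      (.cons ((EnvHom.mk (.nil A)).tensor (EnvHom.mk (PPath.single (C.braid (C.dual U) U))))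
        (.cons (castHom (Hom := C.EnvHom) (C.tObj_assoc A U (C.dual U))
            (C.tObj_assoc B U (C.dual U))
            ((EnvHom.mk (PPath.single f)).tensor (EnvHom.mk (.nil (C.dual U)))))
          (PPath.single (castHom (Hom := C.EnvHom) rfl (C.tObj_unit_right B)
            ((EnvHom.mk (.nil B)).tensor (EnvHom.mk (PPath.single (C.eps U)))))))))) = _
  simp only [EnvHom.mk_nil_tensor_single, EnvHom.mk_single_tensor_nil,
    EnvHom.castHom_mk_single]
  rfl

theorem envelope_ccTrace_mk_single_eq_iff {A B U : C.Obj}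
    (f : C.Hom (C.tObj A U) (C.tObj B U)) (g : C.Hom A B) :
    C.envelope.ccTrace (A := A) (B := B) (U := U) (EnvHom.mk (PPath.single f)) =
        some (EnvHom.mk (PPath.single g)) ↔ C.ccTrace f = some g := by
  rw [envelope_ccTrace_mk_single]
  exact Option.some_inj.trans EnvHom.mk_eq_mk_single_iff

end CompactClosedPara

/-- Every compact closed paracategory admits a faithful strict symmetric monoidal
functor of paracategories into a compact closed total category, which preserves and
reflects the trace: `Tr^U(f)` is defined and equals `g` iff the canonical trace of
`F f` in `D` equals `F g`. -/
theorem compactClosedPara_embeds (C : CompactClosedPara.{u, v}) :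
    ∃ (D : CompactClosedPara.{u, max u v})
      (F : SSMFunctor C.toSSMParacategory D.toSSMParacategory),
      D.toParacategory.total ∧ F.Faithful ∧
      ∀ {A B U : C.Obj} (f : C.Hom (C.tObj A U) (C.tObj B U)) (g : C.Hom A B),
        C.ccTrace f = some g ↔
          D.ccTrace (castHom (F.obj_tensor A U) (F.obj_tensor B U) (F.map f)) =
            some (F.map g) :=
  ⟨C.envelope, C.toSSMParacategory.toEnvelope, C.toParacategory.envelope_total,
    C.toSSMParacategory.toEnvelope_faithful,
    fun f g => (C.envelope_ccTrace_mk_single_eq_iff f g).symm⟩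
end

section
/- Free symmetric monoidal completion of a paracategory: for every strict symmetric monoidal paracategory C there exist a strict symmetric monoidal (total) category E and a strict symmetric monoidal functor of paracategories F : C → E with the following universal property: for every strict symmetric monoidal category D and every strict symmetric monoidal functor of paracategories G : C → D, there exists a unique strict symmetric monoidal (ordinary) functor L : E → D such that L ∘ F = G. -/
universe w w' u v u' v'

namespace FreeCompletion

open PPath

section PathLemmas

variable {Obj : Type u} {Hom : Obj → Obj → Type v}

theorem append_nil : ∀ {A B : Obj} (p : PPath Hom A B), p.append (.nil B) = p
  | _, _, .nil A => rfl
  | _, _, .cons f p => by simp [PPath.append, append_nil p]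

theorem append_assoc : ∀ {A B C D : Obj} (p : PPath Hom A B) (q : PPath Hom B C)
    (r : PPath Hom C D), (p.append q).append r = p.append (q.append r)
  | _, _, _, _, .nil _, q, r => rfl
  | _, _, _, _, .cons f p, q, r => by simp [PPath.append, append_assoc p q r]

variable {Obj' : Type u'} {Hom' : Obj' → Obj' → Type v'} {φ : Obj → Obj'}
  {F : ∀ {A B : Obj}, Hom A B → Hom' (φ A) (φ B)}

theorem map_append : ∀ {A B C : Obj} (p : PPath Hom A B) (q : PPath Hom B C),
    (p.append q).map φ (fun f => F f) = (p.map φ (fun f => F f)).append (q.map φ (fun f => F f))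
  | _, _, _, .nil _, q => rfl
  | _, _, _, .cons f p, q => by simp [PPath.append, PPath.map, map_append p q]

theorem map_map {Obj'' : Type w} {Hom'' : Obj'' → Obj'' → Type w'} {ψ : Obj' → Obj''}
    {G : ∀ {A B : Obj'}, Hom' A B → Hom'' (ψ A) (ψ B)} :
    ∀ {A B : Obj} (p : PPath Hom A B),
      (p.map φ (fun f => F f)).map ψ (fun f => G f) =
        p.map (fun X => ψ (φ X)) (fun f => G (F f))
  | _, _, .nil _ => rfl
  | _, _, .cons f p => by simp [PPath.map, map_map p]

theorem map_id : ∀ {A B : Obj} (p : PPath Hom A B),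
    p.map (fun X => X) (fun f => f) = p
  | _, _, .nil _ => rfl
  | _, _, .cons f p => by simp [PPath.map, map_id p]

/-- Length of a path. -/
def plen : ∀ {A B : Obj}, PPath Hom A B → Nat
  | _, _, .nil _ => 0
  | _, _, .cons _ p => plen p + 1

end PathLemmas

section CastLemmas

variable {Obj : Type u} {Hom : Obj → Obj → Type v}

/-- Transport of a path along equalities of its endpoints. -/
def castPath {A A' B B' : Obj} (h₁ : A = A') (h₂ : B = B') (p : PPath Hom A B) :
    PPath Hom A' B' := h₁ ▸ h₂ ▸ p

@[simp] theorem castPath_rfl {A B : Obj} (p : PPath Hom A B) :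
    castPath rfl rfl p = p := rfl

@[simp] theorem castHom_rfl {A B : Obj} (f : Hom A B) :
    castHom rfl rfl f = f := rfl

theorem castPath_nil {A A' : Obj} (h : A = A') :
    castPath (Hom := Hom) h h (.nil A) = .nil A' := by cases h; rfl

theorem castPath_cons {A A' B B' C C' : Obj} (h₁ : A = A') (h₂ : B = B') (h₃ : C = C')
    (f : Hom A B) (p : PPath Hom B C) :
    castPath h₁ h₃ (.cons f p) = .cons (castHom h₁ h₂ f) (castPath h₂ h₃ p) := by
  cases h₁; cases h₂; cases h₃; rfl

theorem castPath_single {A A' B B' : Obj} (h₁ : A = A') (h₂ : B = B') (f : Hom A B) :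
    castPath h₁ h₂ (PPath.single f) = PPath.single (castHom h₁ h₂ f) := by
  cases h₁; cases h₂; rfl

theorem castPath_append {A A' B B' C C' : Obj} (h₁ : A = A') (h₂ : B = B') (h₃ : C = C')
    (p : PPath Hom A B) (q : PPath Hom B C) :
    castPath h₁ h₃ (p.append q) = (castPath h₁ h₂ p).append (castPath h₂ h₃ q) := by
  cases h₁; cases h₂; cases h₃; rfl

theorem castPath_map {Obj' : Type u'} {Hom' : Obj' → Obj' → Type v'} {φ ψ : Obj → Obj'}
    (e : ∀ X, φ X = ψ X)
    {F : ∀ {A B : Obj}, Hom A B → Hom' (φ A) (φ B)}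
    {G : ∀ {A B : Obj}, Hom A B → Hom' (ψ A) (ψ B)}
    (hFG : ∀ {X Y : Obj} (f : Hom X Y), castHom (e X) (e Y) (F f) = G f) :
    ∀ {A B : Obj} (p : PPath Hom A B),
      castPath (e A) (e B) (p.map φ (fun f => F f)) = p.map ψ (fun f => G f)
  | _, _, .nil A => castPath_nil (e A)
  | _, B₀, .cons (B := M) f p => by
      rw [PPath.map, castPath_cons (e _) (e M) (e B₀), hFG, castPath_map e hFG p]; rfl

end CastLemmas

section ParaLemmas

variable (P : Paracategory.{u, v})

theorem comp_castPath {A A' B B' : P.Obj} (h₁ : A = A') (h₂ : B = B')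
    (p : PPath P.Hom A B) (v : P.Hom A B) (hv : P.comp p = some v) :
    P.comp (castPath h₁ h₂ p) = some (castHom h₁ h₂ v) := by
  cases h₁; cases h₂; simpa using hv

theorem comp_snoc_pid {A B : P.Obj} (p : PPath P.Hom A B) :
    P.comp (p.append (.cons (P.pid B) (.nil B))) = P.comp p := by
  have := P.comp_splice p (.nil B) (.nil B) (P.pid B) (P.comp_nil B)
  rw [this]
  show P.comp (p.append (.nil B)) = _
  rw [append_nil]

theorem comp_cons_pid {A B : P.Obj} (p : PPath P.Hom A B) :
    P.comp (.cons (P.pid A) p) = P.comp p := by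
  have := P.comp_splice (.nil A) (.nil A) p (P.pid A) (P.comp_nil A)
  exact this

/-- Path of `n` identities. -/
def idPath (X : P.Obj) : Nat → PPath P.Hom X X
  | 0 => .nil X
  | n + 1 => .cons (P.pid X) (idPath X n)

theorem comp_idPath (X : P.Obj) : ∀ n, P.comp (idPath P X n) = some (P.pid X)
  | 0 => P.comp_nil X
  | n + 1 => by rw [idPath, comp_cons_pid]; exact comp_idPath X n

theorem comp_append_idPath {A B : P.Obj} (p : PPath P.Hom A B) (n : Nat) :
    P.comp (p.append (idPath P B n)) = P.comp p := by
  have := P.comp_splice p (idPath P B n) (.nil B) (P.pid B) (comp_idPath P B n)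
  rw [append_nil] at this
  rw [← this, comp_snoc_pid]

theorem comp_idPath_append {A B : P.Obj} (p : PPath P.Hom A B) (n : Nat) :
    P.comp ((idPath P A n).append p) = P.comp p := by
  have := P.comp_splice (.nil A) (idPath P A n) p (P.pid A) (comp_idPath P A n)
  rw [show ((PPath.nil A).append (.cons (P.pid A) p)) = (.cons (P.pid A) p) from rfl] at this
  rw [show ((PPath.nil A).append ((idPath P A n).append p)) = ((idPath P A n).append p) from rfl] at this
  rw [← this, comp_cons_pid]

end ParaLemmas

end FreeCompletion
namespace FreeCompletion

open PPath

section SSMLemmas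

variable (M : SSMParacategory.{u, v})

theorem pid_tensor_pid (A B : M.Obj) :
    M.tHom (M.pid A) (M.pid B) = M.pid (M.tObj A B) := by
  have := M.tensor_comp (PathTensor.nil A B) (M.pid A) (M.pid B)
    (M.comp_nil A) (M.comp_nil B)
  rw [M.comp_nil] at this
  exact (Option.some.injEq _ _ ▸ this).symm

/-- Right whiskering of a path by an object. -/
def wL {A B : M.Obj} (p : PPath M.Hom A B) (X : M.Obj) :
    PPath M.Hom (M.tObj A X) (M.tObj B X) :=
  p.map (fun Z => M.tObj Z X) (fun f => M.tHom f (M.pid X))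

/-- Left whiskering of a path by an object. -/
def wR {A B : M.Obj} (X : M.Obj) (p : PPath M.Hom A B) :
    PPath M.Hom (M.tObj X A) (M.tObj X B) :=
  p.map (fun Z => M.tObj X Z) (fun f => M.tHom (M.pid X) f)

@[simp] theorem wL_nil (A X : M.Obj) : wL M (.nil A) X = .nil (M.tObj A X) := rfl
@[simp] theorem wR_nil (A X : M.Obj) : wR M X (.nil A) = .nil (M.tObj X A) := rfl

@[simp] theorem wL_cons {A B C : M.Obj} (f : M.Hom A B) (p : PPath M.Hom B C) (X : M.Obj) :
    wL M (.cons f p) X = .cons (M.tHom f (M.pid X)) (wL M p X) := rfl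

@[simp] theorem wR_cons {A B C : M.Obj} (f : M.Hom A B) (p : PPath M.Hom B C) (X : M.Obj) :
    wR M X (.cons f p) = .cons (M.tHom (M.pid X) f) (wR M X p) := rfl

theorem wL_append {A B C : M.Obj} (p : PPath M.Hom A B) (q : PPath M.Hom B C) (X : M.Obj) :
    wL M (p.append q) X = (wL M p X).append (wL M q X) := map_append p q

theorem wR_append {A B C : M.Obj} (p : PPath M.Hom A B) (q : PPath M.Hom B C) (X : M.Obj) :
    wR M X (p.append q) = (wR M X p).append (wR M X q) := map_append p q

theorem pathTensor_wR {X Y B : M.Obj} :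
    ∀ (q : PPath M.Hom X Y),
      PathTensor M.tObj (fun _ _ _ _ f g => M.tHom f g)
        (idPath M.toParacategory B (plen q)) q (wR M B q)
  | .nil _ => PathTensor.nil B X
  | .cons g q => PathTensor.cons (M.pid B) g (pathTensor_wR q)

theorem pathTensor_wL {A B X : M.Obj} :
    ∀ (p : PPath M.Hom A B),
      PathTensor M.tObj (fun _ _ _ _ f g => M.tHom f g)
        p (idPath M.toParacategory X (plen p)) (wL M p X)
  | .nil _ => PathTensor.nil A X
  | .cons f p => PathTensor.cons f (M.pid X) (pathTensor_wL p)

theorem pathTensor_wLwR {A B X Y : M.Obj} :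
    ∀ (p : PPath M.Hom A B) (q : PPath M.Hom X Y),
      PathTensor M.tObj (fun _ _ _ _ f g => M.tHom f g)
        (p.append (idPath M.toParacategory B (plen q)))
        ((idPath M.toParacategory X (plen p)).append q)
        ((wL M p X).append (wR M B q))
  | .nil _, q => pathTensor_wR M q
  | .cons f p, q => PathTensor.cons f (M.pid X) (pathTensor_wLwR p q)

theorem pathTensor_wRwL {A B X Y : M.Obj} :
    ∀ (q : PPath M.Hom X Y) (p : PPath M.Hom A B),
      PathTensor M.tObj (fun _ _ _ _ f g => M.tHom f g)
        ((idPath M.toParacategory A (plen q)).append p)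
        (q.append (idPath M.toParacategory Y (plen p)))
        ((wR M A q).append (wL M p Y))
  | .nil _, p => pathTensor_wL M p
  | .cons g q, p => PathTensor.cons (M.pid A) g (pathTensor_wRwL q p)

theorem comp_wLwR {A B X Y : M.Obj} {p : PPath M.Hom A B} {q : PPath M.Hom X Y}
    {vp : M.Hom A B} {vq : M.Hom X Y}
    (hp : M.comp p = some vp) (hq : M.comp q = some vq) :
    M.comp ((wL M p X).append (wR M B q)) = some (M.tHom vp vq) := by
  refine M.tensor_comp (pathTensor_wLwR M p q) vp vq ?_ ?_
  · rw [comp_append_idPath]; exact hp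
  · rw [comp_idPath_append]; exact hq

theorem comp_wRwL {A B X Y : M.Obj} {p : PPath M.Hom A B} {q : PPath M.Hom X Y}
    {vp : M.Hom A B} {vq : M.Hom X Y}
    (hp : M.comp p = some vp) (hq : M.comp q = some vq) :
    M.comp ((wR M A q).append (wL M p Y)) = some (M.tHom vp vq) := by
  refine M.tensor_comp (pathTensor_wRwL M q p) vp vq ?_ ?_
  · rw [comp_idPath_append]; exact hp
  · rw [comp_append_idPath]; exact hq

theorem comp_wL {A B X : M.Obj} {p : PPath M.Hom A B} {vp : M.Hom A B}
    (hp : M.comp p = some vp) :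
    M.comp (wL M p X) = some (M.tHom vp (M.pid X)) := by
  have := comp_wLwR M (q := PPath.nil X) hp (M.comp_nil X)
  rwa [wR_nil, append_nil] at this

theorem comp_wR {A B X : M.Obj} {p : PPath M.Hom A B} {vp : M.Hom A B}
    (hp : M.comp p = some vp) :
    M.comp (wR M X p) = some (M.tHom (M.pid X) vp) := by
  have := comp_wLwR M (p := PPath.nil X) (M.comp_nil X) hp
  rwa [wL_nil] at this

theorem comp_interchange₁ {A B X Y : M.Obj} (f : M.Hom A B) (g : M.Hom X Y) :
    M.comp (.cons (M.tHom f (M.pid X)) (PPath.single (M.tHom (M.pid B) g))) =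
      some (M.tHom f g) :=
  comp_wLwR M (p := PPath.single f) (q := PPath.single g)
    (M.comp_single f) (M.comp_single g)

theorem comp_interchange₂ {A B X Y : M.Obj} (f : M.Hom A B) (g : M.Hom X Y) :
    M.comp (.cons (M.tHom (M.pid A) g) (PPath.single (M.tHom f (M.pid Y)))) =
      some (M.tHom f g) :=
  comp_wRwL M (p := PPath.single f) (q := PPath.single g)
    (M.comp_single f) (M.comp_single g)

end SSMLemmas

end FreeCompletion
namespace FreeCompletion

open PPath

section FreeCat

variable {C : SSMParacategory.{u, v}}

/-- One-step reduction between parallel paths: contract a composable subpath. -/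
def Step {A B : C.Obj} (p q : PPath C.Hom A B) : Prop :=
  ∃ (X Y : C.Obj) (r : PPath C.Hom A X) (m : PPath C.Hom X Y) (v : C.Hom X Y)
    (s : PPath C.Hom Y B),
    C.comp m = some v ∧ p = r.append (.cons v s) ∧ q = r.append (m.append s)

/-- Arrows of the free completion: paths modulo the composition congruence. -/
def EHom (C : SSMParacategory.{u, v}) (A B : C.Obj) : Type (max u v) :=
  Quot (@Step C A B)

variable (C)

def emk {A B : C.Obj} (p : PPath C.Hom A B) : EHom C A B := Quot.mk _ p

variable {C}

theorem emk_sound {A B X Y : C.Obj} (r : PPath C.Hom A X) (m : PPath C.Hom X Y)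
    {v : C.Hom X Y} (s : PPath C.Hom Y B) (hm : C.comp m = some v) :
    emk C (r.append (.cons v s)) = emk C (r.append (m.append s)) :=
  Quot.sound ⟨X, Y, r, m, v, s, hm, rfl, rfl⟩

theorem emk_contract {A B : C.Obj} (m : PPath C.Hom A B) {v : C.Hom A B}
    (hm : C.comp m = some v) : emk C (PPath.single v) = emk C m := by
  have := emk_sound (.nil A) m (.nil B) hm
  rwa [show (PPath.nil A).append (.cons v (.nil B)) = PPath.single v from rfl,
    show (PPath.nil A).append (m.append (.nil B)) = m.append (.nil B) from rfl,
    append_nil] at this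

theorem step_append_left {A B X : C.Obj} {p p' : PPath C.Hom A B}
    (h : Step p p') (q : PPath C.Hom B X) : emk C (p.append q) = emk C (p'.append q) := by
  obtain ⟨X', Y', r, m, v, s, hm, rfl, rfl⟩ := h
  rw [append_assoc, append_assoc, append_assoc]
  exact emk_sound r m (s.append q) hm

theorem step_append_right {A B X : C.Obj} (p : PPath C.Hom A B)
    {q q' : PPath C.Hom B X} (h : Step q q') : emk C (p.append q) = emk C (p.append q') := by
  obtain ⟨X', Y', r, m, v, s, hm, rfl, rfl⟩ := h
  rw [← append_assoc, ← append_assoc]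
  exact emk_sound (p.append r) m s hm

/-- Composition (concatenation) on the quotient. -/
def qappend {A B X : C.Obj} : EHom C A B → EHom C B X → EHom C A X :=
  Quot.lift₂ (fun p q => emk C (p.append q))
    (fun p _ _ h => step_append_right p h)
    (fun _ _ q h => step_append_left h q)

@[simp] theorem qappend_mk {A B X : C.Obj} (p : PPath C.Hom A B) (q : PPath C.Hom B X) :
    qappend (emk C p) (emk C q) = emk C (p.append q) := rfl

theorem qappend_assoc {A B X Y : C.Obj} (a : EHom C A B) (b : EHom C B X)
    (c : EHom C X Y) : qappend (qappend a b) c = qappend a (qappend b c) := by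
  induction a using Quot.ind
  induction b using Quot.ind
  induction c using Quot.ind
  show emk C _ = emk C _
  rw [append_assoc]

@[simp] theorem qappend_nil_right {A B : C.Obj} (a : EHom C A B) :
    qappend a (emk C (.nil B)) = a := by
  induction a using Quot.ind
  show emk C _ = _
  rw [append_nil]
  rfl

/-- Flattening a path of equivalence classes. -/
def flatten : ∀ {A B : C.Obj}, PPath (EHom C) A B → EHom C A B
  | _, _, .nil A => emk C (.nil A)
  | _, _, .cons f p => qappend f (flatten p)

theorem flatten_append : ∀ {A B X : C.Obj} (p : PPath (EHom C) A B)
    (q : PPath (EHom C) B X), flatten (p.append q) = qappend (flatten p) (flatten q)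
  | _, _, _, .nil _, q => by
      show flatten q = qappend (emk C (.nil _)) (flatten q)
      induction flatten q using Quot.ind
      rfl
  | _, _, _, .cons f p, q => by
      show qappend f (flatten (p.append q)) = qappend (qappend f (flatten p)) (flatten q)
      rw [flatten_append p q, qappend_assoc]

/-- Tensor of two paths: whisker then whisker. -/
def tpath {A B X Y : C.Obj} (p : PPath C.Hom A B) (q : PPath C.Hom X Y) :
    PPath C.Hom (C.tObj A X) (C.tObj B Y) :=
  (wL C p X).append (wR C B q)

end FreeCat

end FreeCompletion
namespace FreeCompletion

open PPath

section FreeCat2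

variable {C : SSMParacategory.{u, v}}

theorem emk_cons_congr {A B X : C.Obj} (f : C.Hom A B) {p q : PPath C.Hom B X}
    (h : emk C p = emk C q) : emk C (.cons f p) = emk C (.cons f q) :=
  congrArg (qappend (emk C (PPath.single f))) h

theorem qtHom_congr_left {A B X Y : C.Obj} {p p' : PPath C.Hom A B}
    (h : Step p p') (q : PPath C.Hom X Y) :
    emk C (tpath p q) = emk C (tpath p' q) := by
  obtain ⟨X', Y', r, m, v, s, hm, rfl, rfl⟩ := h
  show emk C ((wL C (r.append (.cons v s)) X).append (wR C B q)) =
    emk C ((wL C (r.append (m.append s)) X).append (wR C B q))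
  rw [wL_append, wL_append, wL_append, wL_cons]
  exact congrArg (fun z => qappend z (emk C (wR C B q)))
    (emk_sound (wL C r X) (wL C m X) (wL C s X) (comp_wL C hm))

theorem qtHom_congr_right {A B X Y : C.Obj} (p : PPath C.Hom A B)
    {q q' : PPath C.Hom X Y} (h : Step q q') :
    emk C (tpath p q) = emk C (tpath p q') := by
  obtain ⟨X', Y', r, m, v, s, hm, rfl, rfl⟩ := h
  show emk C ((wL C p X).append (wR C B (r.append (.cons v s)))) =
    emk C ((wL C p X).append (wR C B (r.append (m.append s))))
  rw [wR_append, wR_append, wR_append, wR_cons]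
  exact congrArg (qappend (emk C (wL C p X)))
    (congrArg (qappend (emk C (wR C B r)))
      (emk_sound (.nil _) (wR C B m) (wR C B s) (comp_wR C hm)))

/-- Tensor on the quotient. -/
def qtHom {A B X Y : C.Obj} : EHom C A B → EHom C X Y → EHom C (C.tObj A X) (C.tObj B Y) :=
  Quot.lift₂ (fun p q => emk C (tpath p q))
    (fun p _ _ h => qtHom_congr_right p h)
    (fun _ _ q h => qtHom_congr_left h q)

@[simp] theorem qtHom_mk {A B X Y : C.Obj} (p : PPath C.Hom A B) (q : PPath C.Hom X Y) :
    qtHom (emk C p) (emk C q) = emk C (tpath p q) := rfl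

theorem swap_mk {A B X Y Z : C.Obj} (f : C.Hom A B) (g : C.Hom X Y)
    (u : PPath C.Hom (C.tObj B Y) Z) :
    emk C (.cons (C.tHom f (C.pid X)) (.cons (C.tHom (C.pid B) g) u)) =
      emk C (.cons (C.tHom (C.pid A) g) (.cons (C.tHom f (C.pid Y)) u)) := by
  have h1 := emk_sound (C := C) (.nil (C.tObj A X))
    (.cons (C.tHom f (C.pid X)) (PPath.single (C.tHom (C.pid B) g))) u
    (comp_interchange₁ C f g)
  have h2 := emk_sound (C := C) (.nil (C.tObj A X))
    (.cons (C.tHom (C.pid A) g) (PPath.single (C.tHom f (C.pid Y)))) u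
    (comp_interchange₂ C f g)
  exact h1.symm.trans h2

theorem comm1 : ∀ {A B : C.Obj} (p : PPath C.Hom A B) {X Y Z : C.Obj} (g : C.Hom X Y)
    (t : PPath C.Hom (C.tObj B Y) Z),
    emk C ((wL C p X).append (.cons (C.tHom (C.pid B) g) t)) =
      emk C (.cons (C.tHom (C.pid A) g) ((wL C p Y).append t))
  | _, _, .nil A, _, _, _, g, t => rfl
  | A, B, .cons (B := M) f p, X, Y, Z, g, t => by
      show emk C (.cons (C.tHom f (C.pid X))
        ((wL C p X).append (.cons (C.tHom (C.pid B) g) t))) = _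
      rw [emk_cons_congr _ (comm1 p g t)]
      exact swap_mk f g _

theorem comm2 : ∀ {X Y : C.Obj} (q : PPath C.Hom X Y) {A B : C.Obj} (p : PPath C.Hom A B),
    emk C ((wL C p X).append (wR C B q)) = emk C ((wR C A q).append (wL C p Y))
  | _, _, .nil X, _, _, p => by rw [wR_nil, wR_nil, append_nil]; rfl
  | X, Y, .cons (B := M) g q, A, B, p => by
      rw [wR_cons, comm1 p g (wR C B q)]
      rw [emk_cons_congr _ (comm2 q p)]
      rfl

theorem qtHom_qappend {A B B₂ X Y Y₂ : C.Obj} (a : EHom C A B) (a' : EHom C B B₂)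
    (b : EHom C X Y) (b' : EHom C Y Y₂) :
    qtHom (qappend a a') (qappend b b') = qappend (qtHom a b) (qtHom a' b') := by
  induction a using Quot.ind with | _ p => ?_
  induction a' using Quot.ind with | _ p' => ?_
  induction b using Quot.ind with | _ q => ?_
  induction b' using Quot.ind with | _ q' => ?_
  show emk C (tpath (p.append p') (q.append q')) =
    emk C ((tpath p q).append (tpath p' q'))
  unfold tpath
  rw [wL_append, wR_append]
  have hmid : emk C ((wL C p' X).append (wR C B₂ q)) =
      emk C ((wR C B q).append (wL C p' Y)) := comm2 q p'
  have h1 : emk C ((wL C p' X).append ((wR C B₂ q).append (wR C B₂ q'))) =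
      emk C (((wR C B q).append (wL C p' Y)).append (wR C B₂ q')) := by
    rw [← append_assoc]
    exact congrArg (fun z => qappend z (emk C (wR C B₂ q'))) hmid
  calc emk C (((wL C p X).append (wL C p' X)).append ((wR C B₂ q).append (wR C B₂ q')))
      = qappend (emk C (wL C p X))
          (emk C ((wL C p' X).append ((wR C B₂ q).append (wR C B₂ q')))) := by
        show emk C _ = emk C _
        rw [append_assoc]
    _ = qappend (emk C (wL C p X))
          (emk C (((wR C B q).append (wL C p' Y)).append (wR C B₂ q'))) := by rw [h1]
    _ = emk C (((wL C p X).append (wR C B q)).append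
          ((wL C p' Y).append (wR C B₂ q'))) := by
        show emk C _ = emk C _
        rw [append_assoc, append_assoc]

theorem braidNatL : ∀ {A A' : C.Obj} (p : PPath C.Hom A A') (B : C.Obj),
    emk C ((wL C p B).append (PPath.single (C.braid A' B))) =
      emk C (.cons (C.braid A B) (wR C B p))
  | _, _, .nil A, B => rfl
  | A, A', .cons (B := M) f p, B => by
      show emk C (.cons (C.tHom f (C.pid B))
        ((wL C p B).append (PPath.single (C.braid A' B)))) = _
      rw [emk_cons_congr _ (braidNatL p B)]
      obtain ⟨w, hw1, hw2⟩ := C.braid_natural_left (B := B) f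
      have h1 := emk_sound (C := C) (.nil _)
        (.cons (C.tHom f (C.pid B)) (PPath.single (C.braid M B))) (wR C B p) hw1
      have h2 := emk_sound (C := C) (.nil _)
        (.cons (C.braid A B) (PPath.single (C.tHom (C.pid B) f))) (wR C B p) hw2
      exact h1.symm.trans h2

theorem braidNatR : ∀ {B B' : C.Obj} (p : PPath C.Hom B B') (A : C.Obj),
    emk C ((wR C A p).append (PPath.single (C.braid A B'))) =
      emk C (.cons (C.braid A B) (wL C p A))
  | _, _, .nil B, A => rfl
  | B, B', .cons (B := M) g p, A => by
      show emk C (.cons (C.tHom (C.pid A) g)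
        ((wR C A p).append (PPath.single (C.braid A B')))) = _
      rw [emk_cons_congr _ (braidNatR p A)]
      obtain ⟨w, hw1, hw2⟩ := C.braid_natural_right (A := A) g
      have h1 := emk_sound (C := C) (.nil _)
        (.cons (C.tHom (C.pid A) g) (PPath.single (C.braid A M))) (wL C p A) hw1
      have h2 := emk_sound (C := C) (.nil _)
        (.cons (C.braid A B) (PPath.single (C.tHom g (C.pid A)))) (wL C p A) hw2
      exact h1.symm.trans h2

end FreeCat2

end FreeCompletion
namespace FreeCompletion

open PPath

section FreeCat3

variable {C : SSMParacategory.{u, v}}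

theorem wL_wL {X U : C.Obj} {A B : C.Obj} (p : PPath C.Hom A B) :
    wL C (wL C p X) U = p.map (fun Z => C.tObj (C.tObj Z X) U)
      (fun f => C.tHom (C.tHom f (C.pid X)) (C.pid U)) := map_map p

theorem wL_wR {B U : C.Obj} {X Y : C.Obj} (q : PPath C.Hom X Y) :
    wL C (wR C B q) U = q.map (fun Z => C.tObj (C.tObj B Z) U)
      (fun g => C.tHom (C.tHom (C.pid B) g) (C.pid U)) := map_map q

theorem wR_wL {B U : C.Obj} {X Y : C.Obj} (q : PPath C.Hom X Y) :
    wR C B (wL C q U) = q.map (fun Z => C.tObj B (C.tObj Z U))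
      (fun g => C.tHom (C.pid B) (C.tHom g (C.pid U))) := map_map q

theorem wR_wR {B Y : C.Obj} {U V : C.Obj} (r : PPath C.Hom U V) :
    wR C B (wR C Y r) = r.map (fun Z => C.tObj B (C.tObj Y Z))
      (fun h => C.tHom (C.pid B) (C.tHom (C.pid Y) h)) := map_map r

theorem cast_emk {A A' B B' : C.Obj} (h₁ : A = A') (h₂ : B = B') (p : PPath C.Hom A B) :
    castHom (Hom := EHom C) h₁ h₂ (emk C p) = emk C (castPath h₁ h₂ p) := by
  cases h₁; cases h₂; rfl

theorem qtHom_assoc {A B X Y U V : C.Obj} (a : EHom C A B) (b : EHom C X Y)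
    (c : EHom C U V) :
    castHom (Hom := EHom C) (C.tObj_assoc A X U) (C.tObj_assoc B Y V)
        (qtHom (qtHom a b) c) = qtHom a (qtHom b c) := by
  induction a using Quot.ind with | _ p => ?_
  induction b using Quot.ind with | _ q => ?_
  induction c using Quot.ind with | _ r => ?_
  show castHom _ _ (emk C (tpath (tpath p q) r)) = emk C (tpath p (tpath q r))
  rw [cast_emk]
  refine congrArg (emk C) ?_
  have e1 : tpath (tpath p q) r =
      ((wL C (wL C p X) U).append (wL C (wR C B q) U)).append (wR C (C.tObj B Y) r) := by
    unfold tpath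
    rw [wL_append]
  rw [e1, castPath_append (C.tObj_assoc A X U) (C.tObj_assoc B Y U) (C.tObj_assoc B Y V),
    castPath_append (C.tObj_assoc A X U) (C.tObj_assoc B X U) (C.tObj_assoc B Y U)]
  have s1 : castPath (C.tObj_assoc A X U) (C.tObj_assoc B X U) (wL C (wL C p X) U) =
      wL C p (C.tObj X U) := by
    rw [wL_wL]
    exact castPath_map (fun Z => C.tObj_assoc Z X U)
      (fun {Z Z'} f => by rw [C.tHom_assoc, pid_tensor_pid]) p
  have s2 : castPath (C.tObj_assoc B X U) (C.tObj_assoc B Y U) (wL C (wR C B q) U) =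
      wR C B (wL C q U) := by
    rw [wL_wR, wR_wL]
    exact castPath_map (fun Z => C.tObj_assoc B Z U)
      (fun {Z Z'} g => by rw [C.tHom_assoc]) q
  have s3 : castPath (C.tObj_assoc B Y U) (C.tObj_assoc B Y V) (wR C (C.tObj B Y) r) =
      wR C B (wR C Y r) := by
    rw [wR_wR]
    refine castPath_map (fun Z => C.tObj_assoc B Y Z) (fun {Z Z'} h => ?_) r
    rw [← pid_tensor_pid, C.tHom_assoc]
  rw [s1, s2, s3, append_assoc, ← wR_append]
  rfl

theorem qtHom_unit_left {A B : C.Obj} (a : EHom C A B) :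
    castHom (Hom := EHom C) (C.tObj_unit_left A) (C.tObj_unit_left B)
      (qtHom (emk C (.nil C.unit)) a) = a := by
  induction a using Quot.ind with | _ q => ?_
  show castHom _ _ (emk C (wR C C.unit q)) = emk C q
  rw [cast_emk]
  refine congrArg (emk C) (Eq.trans ?_ (map_id q))
  exact castPath_map (fun Z => C.tObj_unit_left Z) (fun {Z Z'} f => C.tHom_unit_left f) q

theorem qtHom_unit_right {A B : C.Obj} (a : EHom C A B) :
    castHom (Hom := EHom C) (C.tObj_unit_right A) (C.tObj_unit_right B)
      (qtHom a (emk C (.nil C.unit))) = a := by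
  induction a using Quot.ind with | _ q => ?_
  show castHom _ _ (emk C (tpath q (.nil C.unit))) = emk C q
  rw [show tpath q (.nil C.unit) = wL C q C.unit from by unfold tpath; rw [wR_nil, append_nil]]
  rw [cast_emk]
  refine congrArg (emk C) (Eq.trans ?_ (map_id q))
  exact castPath_map (fun Z => C.tObj_unit_right Z) (fun {Z Z'} f => C.tHom_unit_right f) q

theorem flatten_tensor {A B X Y : C.Obj} {p : PPath (EHom C) A B} {q : PPath (EHom C) X Y}
    {r : PPath (EHom C) (C.tObj A X) (C.tObj B Y)}
    (ht : PathTensor C.tObj (fun _ _ _ _ f g => qtHom f g) p q r) :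
    flatten r = qtHom (flatten p) (flatten q) := by
  induction ht with
  | nil A X => rfl
  | cons f g ht ih =>
      show qappend (qtHom f g) (flatten _) = _
      rw [ih, ← qtHom_qappend]
      rfl

/-- The free symmetric monoidal completion. -/
def Efree (C : SSMParacategory.{u, v}) : SSMParacategory.{u, max u v} where
  Obj := C.Obj
  Hom := EHom C
  comp p := some (flatten p)
  pid A := emk C (.nil A)
  comp_nil _ := rfl
  comp_single f := by
    show some (qappend f (emk C (.nil _))) = some f
    rw [qappend_nil_right]
  comp_splice r p s v hv := by
    have hv' : flatten p = v := Option.some.inj hv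
    show some (flatten (r.append (.cons v s))) = some (flatten (r.append (p.append s)))
    rw [flatten_append, flatten_append, flatten_append]
    show some (qappend _ (qappend v (flatten s))) = _
    rw [hv']
  tObj := C.tObj
  unit := C.unit
  tHom f g := qtHom f g
  tObj_assoc := C.tObj_assoc
  tObj_unit_left := C.tObj_unit_left
  tObj_unit_right := C.tObj_unit_right
  tHom_assoc f g h := qtHom_assoc f g h
  tHom_unit_left f := qtHom_unit_left f
  tHom_unit_right f := qtHom_unit_right f
  tensor_comp ht vp vq hp hq := by
    cases Option.some.inj hp
    cases Option.some.inj hq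
    exact congrArg some (flatten_tensor ht)
  braid A B := emk C (PPath.single (C.braid A B))
  braid_total_left _ := rfl
  braid_total_right _ := rfl
  braid_natural_left {A A' B} f := by
    induction f using Quot.ind with | _ p => ?_
    refine ⟨emk C (.cons (C.braid A B) (wR C B p)), ?_, ?_⟩
    · show some (qappend (qtHom (emk C p) (emk C (.nil B)))
        (qappend (emk C (PPath.single (C.braid A' B))) (emk C (.nil _)))) = _
      rw [qappend_nil_right, qtHom_mk, qappend_mk]
      refine congrArg some ?_
      rw [show tpath p (PPath.nil B) = wL C p B from by unfold tpath; rw [wR_nil, append_nil]]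
      exact braidNatL p B
    · show some (qappend (emk C (PPath.single (C.braid A B)))
        (qappend (qtHom (emk C (.nil B)) (emk C p)) (emk C (.nil _)))) = _
      rw [qappend_nil_right, qtHom_mk, qappend_mk]
      rfl
  braid_natural_right {A B B'} g := by
    induction g using Quot.ind with | _ p => ?_
    refine ⟨emk C (.cons (C.braid A B) (wL C p A)), ?_, ?_⟩
    · show some (qappend (qtHom (emk C (.nil A)) (emk C p))
        (qappend (emk C (PPath.single (C.braid A B'))) (emk C (.nil _)))) = _
      rw [qappend_nil_right, qtHom_mk, qappend_mk]
      exact congrArg some (braidNatR p A)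
    · show some (qappend (emk C (PPath.single (C.braid A B)))
        (qappend (qtHom (emk C p) (emk C (.nil A))) (emk C (.nil _)))) = _
      rw [qappend_nil_right, qtHom_mk, qappend_mk]
      refine congrArg some ?_
      rw [show tpath p (PPath.nil A) = wL C p A from by unfold tpath; rw [wR_nil, append_nil]]
      rfl
  braid_symmetry A B := by
    show some (qappend (emk C (PPath.single (C.braid A B)))
      (qappend (emk C (PPath.single (C.braid B A))) (emk C (.nil _)))) = _
    rw [qappend_nil_right, qappend_mk]
    refine congrArg some ?_
    have h1 := emk_contract (C := C)
      (.cons (C.braid A B) (PPath.single (C.braid B A))) (C.braid_symmetry A B)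
    have h2 := emk_contract (C := C) (.nil (C.tObj A B)) (C.comp_nil _)
    exact h1.symm.trans h2
  braid_hexagon A B X := by
    show some (qappend (qtHom (emk C (PPath.single (C.braid A B))) (emk C (.nil X)))
      (qappend (castHom _ _ (qtHom (emk C (.nil B)) (emk C (PPath.single (C.braid A X)))))
        (emk C (.nil _)))) = some (castHom _ _ (emk C (PPath.single (C.braid A (C.tObj B X)))))
    rw [qappend_nil_right, qtHom_mk, qtHom_mk, cast_emk, cast_emk]
    rw [show tpath (PPath.single (C.braid A B)) (PPath.nil X) =
      PPath.single (C.tHom (C.braid A B) (C.pid X)) from by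
        unfold tpath; rw [wR_nil, append_nil]; rfl]
    rw [show tpath (PPath.nil B) (PPath.single (C.braid A X)) =
      PPath.single (C.tHom (C.pid B) (C.braid A X)) from rfl]
    rw [castPath_single, castPath_single, qappend_mk]
    refine congrArg some ?_
    exact (emk_contract (C := C) _ (C.braid_hexagon A B X)).symm

theorem Efree_total (C : SSMParacategory.{u, v}) : (Efree C).toParacategory.total :=
  fun _ _ _ => rfl

end FreeCat3

end FreeCompletion
namespace FreeCompletion

open PPath

section Univ

variable {C : SSMParacategory.{u, v}}

theorem flatten_singles : ∀ {A B : C.Obj} (p : PPath C.Hom A B),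
    flatten (p.map (fun A => A) (fun f => emk C (PPath.single f))) = emk C p
  | _, _, .nil A => rfl
  | _, _, .cons f p => by
      show qappend (emk C (PPath.single f))
        (flatten (p.map (fun A => A) (fun f => emk C (PPath.single f)))) = _
      rw [flatten_singles p]
      rfl

/-- The canonical functor into the free completion. -/
def Ffun (C : SSMParacategory.{u, v}) : SSMFunctor C (Efree C) where
  obj A := A
  map f := emk C (PPath.single f)
  map_comp p v hv := by
    show some (flatten (p.map (fun A => A) (fun f => emk C (PPath.single f)))) = _
    rw [flatten_singles p]
    exact congrArg some (emk_contract p hv).symm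
  obj_tensor _ _ := rfl
  obj_unit := rfl
  map_tensor f g := emk_contract _ (comp_interchange₁ C f g)
  map_braid _ _ := rfl

variable {D : SSMParacategory.{u', v'}} (hD : D.toParacategory.total) (G : SSMFunctor C D)

theorem get_congr {α : Type _} {o o' : Option α} (h : o = o') (h1 : o.isSome)
    (h2 : o'.isSome) : o.get h1 = o'.get h2 := by cases h; rfl

/-- Image of a path under `G`. -/
def Gpath {A B : C.Obj} (p : PPath C.Hom A B) : PPath D.Hom (G.obj A) (G.obj B) :=
  p.map G.obj (fun f => G.map f)

theorem lmap_sound {A B : C.Obj} (p q : PPath C.Hom A B) (h : Step p q) :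
    (D.comp (Gpath G p)).get (hD _ _ _) = (D.comp (Gpath G q)).get (hD _ _ _) := by
  obtain ⟨X, Y, r, m, v, s, hm, rfl, rfl⟩ := h
  refine get_congr ?_ _ _
  show D.comp ((r.append (.cons v s)).map G.obj (fun f => G.map f)) =
    D.comp ((r.append (m.append s)).map G.obj (fun f => G.map f))
  rw [map_append, map_append, map_append]
  exact D.comp_splice (Gpath G r) (Gpath G m) (Gpath G s) (G.map v) (G.map_comp m v hm)

/-- The induced map on the free completion. -/
def lmap {A B : C.Obj} : EHom C A B → D.Hom (G.obj A) (G.obj B) :=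
  Quot.lift (fun p => (D.comp (Gpath G p)).get (hD _ _ _)) (lmap_sound hD G)

theorem comp_Gpath {A B : C.Obj} (p : PPath C.Hom A B) :
    D.comp (Gpath G p) = some (lmap hD G (emk C p)) := (Option.some_get _).symm

theorem Gpid (X : C.Obj) : G.map (C.pid X) = D.pid (G.obj X) := by
  have h := G.map_comp (.nil X) (C.pid X) (C.comp_nil X)
  rw [show (PPath.nil X).map G.obj (fun f => G.map f) = .nil (G.obj X) from rfl,
    D.comp_nil] at h
  exact (Option.some.inj h).symm

theorem lmap_single {A B : C.Obj} (f : C.Hom A B) :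
    lmap hD G (emk C (PPath.single f)) = G.map f := by
  have h := comp_Gpath hD G (PPath.single f)
  rw [show Gpath G (PPath.single f) = PPath.single (G.map f) from rfl, D.comp_single] at h
  exact Option.some.inj h.symm

theorem Gpath_append {A B X : C.Obj} (p : PPath C.Hom A B) (q : PPath C.Hom B X) :
    Gpath G (p.append q) = (Gpath G p).append (Gpath G q) := map_append p q

theorem comp_pair {A B X : C.Obj} (p : PPath C.Hom A B) (q : PPath C.Hom B X) :
    D.comp (.cons (lmap hD G (emk C p)) (PPath.single (lmap hD G (emk C q)))) =
      some (lmap hD G (emk C (p.append q))) := by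
  have h1 := D.comp_splice (.nil _) (Gpath G p) (PPath.single (lmap hD G (emk C q)))
    (lmap hD G (emk C p)) (comp_Gpath hD G p)
  have h2 := D.comp_splice (Gpath G p) (Gpath G q) (.nil _)
    (lmap hD G (emk C q)) (comp_Gpath hD G q)
  rw [append_nil] at h2
  rw [show ((PPath.nil (G.obj A)).append (.cons (lmap hD G (emk C p))
      (PPath.single (lmap hD G (emk C q))))) = (.cons (lmap hD G (emk C p))
      (PPath.single (lmap hD G (emk C q)))) from rfl] at h1
  rw [h1]
  show D.comp ((Gpath G p).append (.cons (lmap hD G (emk C q)) (.nil _))) = _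
  rw [h2, ← Gpath_append]
  exact comp_Gpath hD G (p.append q)

theorem lmap_comp : ∀ {A B : C.Obj} (P : PPath (EHom C) A B),
    D.comp (P.map G.obj (fun a => lmap hD G a)) = some (lmap hD G (flatten P))
  | _, _, .nil A => comp_Gpath hD G (.nil A)
  | _, _, .cons a P => by
      induction a using Quot.ind with | _ p => ?_
      obtain ⟨q, hq⟩ := Quot.exists_rep (flatten P)
      have ih := lmap_comp P
      have h1 := D.comp_splice (PPath.single (lmap hD G (emk C p)))
        (P.map G.obj (fun a => lmap hD G a)) (.nil _) (lmap hD G (flatten P)) ih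
      rw [append_nil] at h1
      show D.comp (.cons (lmap hD G (emk C p)) (P.map G.obj (fun a => lmap hD G a))) = _
      rw [show ((PPath.single (lmap hD G (emk C p))).append
        (P.map G.obj (fun a => lmap hD G a))) = (.cons (lmap hD G (emk C p))
        (P.map G.obj (fun a => lmap hD G a))) from rfl] at h1
      rw [← h1]
      show D.comp (.cons (lmap hD G (emk C p))
        (PPath.single (lmap hD G (flatten P)))) = some (lmap hD G (qappend (emk C p) (flatten P)))
      rw [← hq]
      show D.comp (.cons (lmap hD G (emk C p))
        (PPath.single (lmap hD G (emk C q)))) = some (lmap hD G (emk C (p.append q)))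
      exact comp_pair hD G p q

theorem cast_Gpath_tpath {A B X Y : C.Obj} (p : PPath C.Hom A B) (q : PPath C.Hom X Y) :
    castPath (G.obj_tensor A X) (G.obj_tensor B Y) (Gpath G (tpath p q)) =
      (wL D (Gpath G p) (G.obj X)).append (wR D (G.obj B) (Gpath G q)) := by
  show castPath _ _ (((wL C p X).append (wR C B q)).map G.obj (fun f => G.map f)) = _
  rw [map_append, castPath_append (G.obj_tensor A X) (G.obj_tensor B X) (G.obj_tensor B Y)]
  have wLG : wL D (Gpath G p) (G.obj X) = p.map (fun Z => D.tObj (G.obj Z) (G.obj X))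
      (fun f => D.tHom (G.map f) (D.pid (G.obj X))) := map_map p
  have wRG : wR D (G.obj B) (Gpath G q) = q.map (fun Z => D.tObj (G.obj B) (G.obj Z))
      (fun g => D.tHom (D.pid (G.obj B)) (G.map g)) := map_map q
  have s1 : castPath (G.obj_tensor A X) (G.obj_tensor B X)
      ((wL C p X).map G.obj (fun f => G.map f)) = wL D (Gpath G p) (G.obj X) := by
    show castPath _ _ ((p.map _ _).map _ _) = _
    rw [map_map, wLG]
    exact castPath_map (fun Z => G.obj_tensor Z X)
      (fun {Z Z'} f => by rw [G.map_tensor, Gpid]) p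
  have s2 : castPath (G.obj_tensor B X) (G.obj_tensor B Y)
      ((wR C B q).map G.obj (fun f => G.map f)) = wR D (G.obj B) (Gpath G q) := by
    show castPath _ _ ((q.map _ _).map _ _) = _
    rw [map_map, wRG]
    exact castPath_map (fun Z => G.obj_tensor B Z)
      (fun {Z Z'} g => by rw [G.map_tensor, Gpid]) q
  rw [s1, s2]

theorem lmap_tensor {A B X Y : C.Obj} (a : EHom C A B) (b : EHom C X Y) :
    castHom (G.obj_tensor A X) (G.obj_tensor B Y) (lmap hD G (qtHom a b)) =
      D.tHom (lmap hD G a) (lmap hD G b) := by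
  induction a using Quot.ind with | _ p => ?_
  induction b using Quot.ind with | _ q => ?_
  have h1 := comp_castPath D.toParacategory (G.obj_tensor A X) (G.obj_tensor B Y)
    (Gpath G (tpath p q)) _ (comp_Gpath hD G (tpath p q))
  rw [cast_Gpath_tpath G p q] at h1
  have h2 := comp_wLwR D (p := Gpath G p) (q := Gpath G q)
    (comp_Gpath hD G p) (comp_Gpath hD G q)
  rw [h2] at h1
  exact (Option.some.inj h1).symm

theorem lmap_braid (A B : C.Obj) :
    castHom (G.obj_tensor A B) (G.obj_tensor B A)
      (lmap hD G (emk C (PPath.single (C.braid A B)))) = D.braid (G.obj A) (G.obj B) := by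
  rw [lmap_single hD G (C.braid A B)]
  exact G.map_braid A B

/-- The induced functor out of the free completion. -/
def Lfun : SSMFunctor (Efree C) D where
  obj := G.obj
  map a := lmap hD G a
  map_comp P v hv := by
    cases Option.some.inj hv
    exact lmap_comp hD G P
  obj_tensor := G.obj_tensor
  obj_unit := G.obj_unit
  map_tensor f g := lmap_tensor hD G f g
  map_braid A B := lmap_braid hD G A B

theorem SSMFunctor.ext' {C' : SSMParacategory.{w, w'}} {D' : SSMParacategory.{u', v'}}
    {F₁ F₂ : SSMFunctor C' D'} (h : F₁.obj = F₂.obj)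
    (h' : ∀ (A B : C'.Obj) (f : C'.Hom A B), HEq (F₁.map f) (F₂.map f)) : F₁ = F₂ := by
  obtain ⟨o₁, m₁, c₁, t₁, u₁, mt₁, mb₁⟩ := F₁
  obtain ⟨o₂, m₂, c₂, t₂, u₂, mt₂, mb₂⟩ := F₂
  cases h
  have hm : @m₁ = @m₂ := by
    funext A B f
    exact eq_of_heq (h' A B f)
  cases hm
  rfl

end Univ

end FreeCompletion
namespace FreeCompletion

open PPath

theorem unique_aux {C : SSMParacategory.{u, v}} {D : SSMParacategory.{u', v'}}
    (hD : D.toParacategory.total) (G : SSMFunctor C D)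
    (m : ∀ {A B : C.Obj}, EHom C A B → D.Hom (G.obj A) (G.obj B))
    (mcomp : ∀ {A B : C.Obj} (P : PPath (EHom C) A B) (v : EHom C A B),
      (Efree C).comp P = some v → D.comp (P.map G.obj (fun a => m a)) = some (m v))
    (hsingle : ∀ {A B : C.Obj} (f : C.Hom A B), m (emk C (PPath.single f)) = G.map f) :
    ∀ {A B : C.Obj} (p : PPath C.Hom A B), m (emk C p) = lmap hD G (emk C p)
  | _, _, .nil A => by
      have hc : D.comp (PPath.nil (G.obj A)) = some (m (emk C (.nil A))) :=
        mcomp (.nil A) _ rfl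
      rw [D.comp_nil] at hc
      have hl : D.comp (PPath.nil (G.obj A)) = some (lmap hD G (emk C (.nil A))) :=
        comp_Gpath hD G (.nil A)
      rw [D.comp_nil] at hl
      exact (Option.some.inj hc).symm.trans (Option.some.inj hl)
  | _, _, .cons (B := M) f p => by
      have ih := unique_aux hD G (fun a => m a) (fun P v hv => mcomp P v hv)
        (fun g => hsingle g) p
      have hE : (Efree C).comp (.cons (emk C (PPath.single f)) (PPath.single (emk C p))) =
          some (emk C (.cons f p)) := by
        show some (qappend (emk C (PPath.single f))
          (qappend (emk C p) (emk C (.nil _)))) = _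
        rw [qappend_nil_right]
        rfl
      have hc : D.comp (.cons (m (emk C (PPath.single f)))
          (.cons (m (emk C p)) (.nil _))) = some (m (emk C (.cons f p))) := mcomp _ _ hE
      rw [hsingle, ih] at hc
      have hl := comp_pair hD G (PPath.single f) p
      rw [lmap_single hD G f] at hl
      exact Option.some.inj (hc.symm.trans hl)

end FreeCompletion

open FreeCompletion

/-- Free symmetric monoidal completion of a paracategory: every strict symmetric
monoidal paracategory `C` admits a strict symmetric monoidal functor `F` into a
strict symmetric monoidal total category `E` such that every strict symmetric
monoidal functor `G` from `C` into a strict symmetric monoidal total category `D`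
factors uniquely through `F` via a strict symmetric monoidal (ordinary) functor
`L : E → D` with `L ∘ F = G`. -/
theorem ssmParacategory_free_completion (C : SSMParacategory.{u, v}) :
    ∃ (E : SSMParacategory.{u, max u v}) (F : SSMFunctor C E),
      E.toParacategory.total ∧
      ∀ (D : SSMParacategory.{u', v'}), D.toParacategory.total →
        ∀ G : SSMFunctor C D,
          ∃! L : SSMFunctor E D,
            (∀ A : C.Obj, L.obj (F.obj A) = G.obj A) ∧
            (∀ {A B : C.Obj} (f : C.Hom A B), HEq (L.map (F.map f)) (G.map f)) := by
  refine ⟨Efree C, Ffun C, Efree_total C, ?_⟩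
  intro D hD G
  refine ⟨Lfun hD G, ⟨fun A => rfl,
    fun {A B} f => heq_of_eq (lmap_single hD G f)⟩, ?_⟩
  rintro ⟨o, m, mcomp, motn, moun, mtn, mbr⟩ ⟨h1, h2⟩
  have ho : o = G.obj := funext fun A => h1 A
  subst ho
  refine SSMFunctor.ext' rfl ?_
  intro A B a
  induction a using Quot.ind with | _ p => ?_
  refine heq_of_eq ?_
  exact unique_aux hD G (fun {A B} a => m a) (fun P v hv => mcomp P v hv)
    (fun {A B} f => eq_of_heq (h2 f)) p
end

section
/- Let (C,⊗,I,σ) be a symmetric monoidal category, (D,⊗',I',σ',Tr) a partially traced category, and F : C → D a faithful strong symmetric monoidal functor with coherence isomorphisms m_{A,B} : FA⊗'FB → F(A⊗B). Define a family of partial functions T̂ on C by: for f : A⊗U → B⊗U, T̂^U_{A,B}(f) = g if there exists a (necessarily unique, by faithfulness) g : A → B such that Tr^{FU}_{FA,FB}(m⁻¹_{B,U}∘F(f)∘m_{A,U}) is defined and equals F(g), and T̂^U_{A,B}(f) is undefined otherwise. Then T̂ is a partial trace on C, so C is partially traced. -/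
/-!
The trace of `f` in `C` is computed in `D` on `μ ≫ F.map f ≫ δ` and pulled back along the
injective map `F.map`. Each axiom for `C` then follows from the same axiom in `D` once the
coherence isomorphisms of `F` are moved to where that axiom can absorb them: onto the outer
wires, where naturality removes them, or onto the traced wire (vanishing I and II), where
dinaturality shows that conjugating the traced wire by an isomorphism does not change the trace.
-/

open CategoryTheory MonoidalCategory

universe v u v' u'

/-- A partial trace on a symmetric monoidal category, in the sense of Haghverdi and Scott.
Partiality is modelled via `Option`: `tr f = some v` means the trace of `f` is defined
and equals `v`, while `tr f = none` means it is undefined. -/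
structure PartialTrace (C : Type u) [Category.{v} C] [MonoidalCategory C]
    [SymmetricCategory C] where
  tr : ∀ {A B U : C}, (A ⊗ U ⟶ B ⊗ U) → Option (A ⟶ B)
  naturality : ∀ {A A' B B' U : C} (f : A ⊗ U ⟶ B ⊗ U) (g : A' ⟶ A) (h : B ⟶ B')
    (v : A ⟶ B), tr f = some v → tr ((g ⊗ₘ 𝟙 U) ≫ f ≫ (h ⊗ₘ 𝟙 U)) = some (g ≫ v ≫ h)
  dinaturality : ∀ {A B U U' : C} (f : A ⊗ U ⟶ B ⊗ U') (g : U' ⟶ U),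
    tr (f ≫ (𝟙 B ⊗ₘ g)) = tr ((𝟙 A ⊗ₘ g) ≫ f)
  strength : ∀ {A B X Y U : C} (f : A ⊗ U ⟶ B ⊗ U) (g : X ⟶ Y) (v : A ⟶ B),
    tr f = some v →
      tr ((α_ X A U).hom ≫ (g ⊗ₘ f) ≫ (α_ Y B U).inv) = some (g ⊗ₘ v)
  vanishing_one : ∀ {A B : C} (f : A ⊗ 𝟙_ C ⟶ B ⊗ 𝟙_ C),
    tr f = some ((ρ_ A).inv ≫ f ≫ (ρ_ B).hom)
  vanishing_two : ∀ {A B U V : C} (f : A ⊗ (U ⊗ V) ⟶ B ⊗ (U ⊗ V))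
    (w : A ⊗ U ⟶ B ⊗ U),
    tr ((α_ A U V).hom ≫ f ≫ (α_ B U V).inv) = some w → tr w = tr f
  yanking : ∀ A : C, tr (β_ A A).hom = some (𝟙 A)

namespace PartialTrace

variable {C : Type u} [Category.{v} C] [MonoidalCategory C] [SymmetricCategory C]
  (T : PartialTrace C)

theorem tr_conj_iso {A B U U' : C} (f : A ⊗ U ⟶ B ⊗ U) (e : U ≅ U') :
    T.tr ((𝟙 A ⊗ₘ e.inv) ≫ f ≫ (𝟙 B ⊗ₘ e.hom)) = T.tr f := by
  rw [← T.dinaturality]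
  simp

end PartialTrace

namespace CategoryTheory.Functor

open LaxMonoidal OplaxMonoidal

variable {C : Type u} [Category.{v} C] [MonoidalCategory C]
  {D : Type u'} [Category.{v'} D] [MonoidalCategory D]
  (F : C ⥤ D) [F.Monoidal]

def conjMap {A B U U' : C} (f : A ⊗ U ⟶ B ⊗ U') :
    F.obj A ⊗ F.obj U ⟶ F.obj B ⊗ F.obj U' :=
  μ F A U ≫ F.map f ≫ δ F B U'

theorem conjMap_tensorHom_id_comp {A A' B B' U : C} (f : A ⊗ U ⟶ B ⊗ U) (g : A' ⟶ A)
    (h : B ⟶ B') :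
    F.conjMap ((g ⊗ₘ 𝟙 U) ≫ f ≫ (h ⊗ₘ 𝟙 U)) =
      (F.map g ⊗ₘ 𝟙 (F.obj U)) ≫ F.conjMap f ≫ (F.map h ⊗ₘ 𝟙 (F.obj U)) := by
  simp [conjMap]

theorem conjMap_comp_id_tensorHom {A B U U' : C} (f : A ⊗ U ⟶ B ⊗ U') (g : U' ⟶ U) :
    F.conjMap (f ≫ (𝟙 B ⊗ₘ g)) = F.conjMap f ≫ (𝟙 (F.obj B) ⊗ₘ F.map g) := by
  simp [conjMap]

theorem conjMap_id_tensorHom_comp {A B U U' : C} (f : A ⊗ U ⟶ B ⊗ U') (g : U' ⟶ U) :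
    F.conjMap ((𝟙 A ⊗ₘ g) ≫ f) = (𝟙 (F.obj A) ⊗ₘ F.map g) ≫ F.conjMap f := by
  simp [conjMap]

theorem conjMap_associator_tensorHom {A B X Y U : C} (f : A ⊗ U ⟶ B ⊗ U) (g : X ⟶ Y) :
    F.conjMap ((α_ X A U).hom ≫ (g ⊗ₘ f) ≫ (α_ Y B U).inv) =
      (δ F X A ⊗ₘ 𝟙 (F.obj U)) ≫
        ((α_ (F.obj X) (F.obj A) (F.obj U)).hom ≫ (F.map g ⊗ₘ F.conjMap f) ≫
          (α_ (F.obj Y) (F.obj B) (F.obj U)).inv) ≫ (μ F Y B ⊗ₘ 𝟙 (F.obj U)) := by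
  simp only [conjMap, map_comp, Monoidal.map_tensor, Monoidal.map_associator,
    Monoidal.map_associator_inv, Category.assoc, Monoidal.μ_δ_assoc]
  simp [← id_tensorHom, tensorHom_comp_tensorHom_assoc]

theorem map_conj_rightUnitor {A B : C} (f : A ⊗ 𝟙_ C ⟶ B ⊗ 𝟙_ C) :
    F.map ((ρ_ A).inv ≫ f ≫ (ρ_ B).hom) =
      (ρ_ (F.obj A)).inv ≫
        ((𝟙 (F.obj A) ⊗ₘ ε F) ≫ F.conjMap f ≫ (𝟙 (F.obj B) ⊗ₘ η F)) ≫
          (ρ_ (F.obj B)).hom := by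
  simp [conjMap]

theorem conjMap_associator_conj {A B U V : C} (f : A ⊗ (U ⊗ V) ⟶ B ⊗ (U ⊗ V)) :
    (μ F A U ⊗ₘ 𝟙 (F.obj V)) ≫ F.conjMap ((α_ A U V).hom ≫ f ≫ (α_ B U V).inv) ≫
        (δ F B U ⊗ₘ 𝟙 (F.obj V)) =
      (α_ (F.obj A) (F.obj U) (F.obj V)).hom ≫
        ((𝟙 (F.obj A) ⊗ₘ μ F U V) ≫ F.conjMap f ≫ (𝟙 (F.obj B) ⊗ₘ δ F U V)) ≫
        (α_ (F.obj B) (F.obj U) (F.obj V)).inv := by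
  simp [conjMap]

end CategoryTheory.Functor

theorem CategoryTheory.Functor.conjMap_braiding {C : Type u} [Category.{v} C]
    [MonoidalCategory C] [BraidedCategory C] {D : Type u'} [Category.{v'} D]
    [MonoidalCategory D] [BraidedCategory D] (F : C ⥤ D) [F.Braided] (A : C) :
    F.conjMap (β_ A A).hom = (β_ (F.obj A) (F.obj A)).hom := by
  simp [Functor.conjMap]

namespace PartialTrace

open Functor.LaxMonoidal Functor.OplaxMonoidal

variable {C : Type u} [Category.{v} C] [MonoidalCategory C]
  {D : Type u'} [Category.{v'} D] [MonoidalCategory D] [SymmetricCategory D]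
  (T : PartialTrace D) (F : C ⥤ D)

noncomputable def comapTr [F.Monoidal] {A B U : C} (f : A ⊗ U ⟶ B ⊗ U) : Option (A ⟶ B) :=
  (T.tr (F.conjMap f)).bind (Function.partialInv F.map)

theorem comapTr_eq_some_iff [F.Monoidal] [F.Faithful] {A B U : C} (f : A ⊗ U ⟶ B ⊗ U)
    (g : A ⟶ B) : T.comapTr F f = some g ↔ T.tr (F.conjMap f) = some (F.map g) := by
  simp only [comapTr, Option.bind_eq_some_iff, F.map_injective.isPartialInv _ _]
  exact ⟨fun ⟨_, h, hg⟩ => hg ▸ h, fun h => ⟨_, h, rfl⟩⟩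

theorem comapTr_eq_of_tr_conjMap_eq [F.Monoidal] {A B U U' : C} {f : A ⊗ U ⟶ B ⊗ U}
    {f' : A ⊗ U' ⟶ B ⊗ U'} (h : T.tr (F.conjMap f) = T.tr (F.conjMap f')) :
    T.comapTr F f = T.comapTr F f' :=
  congrArg (Option.bind · _) h

variable [SymmetricCategory C] [F.Braided] [F.Faithful]

noncomputable def comap : PartialTrace C where
  tr := T.comapTr F
  naturality f g h v hv := by
    rw [comapTr_eq_some_iff] at hv ⊢
    rw [F.conjMap_tensorHom_id_comp, F.map_comp, F.map_comp]
    exact T.naturality _ (F.map g) (F.map h) _ hv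
  dinaturality f g := T.comapTr_eq_of_tr_conjMap_eq F <| by
    rw [F.conjMap_comp_id_tensorHom, F.conjMap_id_tensorHom_comp, T.dinaturality]
  strength {A B X Y U} f g v hv := by
    rw [comapTr_eq_some_iff] at hv ⊢
    rw [F.conjMap_associator_tensorHom, T.naturality _ _ _ _ (T.strength _ (F.map g) _ hv),
      Functor.Monoidal.map_tensor]
  vanishing_one {A B} f := by
    rw [comapTr_eq_some_iff, F.map_conj_rightUnitor, ← T.vanishing_one]
    exact (T.tr_conj_iso _ (Functor.Monoidal.εIso F).symm).symm
  vanishing_two {A B U V} f w hw := by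
    rw [comapTr_eq_some_iff] at hw
    refine T.comapTr_eq_of_tr_conjMap_eq F ?_
    have h : _ = some (F.conjMap w) := T.naturality _ (μ F A U) (δ F B U) _ hw
    rw [F.conjMap_associator_conj] at h
    rw [T.vanishing_two _ _ h]
    exact T.tr_conj_iso _ (Functor.Monoidal.μIso F U V).symm
  yanking A := by
    rw [comapTr_eq_some_iff, F.conjMap_braiding, T.yanking, F.map_id]

end PartialTrace

/-- A symmetric monoidal subcategory of a partially traced category is partially traced:
if `F : C → D` is a faithful strong symmetric monoidal functor into a partially traced
category `(D, T')`, then the family `T̂` defined by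
`T̂ f = g  iff  T' (m⁻¹ ∘ F f ∘ m) = F g` (undefined otherwise) is a partial trace on `C`. -/
theorem partial_trace_of_faithful_functor
    (C : Type u) [Category.{v} C] [MonoidalCategory C] [SymmetricCategory C]
    (D : Type u') [Category.{v'} D] [MonoidalCategory D] [SymmetricCategory D]
    (T' : PartialTrace D) (F : C ⥤ D) [F.Braided] (hF : F.Faithful) :
    ∃ T : PartialTrace C, ∀ {A B U : C} (f : A ⊗ U ⟶ B ⊗ U) (g : A ⟶ B),
      T.tr f = some g ↔
        T'.tr (Functor.LaxMonoidal.μ F A U ≫ F.map f ≫ Functor.OplaxMonoidal.δ F B U) =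
          some (F.map g) :=
  ⟨T'.comap F, T'.comapTr_eq_some_iff F⟩
end

section
/- Let (C,⊗,I,σ) be a symmetric monoidal category and Tr^U_{A,B} : C(A⊗U,B⊗U) ⇀ C(A,B) a family of partial functions satisfying the naturality axiom. Then Tr satisfies the strength axiom (g⊗Tr^U_{A,B}(f) ⊑ Tr^U_{C⊗A,D⊗B}(g⊗f) for all f : A⊗U → B⊗U and g : C → D) if and only if it satisfies the superposing axiom (Tr^U_{A,B}(f)⊗g ⊑ Tr^U_{A⊗C,B⊗D}((1_B⊗σ_{U,D})∘(f⊗g)∘(1_A⊗σ_{C,U})) for all f : A⊗U → B⊗U and g : C → D). -/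
/-!
Conjugating the strength argument `α ≫ (g ⊗ f) ≫ α⁻¹` by the braidings `β ▷ U` gives the
superposing argument, and conjugating `g ⊗ v` by braidings gives `v ⊗ g`. Naturality moves a
trace along such a conjugation; by symmetry the inverse conjugation is again one by braidings,
so the same argument runs in both directions.
-/

open CategoryTheory MonoidalCategory

universe v u

namespace CategoryTheory.PartialTrace

variable {C : Type u} [Category.{v} C] [MonoidalCategory C]

abbrev strengthen {A B X Y U : C} (g : X ⟶ Y) (f : A ⊗ U ⟶ B ⊗ U) :
    (X ⊗ A) ⊗ U ⟶ (Y ⊗ B) ⊗ U :=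
  (α_ X A U).hom ≫ (g ⊗ₘ f) ≫ (α_ Y B U).inv

abbrev superpose [BraidedCategory C] {A B X Y U : C} (f : A ⊗ U ⟶ B ⊗ U) (g : X ⟶ Y) :
    (A ⊗ X) ⊗ U ⟶ (B ⊗ Y) ⊗ U :=
  (α_ A X U).hom ≫ (𝟙 A ⊗ₘ (β_ X U).hom) ≫ (α_ A U X).inv ≫ (f ⊗ₘ g) ≫
    (α_ B U Y).hom ≫ (𝟙 B ⊗ₘ (β_ U Y).hom) ≫ (α_ B Y U).inv

variable [SymmetricCategory C]

lemma braiding_tensorHom_braiding {A B X Y : C} (v : A ⟶ B) (g : X ⟶ Y) :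
    (β_ A X).hom ≫ (g ⊗ₘ v) ≫ (β_ Y B).hom = v ⊗ₘ g := by
  rw [← BraidedCategory.braiding_naturality_assoc, SymmetricCategory.symmetry, Category.comp_id]

lemma superpose_eq_braiding_conj {A B X Y U : C} (f : A ⊗ U ⟶ B ⊗ U) (g : X ⟶ Y) :
    superpose f g = (β_ A X).hom ▷ U ≫ strengthen g f ≫ (β_ Y B).hom ▷ U := by
  have hexagon_left : (β_ A X).hom ▷ U ≫ (α_ X A U).hom ≫ (β_ X (A ⊗ U)).hom
      = (α_ A X U).hom ≫ A ◁ (β_ X U).hom ≫ (α_ A U X).inv := by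
    simp only [BraidedCategory.braiding_tensor_right_hom, Iso.hom_inv_id_assoc]
    rw [← comp_whiskerRight_assoc, SymmetricCategory.symmetry, id_whiskerRight,
      Category.id_comp]
  have hexagon_right : (β_ (B ⊗ U) Y).hom ≫ (α_ Y B U).inv ≫ (β_ Y B).hom ▷ U
      = (α_ B U Y).hom ≫ B ◁ (β_ U Y).hom ≫ (α_ B Y U).inv := by
    simp only [BraidedCategory.braiding_tensor_left_hom, Category.assoc, Iso.hom_inv_id_assoc]
    rw [← comp_whiskerRight, SymmetricCategory.symmetry, id_whiskerRight, Category.comp_id]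
  simp only [strengthen, superpose, id_tensorHom]
  rw [← braiding_tensorHom_braiding g f]
  simp only [Category.assoc]
  slice_rhs 1 3 => rw [hexagon_left]
  slice_rhs 5 7 => rw [hexagon_right]

lemma strengthen_eq_braiding_conj {A B X Y U : C} (f : A ⊗ U ⟶ B ⊗ U) (g : X ⟶ Y) :
    strengthen g f = (β_ X A).hom ▷ U ≫ superpose f g ≫ (β_ B Y).hom ▷ U := by
  rw [superpose_eq_braiding_conj, Category.assoc, Category.assoc, ← comp_whiskerRight,
    SymmetricCategory.symmetry, ← comp_whiskerRight_assoc, SymmetricCategory.symmetry]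
  simp only [id_whiskerRight, Category.id_comp, Category.comp_id]

end CategoryTheory.PartialTrace

open CategoryTheory.PartialTrace

/-- In the presence of the naturality axiom, a family of partial trace functions
(modelled via `Option`) satisfies the strength axiom if and only if it satisfies the
superposing axiom. -/
theorem strength_iff_superposing
    (C : Type u) [Category.{v} C] [MonoidalCategory C] [SymmetricCategory C]
    (tr : ∀ {A B U : C}, (A ⊗ U ⟶ B ⊗ U) → Option (A ⟶ B))
    (nat : ∀ {A A' B B' U : C} (f : A ⊗ U ⟶ B ⊗ U) (g : A' ⟶ A) (h : B ⟶ B')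
      (v : A ⟶ B), tr f = some v → tr ((g ⊗ₘ 𝟙 U) ≫ f ≫ (h ⊗ₘ 𝟙 U)) = some (g ≫ v ≫ h)) :
    -- strength
    (∀ {A B X Y U : C} (f : A ⊗ U ⟶ B ⊗ U) (g : X ⟶ Y) (v : A ⟶ B),
      tr f = some v →
        tr ((α_ X A U).hom ≫ (g ⊗ₘ f) ≫ (α_ Y B U).inv) = some (g ⊗ₘ v))
    ↔
    -- superposing
    (∀ {A B X Y U : C} (f : A ⊗ U ⟶ B ⊗ U) (g : X ⟶ Y) (v : A ⟶ B),
      tr f = some v →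
        tr ((α_ A X U).hom ≫ (𝟙 A ⊗ₘ (β_ X U).hom) ≫ (α_ A U X).inv ≫ (f ⊗ₘ g) ≫
            (α_ B U Y).hom ≫ (𝟙 B ⊗ₘ (β_ U Y).hom) ≫ (α_ B Y U).inv) = some (v ⊗ₘ g)) := by
  constructor
  · intro strength A B X Y U f g v hv
    have h := nat _ (β_ A X).hom (β_ Y B).hom _ (strength f g v hv)
    rwa [tensorHom_id, tensorHom_id, ← superpose_eq_braiding_conj,
      braiding_tensorHom_braiding] at h
  · intro superposing A B X Y U f g v hv
    have h := nat _ (β_ X A).hom (β_ B Y).hom _ (superposing f g v hv)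
    rwa [tensorHom_id, tensorHom_id, ← strengthen_eq_braiding_conj,
      braiding_tensorHom_braiding] at h
end

section
/- There exists no partial trace on real vector spaces with direct sum refining both the sum trace and the Haghverdi–Scott trace. Concretely: there is no family of partial functions Tr^u_{a,b}, assigning to real (b+u)×(a+u) matrices f (viewed as maps ℝ^a⊕ℝ^u → ℝ^b⊕ℝ^u) a b×a matrix when defined, which satisfies (i) dinaturality: for all f : ℝ^a⊕ℝ^u → ℝ^b⊕ℝ^{u'} and g : ℝ^{u'} → ℝ^u, Tr^u((I_b⊕g)∘f) ≃ Tr^{u'}(f∘(I_a⊕g)); (ii) vanishing II: if Tr^v_{a+u,b+u}(f)↓ for f : ℝ^a⊕ℝ^u⊕ℝ^v → ℝ^b⊕ℝ^u⊕ℝ^v then Tr^u_{a,b}(Tr^v_{a+u,b+u}(f)) ≃ Tr^{u+v}_{a,b}(f); and (iii) Tr_Σ^u(f) ⊑ Tr^u(f) and Tr_HS^u(f) ⊑ Tr^u(f) for all f. -/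
open Filter Matrix

/-- Reassociation `Fin x ⊕ (Fin y ⊕ Fin z) ≃ Fin (x + y) ⊕ Fin z`. -/
def assocEquiv (x y z : ℕ) : (Fin x ⊕ (Fin y ⊕ Fin z)) ≃ (Fin (x + y) ⊕ Fin z) :=
  (Equiv.sumAssoc (Fin x) (Fin y) (Fin z)).symm.trans
    (Equiv.sumCongr finSumFinEquiv (Equiv.refl (Fin z)))

/-- Regrouping `Fin x ⊕ (Fin y ⊕ Fin z) ≃ Fin x ⊕ Fin (y + z)`. -/
def groupEquiv (x y z : ℕ) : (Fin x ⊕ (Fin y ⊕ Fin z)) ≃ (Fin x ⊕ Fin (y + z)) :=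
  Equiv.sumCongr (Equiv.refl (Fin x)) finSumFinEquiv

noncomputable def myF : Matrix (Fin 1 ⊕ (Fin 1 ⊕ Fin 1)) (Fin 1 ⊕ (Fin 1 ⊕ Fin 1)) ℝ :=
  Matrix.of fun i j =>
    match i, j with
    | .inl _, .inl _ => 0
    | .inl _, .inr (.inl _) => -2
    | .inl _, .inr (.inr _) => 1
    | .inr (.inl _), .inl _ => 0
    | .inr (.inl _), .inr (.inl _) => -1
    | .inr (.inl _), .inr (.inr _) => 1
    | .inr (.inr _), .inl _ => 1
    | .inr (.inr _), .inr (.inl _) => -2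
    | .inr (.inr _), .inr (.inr _) => 2

noncomputable def myA : Matrix (Fin 2 ⊕ Fin 1) (Fin 2 ⊕ Fin 1) ℝ :=
  Matrix.reindex (assocEquiv 1 1 1) (assocEquiv 1 1 1) myF

lemma myA_b11 : myA.toBlocks₁₁ = !![0, -2; 0, -1] := by
  ext i j
  fin_cases i <;> fin_cases j <;>
    simp [myA, myF, toBlocks₁₁, show (assocEquiv 1 1 1).symm (Sum.inl 0) = Sum.inl 0 from by decide,
      show (assocEquiv 1 1 1).symm (Sum.inl 1) = Sum.inr (Sum.inl 0) from by decide]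

lemma myA_b12 : myA.toBlocks₁₂ = !![1; 1] := by
  ext i j
  fin_cases i <;> fin_cases j <;>
    simp [myA, myF, toBlocks₁₂, show (assocEquiv 1 1 1).symm (Sum.inl 0) = Sum.inl 0 from by decide,
      show (assocEquiv 1 1 1).symm (Sum.inl 1) = Sum.inr (Sum.inl 0) from by decide,
      show (assocEquiv 1 1 1).symm (Sum.inr 0) = Sum.inr (Sum.inr 0) from by decide]

lemma myA_b21 : myA.toBlocks₂₁ = !![1, -2] := by
  ext i j
  fin_cases i <;> fin_cases j <;>
    simp [myA, myF, toBlocks₂₁, show (assocEquiv 1 1 1).symm (Sum.inl 0) = Sum.inl 0 from by decide,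
      show (assocEquiv 1 1 1).symm (Sum.inl 1) = Sum.inr (Sum.inl 0) from by decide,
      show (assocEquiv 1 1 1).symm (Sum.inr 0) = Sum.inr (Sum.inr 0) from by decide]

lemma myA_b22 : myA.toBlocks₂₂ = !![2] := by
  ext i j
  fin_cases i <;> fin_cases j <;>
    simp [myA, myF, toBlocks₂₂,
      show (assocEquiv 1 1 1).symm (Sum.inr 0) = Sum.inr (Sum.inr 0) from by decide]

lemma matInvNegOne : (!![(-1 : ℝ)])⁻¹ = !![(-1 : ℝ)] := by
  rw [Matrix.inv_def]
  simp [Matrix.adjugate_fin_one, Matrix.det_fin_one, Ring.inverse_eq_inv']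
  norm_num
  ext i j
  fin_cases i <;> fin_cases j <;> simp

lemma myW_eq : myA.toBlocks₁₁ + myA.toBlocks₁₂ * (1 - myA.toBlocks₂₂)⁻¹ * myA.toBlocks₂₁
    = !![(-1 : ℝ), 0; -1, 1] := by
  rw [myA_b11, myA_b12, myA_b21, myA_b22]
  have h1 : (1 : Matrix (Fin 1) (Fin 1) ℝ) - !![2] = !![(-1 : ℝ)] := by
    ext i j; fin_cases i; fin_cases j; simp [Matrix.one_apply]; norm_num
  rw [h1, matInvNegOne]
  ext i j
  fin_cases i <;> fin_cases j <;>
    simp [Matrix.mul_apply, Fin.sum_univ_succ] <;> norm_num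

noncomputable def myW : Matrix (Fin 2) (Fin 2) ℝ := !![(-1 : ℝ), 0; -1, 1]

noncomputable def myWr : Matrix (Fin 1 ⊕ Fin 1) (Fin 1 ⊕ Fin 1) ℝ :=
  Matrix.reindex finSumFinEquiv.symm finSumFinEquiv.symm myW

lemma myWr_b11 : myWr.toBlocks₁₁ = !![(-1 : ℝ)] := by
  ext i j
  fin_cases i; fin_cases j
  simp [myWr, myW, toBlocks₁₁,
    show finSumFinEquiv (Sum.inl (0 : Fin 1)) = (0 : Fin (1+1)) from by decide]

lemma myWr_b12 : myWr.toBlocks₁₂ = 0 := by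
  ext i j
  fin_cases i; fin_cases j
  simp [myWr, myW, toBlocks₁₂,
    show finSumFinEquiv (Sum.inl (0 : Fin 1)) = (0 : Fin (1+1)) from by decide,
    show finSumFinEquiv (Sum.inr (0 : Fin 1)) = (1 : Fin (1+1)) from by decide]

noncomputable def myG : Matrix (Fin 1 ⊕ Fin 2) (Fin 1 ⊕ Fin 2) ℝ :=
  Matrix.reindex (groupEquiv 1 1 1) (groupEquiv 1 1 1) myF

lemma myG_b11 : myG.toBlocks₁₁ = !![(0 : ℝ)] := by
  ext i j
  fin_cases i; fin_cases j
  simp [myG, myF, toBlocks₁₁,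
    show (groupEquiv 1 1 1).symm (Sum.inl 0) = Sum.inl 0 from by decide]

lemma myG_b12 : myG.toBlocks₁₂ = !![(-2 : ℝ), 1] := by
  ext i j
  fin_cases i <;> fin_cases j <;>
  simp [myG, myF, toBlocks₁₂,
    show (groupEquiv 1 1 1).symm (Sum.inl 0) = Sum.inl 0 from by decide,
    show (groupEquiv 1 1 1).symm (Sum.inr 0) = Sum.inr (Sum.inl 0) from by decide,
    show (groupEquiv 1 1 1).symm (Sum.inr 1) = Sum.inr (Sum.inr 0) from by decide]

lemma myG_b21 : myG.toBlocks₂₁ = !![(0 : ℝ); 1] := by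
  ext i j
  fin_cases i <;> fin_cases j <;>
  simp [myG, myF, toBlocks₂₁,
    show (groupEquiv 1 1 1).symm (Sum.inl 0) = Sum.inl 0 from by decide,
    show (groupEquiv 1 1 1).symm (Sum.inr 0) = Sum.inr (Sum.inl 0) from by decide,
    show (groupEquiv 1 1 1).symm (Sum.inr 1) = Sum.inr (Sum.inr 0) from by decide]

lemma myG_b22 : myG.toBlocks₂₂ = !![(-1 : ℝ), 1; -2, 2] := by
  ext i j
  fin_cases i <;> fin_cases j <;>
  simp [myG, myF, toBlocks₂₂,
    show (groupEquiv 1 1 1).symm (Sum.inr 0) = Sum.inr (Sum.inl 0) from by decide,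
    show (groupEquiv 1 1 1).symm (Sum.inr 1) = Sum.inr (Sum.inr 0) from by decide]

lemma key_mul : !![(-2 : ℝ), 1] * !![(-1 : ℝ), 1; -2, 2] = 0 := by
  ext i j
  fin_cases i <;> fin_cases j <;>
    norm_num [Matrix.mul_apply, Fin.sum_univ_succ]

lemma term_zero : !![(-2 : ℝ), 1] * (1 : Matrix (Fin 2) (Fin 2) ℝ) * !![(0 : ℝ); 1] = !![(1 : ℝ)] := by
  ext i j
  fin_cases i; fin_cases j
  simp [Matrix.mul_apply, Fin.sum_univ_succ]

lemma myG_tendsto :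
    Tendsto (fun N => ∑ n ∈ Finset.range N,
      myG.toBlocks₁₂ * myG.toBlocks₂₂ ^ n * myG.toBlocks₂₁) atTop
      (nhds (!![(1 : ℝ)])) := by
  rw [myG_b12, myG_b21, myG_b22]
  apply Tendsto.congr' _ tendsto_const_nhds
  filter_upwards [eventually_ge_atTop 1] with N hN
  obtain ⟨m, rfl⟩ := Nat.exists_eq_add_of_le hN
  rw [add_comm, Finset.sum_range_succ']
  have hsucc : ∀ n : ℕ, !![(-2 : ℝ), 1] * !![(-1 : ℝ), 1; -2, 2] ^ (n + 1) * !![(0 : ℝ); 1] = 0 := by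
    intro n
    rw [pow_succ', ← Matrix.mul_assoc, key_mul, Matrix.zero_mul, Matrix.zero_mul]
  simp only [hsucc, Finset.sum_const, smul_zero, pow_zero, term_zero]
  simp

lemma myUnit : IsUnit (1 - myA.toBlocks₂₂) := by
  rw [myA_b22]
  have h1 : (1 : Matrix (Fin 1) (Fin 1) ℝ) - !![2] = !![(-1 : ℝ)] := by
    ext i j; fin_cases i; fin_cases j; simp [Matrix.one_apply]; norm_num
  rw [h1, Matrix.isUnit_iff_isUnit_det, Matrix.det_fin_one]
  norm_num


/-- There is no partial trace on real vector spaces with direct sum (matrices, with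
partiality modelled by `Option`) which satisfies dinaturality and vanishing II and
refines both the sum trace and the Haghverdi–Scott trace. -/
theorem no_partial_trace_refining_sum_and_hs
    (Tr : ∀ (a b u : ℕ), Matrix (Fin b ⊕ Fin u) (Fin a ⊕ Fin u) ℝ →
      Option (Matrix (Fin b) (Fin a) ℝ))
    -- (i) dinaturality
    (dinat : ∀ (a b u u' : ℕ) (f : Matrix (Fin b ⊕ Fin u') (Fin a ⊕ Fin u) ℝ)
      (g : Matrix (Fin u) (Fin u') ℝ),
      Tr a b u (Matrix.fromBlocks 1 0 0 g * f) =
        Tr a b u' (f * Matrix.fromBlocks 1 0 0 g))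
    -- (ii) vanishing II
    (vanII : ∀ (a b u v : ℕ)
      (f : Matrix (Fin b ⊕ (Fin u ⊕ Fin v)) (Fin a ⊕ (Fin u ⊕ Fin v)) ℝ)
      (w : Matrix (Fin (b + u)) (Fin (a + u)) ℝ),
      Tr (a + u) (b + u) v (Matrix.reindex (assocEquiv b u v) (assocEquiv a u v) f) =
          some w →
      Tr a b u (Matrix.reindex finSumFinEquiv.symm finSumFinEquiv.symm w) =
        Tr a b (u + v) (Matrix.reindex (groupEquiv b u v) (groupEquiv a u v) f))
    -- (iii) Tr refines the sum trace ...
    (refSum : ∀ (a b u : ℕ) (f : Matrix (Fin b ⊕ Fin u) (Fin a ⊕ Fin u) ℝ)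
      (S : Matrix (Fin b) (Fin a) ℝ),
      Tendsto
        (fun N => ∑ n ∈ Finset.range N,
          f.toBlocks₁₂ * f.toBlocks₂₂ ^ n * f.toBlocks₂₁) atTop (nhds S) →
      Tr a b u f = some (f.toBlocks₁₁ + S))
    -- ... and the Haghverdi–Scott trace
    (refHS : ∀ (a b u : ℕ) (f : Matrix (Fin b ⊕ Fin u) (Fin a ⊕ Fin u) ℝ),
      IsUnit (1 - f.toBlocks₂₂) →
      Tr a b u f =
        some (f.toBlocks₁₁ + f.toBlocks₁₂ * (1 - f.toBlocks₂₂)⁻¹ * f.toBlocks₂₁)) :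
    False := by
  -- Step 1: trace out the last component via HS
  have h1 : Tr 2 2 1 myA = some myW := by
    rw [refHS 2 2 1 myA myUnit, myW_eq]; rfl
  -- Step 2: vanishing II
  have h2 := vanII 1 1 1 1 myF myW h1
  -- Step 3: iterated value is !![-1]
  have h3 : Tr 1 1 1 myWr = some (!![(-1 : ℝ)]) := by
    have := refSum 1 1 1 myWr 0 (by
      simp only [myWr_b12, Matrix.zero_mul, Finset.sum_const, smul_zero]
      exact tendsto_const_nhds)
    rw [this, myWr_b11]
    norm_num
  -- Step 4: grouped value is !![1]
  have h4 : Tr 1 1 2 myG = some (!![(1 : ℝ)]) := by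
    rw [refSum 1 1 2 myG !![(1 : ℝ)] myG_tendsto, myG_b11]
    congr 1
    ext i j; fin_cases i; fin_cases j; simp
  -- Combine
  have h2' : Tr 1 1 1 myWr = Tr 1 1 2 myG := h2
  rw [h3, h4] at h2'
  have := Option.some.inj h2'
  have h00 := congrFun (congrFun this 0) 0
  norm_num at h00
end

section
/- For real matrices, the Kleene trace is refined by both the Haghverdi–Scott trace and the sum trace: if f is a real (b+u)×(a+u) block matrix and the series Σ_{n≥0} f₂₂ⁿ converges to a matrix S, then (i) I − f₂₂ is invertible with (I − f₂₂)⁻¹ = S; (ii) the series Σ_{n≥0} f₁₂ f₂₂ⁿ f₂₁ converges to f₁₂ S f₂₁; and hence (iii) Tr_K^u(f), Tr_HS^u(f), and Tr_Σ^u(f) are all defined and all equal to f₁₁ + f₁₂ S f₂₁. In particular Tr_K^u(f) ⊑ Tr_HS^u(f) and Tr_K^u(f) ⊑ Tr_Σ^u(f) for all f. -/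
open Filter Matrix

/-- The Kleene trace is refined by both the Haghverdi–Scott trace and the sum trace:
if `Σ f₂₂ⁿ` converges to `S`, then `1 − f₂₂` is invertible with inverse `S`, the series
`Σ f₁₂ f₂₂ⁿ f₂₁` converges to `f₁₂ S f₂₁`, and the Kleene, Haghverdi–Scott and sum
traces are all defined, all equal to `f₁₁ + f₁₂ S f₂₁`. -/
theorem kleene_trace_refined {a b u : ℕ}
    (f : Matrix (Fin b ⊕ Fin u) (Fin a ⊕ Fin u) ℝ)
    (S : Matrix (Fin u) (Fin u) ℝ)
    (hS : Tendsto (fun N => ∑ n ∈ Finset.range N, f.toBlocks₂₂ ^ n)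
      atTop (nhds S)) :
    IsUnit (1 - f.toBlocks₂₂) ∧
    (1 - f.toBlocks₂₂)⁻¹ = S ∧
    Tendsto
      (fun N => ∑ n ∈ Finset.range N, f.toBlocks₁₂ * f.toBlocks₂₂ ^ n * f.toBlocks₂₁)
      atTop (nhds (f.toBlocks₁₂ * S * f.toBlocks₂₁)) ∧
    f.toBlocks₁₁ + f.toBlocks₁₂ * (1 - f.toBlocks₂₂)⁻¹ * f.toBlocks₂₁ =
      f.toBlocks₁₁ + f.toBlocks₁₂ * S * f.toBlocks₂₁ := by
  set A := f.toBlocks₂₂ with hA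
  have hpow : Tendsto (fun N => A ^ N) atTop (nhds 0) := by
    have h1 : Tendsto (fun N => ∑ n ∈ Finset.range (N + 1), A ^ n) atTop (nhds S) :=
      hS.comp (tendsto_add_atTop_nat 1)
    have h2 := h1.sub hS
    simpa [Finset.sum_range_succ] using h2
  have hleft : (1 - A) * S = 1 := by
    have hlim1 : Tendsto (fun N => (1 - A) * ∑ n ∈ Finset.range N, A ^ n)
        atTop (nhds ((1 - A) * S)) :=
      ((continuous_const.matrix_mul continuous_id).tendsto S).comp hS
    have hlim2 : Tendsto (fun N => (1 - A) * ∑ n ∈ Finset.range N, A ^ n)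
        atTop (nhds 1) := by
      have heq : ∀ N, (1 - A) * ∑ n ∈ Finset.range N, A ^ n = 1 - A ^ N := by
        intro N
        have := mul_geom_sum A N
        have : (1 - A) * ∑ n ∈ Finset.range N, A ^ n
            = -((A - 1) * ∑ n ∈ Finset.range N, A ^ n) := by
          rw [← neg_mul, neg_sub]
        rw [this, mul_geom_sum, neg_sub]
      simp only [heq]
      simpa using (tendsto_const_nhds (x := (1 : Matrix (Fin u) (Fin u) ℝ))).sub hpow
    exact tendsto_nhds_unique hlim1 hlim2
  have hright : S * (1 - A) = 1 := by
    have hlim1 : Tendsto (fun N => (∑ n ∈ Finset.range N, A ^ n) * (1 - A))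
        atTop (nhds (S * (1 - A))) :=
      ((continuous_id.matrix_mul continuous_const).tendsto S).comp hS
    have hlim2 : Tendsto (fun N => (∑ n ∈ Finset.range N, A ^ n) * (1 - A))
        atTop (nhds 1) := by
      have heq : ∀ N, (∑ n ∈ Finset.range N, A ^ n) * (1 - A) = 1 - A ^ N := by
        intro N
        have : (∑ n ∈ Finset.range N, A ^ n) * (1 - A)
            = -((∑ n ∈ Finset.range N, A ^ n) * (A - 1)) := by
          rw [← mul_neg, neg_sub]
        rw [this, geom_sum_mul, neg_sub]
      simp only [heq]
      simpa using (tendsto_const_nhds (x := (1 : Matrix (Fin u) (Fin u) ℝ))).sub hpow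
    exact tendsto_nhds_unique hlim1 hlim2
  have hunit : IsUnit (1 - A) := ⟨⟨1 - A, S, hleft, hright⟩, rfl⟩
  have hinv : (1 - A)⁻¹ = S := Matrix.inv_eq_left_inv hright
  refine ⟨hunit, hinv, ?_, by rw [hinv]⟩
  have hlim : Tendsto (fun N => f.toBlocks₁₂ * (∑ n ∈ Finset.range N, A ^ n) * f.toBlocks₂₁)
      atTop (nhds (f.toBlocks₁₂ * S * f.toBlocks₂₁)) :=
    (((continuous_const.matrix_mul continuous_id).matrix_mul continuous_const).tendsto S).comp hS
  have heq : ∀ N, f.toBlocks₁₂ * (∑ n ∈ Finset.range N, A ^ n) * f.toBlocks₂₁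
      = ∑ n ∈ Finset.range N, f.toBlocks₁₂ * A ^ n * f.toBlocks₂₁ := by
    intro N
    rw [Matrix.mul_sum, Matrix.sum_mul]
  simpa only [heq] using hlim
end

section
/- Dinaturality of the Haghverdi–Scott trace: in a preadditive category with binary biproducts, let f : A ⊞ U ⟶ B ⊞ U' and g : U' ⟶ U. Then 1_U − g∘f₂₂ is an isomorphism if and only if 1_{U'} − f₂₂∘g is an isomorphism (where f₂₂ = π_{U'}∘f∘ι_U), and in that case Tr_HS^U((1_B ⊞ g)∘f) = Tr_HS^{U'}(f∘(1_A ⊞ g)); explicitly, f₁₁ + f₁₂∘(1_U − g∘f₂₂)⁻¹∘g∘f₂₁ = f₁₁ + f₁₂∘g∘(1_{U'} − f₂₂∘g)⁻¹∘f₂₁. That is, Tr_HS^U((1_B ⊞ g)∘f) ≃ Tr_HS^{U'}(f∘(1_A ⊞ g)). -/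
open CategoryTheory CategoryTheory.Limits

universe v u

variable {C : Type u} [Category.{v} C] [Preadditive C] [HasBinaryBiproducts C]

/-- The `(1,1)` matrix component of a morphism between binary biproducts. -/
noncomputable def c11 {X U Y V : C} (f : X ⊞ U ⟶ Y ⊞ V) : X ⟶ Y := biprod.inl ≫ f ≫ biprod.fst
/-- The `(1,2)` matrix component of a morphism between binary biproducts. -/
noncomputable def c12 {X U Y V : C} (f : X ⊞ U ⟶ Y ⊞ V) : U ⟶ Y := biprod.inr ≫ f ≫ biprod.fst
/-- The `(2,1)` matrix component of a morphism between binary biproducts. -/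
noncomputable def c21 {X U Y V : C} (f : X ⊞ U ⟶ Y ⊞ V) : X ⟶ V := biprod.inl ≫ f ≫ biprod.snd
/-- The `(2,2)` matrix component of a morphism between binary biproducts. -/
noncomputable def c22 {X U Y V : C} (f : X ⊞ U ⟶ Y ⊞ V) : U ⟶ V := biprod.inr ≫ f ≫ biprod.snd

private lemma isIso_one_sub_swap {X Y : C} (a : X ⟶ Y) (b : Y ⟶ X)
    (h : IsIso (𝟙 X - a ≫ b)) : IsIso (𝟙 Y - b ≫ a) := by
  refine ⟨𝟙 Y + b ≫ inv (𝟙 X - a ≫ b) ≫ a, ?_, ?_⟩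
  · calc (𝟙 Y - b ≫ a) ≫ (𝟙 Y + b ≫ inv (𝟙 X - a ≫ b) ≫ a)
        = 𝟙 Y + b ≫ (𝟙 X - a ≫ b) ≫ inv (𝟙 X - a ≫ b) ≫ a - b ≫ a := by
          simp only [Preadditive.sub_comp, Preadditive.comp_sub, Preadditive.add_comp,
            Preadditive.comp_add, Category.id_comp, Category.comp_id, Category.assoc]
          abel
      _ = 𝟙 Y := by rw [IsIso.hom_inv_id_assoc]; abel
  · calc (𝟙 Y + b ≫ inv (𝟙 X - a ≫ b) ≫ a) ≫ (𝟙 Y - b ≫ a)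
        = 𝟙 Y + b ≫ inv (𝟙 X - a ≫ b) ≫ (𝟙 X - a ≫ b) ≫ a - b ≫ a := by
          simp only [Preadditive.sub_comp, Preadditive.comp_sub, Preadditive.add_comp,
            Preadditive.comp_add, Category.id_comp, Category.comp_id, Category.assoc]
          abel
      _ = 𝟙 Y := by rw [IsIso.inv_hom_id_assoc]; abel

/-- Dinaturality of the Haghverdi–Scott trace: for `f : A ⊞ U ⟶ B ⊞ U'` and
`g : U' ⟶ U`, `1_U − g∘f₂₂` is an isomorphism iff `1_{U'} − f₂₂∘g` is, and in that
case the two Haghverdi–Scott traces agree: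
`f₁₁ + f₁₂∘(1_U − g∘f₂₂)⁻¹∘g∘f₂₁ = f₁₁ + f₁₂∘g∘(1_{U'} − f₂₂∘g)⁻¹∘f₂₁`. -/
theorem trHS_dinaturality {A B U U' : C} (f : A ⊞ U ⟶ B ⊞ U') (g : U' ⟶ U) :
    (IsIso (𝟙 U - c22 f ≫ g) ↔ IsIso (𝟙 U' - g ≫ c22 f)) ∧
    ∀ (h1 : IsIso (𝟙 U - c22 f ≫ g)) (h2 : IsIso (𝟙 U' - g ≫ c22 f)),
      c11 f + c21 f ≫ g ≫ (letI := h1; inv (𝟙 U - c22 f ≫ g)) ≫ c12 f =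
      c11 f + c21 f ≫ (letI := h2; inv (𝟙 U' - g ≫ c22 f)) ≫ g ≫ c12 f := by
  constructor
  · exact ⟨isIso_one_sub_swap _ _, isIso_one_sub_swap _ _⟩
  · intro h1 h2
    have slide : g ≫ inv (𝟙 U - c22 f ≫ g) = inv (𝟙 U' - g ≫ c22 f) ≫ g := by
      rw [IsIso.eq_inv_comp, ← Category.assoc, IsIso.comp_inv_eq]
      simp only [Preadditive.comp_sub, Preadditive.sub_comp, Category.comp_id,
        Category.id_comp, Category.assoc]
    rw [← Category.assoc g, slide, Category.assoc]
end

section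
/- Vanishing II for the Haghverdi–Scott trace: in a preadditive category with binary biproducts, let f : A ⊞ U ⊞ V ⟶ B ⊞ U ⊞ V with 3×3 matrix components f_ij (i,j ∈ {1,2,3}, indexing the summands A or B, U, V). Suppose 1_V − f₃₃ is an isomorphism, and let g := Tr_HS^V(f) : A ⊞ U ⟶ B ⊞ U, regarding f as a morphism (A⊞U) ⊞ V ⟶ (B⊞U) ⊞ V, so that in particular g₂₂ = f₂₂ + f₂₃∘(1_V − f₃₃)⁻¹∘f₃₂. Then 1_U − g₂₂ is an isomorphism if and only if 1_{U⊞V} minus the morphism U ⊞ V ⟶ U ⊞ V with components [[f₂₂, f₂₃],[f₃₂, f₃₃]] is an isomorphism, and in that case Tr_HS^U(g) = Tr_HS^{U⊞V}(f) (regarding f as a morphism A ⊞ (U⊞V) ⟶ B ⊞ (U⊞V)). -/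
open CategoryTheory CategoryTheory.Limits

universe v u

variable {C : Type u} [Category.{v} C] [Preadditive C] [HasBinaryBiproducts C]

/-- The Haghverdi–Scott trace of `f : X ⊞ W ⟶ Y ⊞ W`, defined when `1_W − f₂₂` is an
isomorphism. -/
noncomputable def trHS {X Y W : C} (f : X ⊞ W ⟶ Y ⊞ W) (h : IsIso (𝟙 W - c22 f)) :
    X ⟶ Y :=
  c11 f + c21 f ≫ (letI := h; inv (𝟙 W - c22 f)) ≫ c12 f

/-! Viewing `f` as a morphism `A ⊞ (U ⊞ V) ⟶ B ⊞ (U ⊞ V)`, its trace over `U ⊞ V` inverts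
`N = 1 - [[f₂₂, f₂₃], [f₃₂, f₃₃]]`. Gaussian elimination against the invertible corner
`1 - f₃₃` factors `N` as a unipotent upper, a diagonal `diag(S, 1 - f₃₃)` and a unipotent lower
matrix, and the Schur complement `S` is exactly `1 - g₂₂`. Hence `N` is invertible iff `1 - g₂₂`
is, and expanding `N⁻¹` through the factorisation yields `Tr^U(g)`. -/

open Preadditive

theorem biprod.inv_map {W X Y Z : C} (f : W ⟶ Y) (g : X ⟶ Z) [IsIso f] [IsIso g]
    [IsIso (biprod.map f g)] : inv (biprod.map f g) = biprod.map (inv f) (inv g) :=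
  IsIso.inv_eq_of_hom_inv_id (by ext <;> simp)

theorem biprod.desc_lift_lift {X₁ X₂ Y₁ Y₂ : C} (f₁₁ : X₁ ⟶ Y₁) (f₁₂ : X₁ ⟶ Y₂)
    (f₂₁ : X₂ ⟶ Y₁) (f₂₂ : X₂ ⟶ Y₂) :
    biprod.desc (biprod.lift f₁₁ f₁₂) (biprod.lift f₂₁ f₂₂) =
      Biprod.ofComponents f₁₁ f₁₂ f₂₁ f₂₂ := by
  ext <;> simp

theorem Biprod.id_sub_ofComponents {U V : C} (f₁₁ : U ⟶ U) (f₁₂ : U ⟶ V) (f₂₁ : V ⟶ U)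
    (f₂₂ : V ⟶ V) :
    𝟙 (U ⊞ V) - Biprod.ofComponents f₁₁ f₁₂ f₂₁ f₂₂ =
      Biprod.ofComponents (𝟙 U - f₁₁) (-f₁₂) (-f₂₁) (𝟙 V - f₂₂) := by
  ext <;> simp

section Schur

variable {U V : C} (E : U ⟶ U) (b : U ⟶ V) (a : V ⟶ U) (D : V ⟶ V) [IsIso D]

theorem Biprod.ofComponents_eq_unipotentUpper_comp_map_comp_unipotentLower :
    Biprod.ofComponents E b a D =
      (Biprod.unipotentUpper (b ≫ inv D)).hom ≫ biprod.map (E - b ≫ inv D ≫ a) D ≫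
        (Biprod.unipotentLower (inv D ≫ a)).hom := by
  ext <;> simp [biprod.map_eq, Biprod.ofComponents]

theorem Biprod.isIso_ofComponents_iff :
    IsIso (Biprod.ofComponents E b a D) ↔ IsIso (E - b ≫ inv D ≫ a) := by
  rw [Biprod.ofComponents_eq_unipotentUpper_comp_map_comp_unipotentLower, isIso_comp_left_iff,
    isIso_comp_right_iff]
  refine ⟨fun _ ↦ isIso_left_of_isIso_biprod_map _ D, fun _ ↦ ?_⟩
  exact (biprod.mapIso (asIso (E - b ≫ inv D ≫ a)) (asIso D)).isIso_hom

theorem Biprod.lift_comp_inv_ofComponents_comp_desc [IsIso (E - b ≫ inv D ≫ a)]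
    [IsIso (Biprod.ofComponents E b a D)] {X Y : C} (x : X ⟶ U) (y : X ⟶ V) (p : U ⟶ Y)
    (q : V ⟶ Y) :
    biprod.lift x y ≫ inv (Biprod.ofComponents E b a D) ≫ biprod.desc p q =
      y ≫ inv D ≫ q +
        (x - y ≫ inv D ≫ a) ≫ inv (E - b ≫ inv D ≫ a) ≫ (p - b ≫ inv D ≫ q) := by
  have : IsIso (biprod.map (E - b ≫ inv D ≫ a) D) :=
    (biprod.mapIso (asIso (E - b ≫ inv D ≫ a)) (asIso D)).isIso_hom
  simp only [Biprod.ofComponents_eq_unipotentUpper_comp_map_comp_unipotentLower, IsIso.inv_comp,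
    IsIso.Iso.inv_hom, biprod.inv_map, Biprod.unipotentLower_inv, Biprod.unipotentUpper_inv]
  simp only [biprod.lift_eq, IsIso.inv_id, Category.comp_id, Biprod.unipotentUpper_hom,
    Biprod.ofComponents, Category.id_comp, zero_comp, comp_zero, add_zero, biprod.total, comp_neg,
    neg_zero, sub_zero, biprod.map_eq, Biprod.unipotentLower_hom, neg_comp, Category.assoc,
    comp_add, add_comp, BinaryBicone.inl_fst_assoc, BinaryBicone.inr_fst_assoc,
    BinaryBicone.inl_snd_assoc, BinaryBicone.inr_snd_assoc, zero_add, neg_add_rev, neg_neg,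
    biprod.desc_eq, comp_sub, sub_comp]
  abel

end Schur

section Components

-- `c12`, `c21` are indexed (target, source), whereas `Biprod.ofComponents` takes (source, target).

variable {X₁ X₂ Y₁ Y₂ : C} (f₁₁ : X₁ ⟶ Y₁) (f₁₂ : X₁ ⟶ Y₂) (f₂₁ : X₂ ⟶ Y₁) (f₂₂ : X₂ ⟶ Y₂)

@[simp] theorem c11_ofComponents : c11 (Biprod.ofComponents f₁₁ f₁₂ f₂₁ f₂₂) = f₁₁ := by
  simp [c11]

@[simp] theorem c12_ofComponents : c12 (Biprod.ofComponents f₁₁ f₁₂ f₂₁ f₂₂) = f₂₁ := by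
  simp [c12]

@[simp] theorem c21_ofComponents : c21 (Biprod.ofComponents f₁₁ f₁₂ f₂₁ f₂₂) = f₁₂ := by
  simp [c21]

@[simp] theorem c22_ofComponents : c22 (Biprod.ofComponents f₁₁ f₁₂ f₂₁ f₂₂) = f₂₂ := by
  simp [c22]

end Components

theorem biprod.associator_inv_comp_comp_associator_hom_eq_ofComponents {X Y U U' V V' : C}
    (f : (X ⊞ U) ⊞ V ⟶ (Y ⊞ U') ⊞ V') :
    (biprod.associator X U V).inv ≫ f ≫ (biprod.associator Y U' V').hom =
      Biprod.ofComponents ((biprod.inl ≫ biprod.inl) ≫ f ≫ (biprod.fst ≫ biprod.fst))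
        (biprod.lift ((biprod.inl ≫ biprod.inl) ≫ f ≫ (biprod.fst ≫ biprod.snd))
          ((biprod.inl ≫ biprod.inl) ≫ f ≫ biprod.snd))
        (biprod.desc ((biprod.inr ≫ biprod.inl) ≫ f ≫ (biprod.fst ≫ biprod.fst))
          (biprod.inr ≫ f ≫ (biprod.fst ≫ biprod.fst)))
        (Biprod.ofComponents ((biprod.inr ≫ biprod.inl) ≫ f ≫ (biprod.fst ≫ biprod.snd))
          ((biprod.inr ≫ biprod.inl) ≫ f ≫ biprod.snd)
          (biprod.inr ≫ f ≫ (biprod.fst ≫ biprod.snd)) (biprod.inr ≫ f ≫ biprod.snd)) := by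
  ext <;> simp [biprod.associator, biprod.lift_eq]

theorem comp_trHS_comp {X X' Y Y' W : C} (f : X ⊞ W ⟶ Y ⊞ W) [h : IsIso (𝟙 W - c22 f)]
    (P : X' ⟶ X) (Q : Y ⟶ Y') :
    P ≫ trHS f h ≫ Q =
      (P ≫ biprod.inl) ≫ f ≫ (biprod.fst ≫ Q) +
        ((P ≫ biprod.inl) ≫ f ≫ biprod.snd) ≫ inv (𝟙 W - c22 f) ≫
          (biprod.inr ≫ f ≫ (biprod.fst ≫ Q)) := by
  simp [trHS, c11, c12, c21, comp_add, add_comp]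

theorem trHS_eq_of_id_sub_c22_eq {X Y W : C} {f : X ⊞ W ⟶ Y ⊞ W} {S : W ⟶ W} [IsIso S]
    (hS : 𝟙 W - c22 f = S) (h : IsIso (𝟙 W - c22 f)) :
    trHS f h = c11 f + c21 f ≫ inv S ≫ c12 f := by
  subst hS
  rfl

/-- Vanishing II for the Haghverdi–Scott trace. For `f : (A ⊞ U) ⊞ V ⟶ (B ⊞ U) ⊞ V`
with `1_V − f₃₃` an isomorphism and `g := Tr_HS^V(f)`, one has
`g₂₂ = f₂₂ + f₂₃∘(1_V − f₃₃)⁻¹∘f₃₂`; moreover `1_U − g₂₂` is an isomorphism iff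
`1_{U⊞V} − [[f₂₂,f₂₃],[f₃₂,f₃₃]]` is, and in that case
`Tr_HS^U(g) = Tr_HS^{U⊞V}(f)` (with `f` reassociated as a morphism
`A ⊞ (U ⊞ V) ⟶ B ⊞ (U ⊞ V)`). -/
theorem trHS_vanishing_two {A B U V : C} (f : (A ⊞ U) ⊞ V ⟶ (B ⊞ U) ⊞ V)
    (hV : IsIso (𝟙 V - c22 f)) :
    -- 3×3 components of f
    (let f22 : U ⟶ U := (biprod.inr ≫ biprod.inl) ≫ f ≫ (biprod.fst ≫ biprod.snd)
     let f23 : V ⟶ U := biprod.inr ≫ f ≫ (biprod.fst ≫ biprod.snd)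
     let f32 : U ⟶ V := (biprod.inr ≫ biprod.inl) ≫ f ≫ biprod.snd
     let f33 : V ⟶ V := biprod.inr ≫ f ≫ biprod.snd
     let g : A ⊞ U ⟶ B ⊞ U := trHS f hV
     -- the block matrix m = [[f₂₂,f₂₃],[f₃₂,f₃₃]] : U ⊞ V ⟶ U ⊞ V
     let m : U ⊞ V ⟶ U ⊞ V := biprod.desc (biprod.lift f22 f32) (biprod.lift f23 f33)
     -- f reassociated as A ⊞ (U ⊞ V) ⟶ B ⊞ (U ⊞ V)
     let f' : A ⊞ (U ⊞ V) ⟶ B ⊞ (U ⊞ V) :=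
       biprod.lift (biprod.lift biprod.fst (biprod.snd ≫ biprod.fst))
           (biprod.snd ≫ biprod.snd) ≫ f ≫
         biprod.lift (biprod.fst ≫ biprod.fst)
           (biprod.lift (biprod.fst ≫ biprod.snd) biprod.snd)
     c22 g = f22 + f32 ≫ (letI := hV; inv (𝟙 V - c22 f)) ≫ f23 ∧
     (IsIso (𝟙 U - c22 g) ↔ IsIso (𝟙 (U ⊞ V) - m)) ∧
     ∀ (h1 : IsIso (𝟙 U - c22 g)) (h2 : IsIso (𝟙 (U ⊞ V) - c22 f')),
       trHS g h1 = trHS f' h2) := by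
  intro f22 f23 f32 f33 g m f'
  have hg22 : c22 g = f22 + f32 ≫ inv (𝟙 V - c22 f) ≫ f23 := comp_trHS_comp f _ _
  have hS : 𝟙 U - c22 g = (𝟙 U - f22) - (-f32) ≫ inv (𝟙 V - c22 f) ≫ (-f23) := by
    rw [hg22, neg_comp, comp_neg, comp_neg, neg_neg]
    abel
  have hm : 𝟙 (U ⊞ V) - m = Biprod.ofComponents (𝟙 U - f22) (-f32) (-f23) (𝟙 V - c22 f) :=
    (congrArg _ (biprod.desc_lift_lift _ _ _ _)).trans (Biprod.id_sub_ofComponents _ _ _ _)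
  refine ⟨hg22, by rw [hS, hm, Biprod.isIso_ofComponents_iff], fun h1 h2 ↦ ?_⟩
  have hf' : f' = _ := biprod.associator_inv_comp_comp_associator_hom_eq_ofComponents f
  have hN : 𝟙 (U ⊞ V) - c22 f' =
      Biprod.ofComponents (𝟙 U - f22) (-f32) (-f23) (𝟙 V - c22 f) := by
    rw [hf', c22_ofComponents, Biprod.id_sub_ofComponents]
    rfl
  have : IsIso (𝟙 U - f22 - (-f32) ≫ inv (𝟙 V - c22 f) ≫ (-f23)) := hS ▸ h1
  have : IsIso (Biprod.ofComponents (𝟙 U - f22) (-f32) (-f23) (𝟙 V - c22 f)) := hN ▸ h2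
  rw [trHS_eq_of_id_sub_c22_eq hS, trHS_eq_of_id_sub_c22_eq hN, hf', c11_ofComponents,
    c21_ofComponents, c12_ofComponents, Biprod.lift_comp_inv_ofComponents_comp_desc, c11, c21, c12,
    comp_trHS_comp, comp_trHS_comp, comp_trHS_comp]
  simp only [comp_neg, neg_comp, sub_neg_eq_add]
  abel
end

section
/- Well-definedness of the kernel-image trace: in a preadditive category with binary biproducts, let f : A ⊞ U ⟶ B ⊞ U with matrix components f_ij. If i : A ⟶ U satisfies (1_U − f₂₂)∘i = f₂₁ and k : U ⟶ B satisfies k∘(1_U − f₂₂) = f₁₂, then f₁₂∘i = k∘f₂₁. Consequently, f₁₂∘i does not depend on the choice of i, k∘f₂₁ does not depend on the choice of k, and the value Tr_KI^U(f) = f₁₁ + f₁₂∘i = f₁₁ + k∘f₂₁ is independent of the witness (k,i). -/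
open CategoryTheory CategoryTheory.Limits

universe v u

variable {C : Type u} [Category.{v} C] [Preadditive C] [HasBinaryBiproducts C]

/-- `(k, i)` is a witness for the kernel-image trace of `f : X ⊞ W ⟶ Y ⊞ W`:
`(1_W − f₂₂)∘i = f₂₁` and `k∘(1_W − f₂₂) = f₁₂`. -/
def KIW {X Y W : C} (f : X ⊞ W ⟶ Y ⊞ W) (k : W ⟶ Y) (i : X ⟶ W) : Prop :=
  i ≫ (𝟙 W - c22 f) = c21 f ∧ (𝟙 W - c22 f) ≫ k = c12 f

/-- The value of the kernel-image trace of `f` computed from the witness component `i`: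
`f₁₁ + f₁₂∘i`. -/
noncomputable def KIval {X Y W : C} (f : X ⊞ W ⟶ Y ⊞ W) (i : X ⟶ W) : X ⟶ Y :=
  c11 f + i ≫ c12 f

/-- Well-definedness of the kernel-image trace: if `(k,i)` is a witness for
`Tr_KI^U(f)`, then `f₁₂∘i = k∘f₂₁`; consequently the value of the trace does not
depend on the chosen witness. -/
theorem KIval_well_defined {A B U : C} (f : A ⊞ U ⟶ B ⊞ U)
    (k : U ⟶ B) (i : A ⟶ U) (h : KIW f k i)
    (k' : U ⟶ B) (i' : A ⟶ U) (h' : KIW f k' i') :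
    i ≫ c12 f = c21 f ≫ k ∧
    i ≫ c12 f = i' ≫ c12 f ∧
    c21 f ≫ k = c21 f ≫ k' ∧
    KIval f i = KIval f i' ∧
    KIval f i = c11 f + c21 f ≫ k := by
  obtain ⟨hi, hk⟩ := h
  obtain ⟨hi', hk'⟩ := h'
  have key : ∀ (j : A ⟶ U) (l : U ⟶ B), j ≫ (𝟙 U - c22 f) = c21 f →
      (𝟙 U - c22 f) ≫ l = c12 f → j ≫ c12 f = c21 f ≫ l := by
    intro j l hj hl
    rw [← hj, ← hl, Category.assoc]
  have e1 := key i k hi hk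
  have e2 := key i k' hi hk'
  have e3 := key i' k hi' hk
  have e4 := key i' k' hi' hk'
  refine ⟨e1, ?_, ?_, ?_, ?_⟩
  · rw [e1, e3]
  · rw [← e2, e1]
  · unfold KIval; rw [e1, e3]
  · unfold KIval; rw [e1]
end

section
/- Dinaturality of the kernel-image trace: in a preadditive category with binary biproducts, let f : A ⊞ U ⟶ B ⊞ U' and g : U' ⟶ U, with matrix components f_ij of f (so f₂₂ : U ⟶ U'). Then Tr_KI^U((1_B ⊞ g)∘f) ≃ Tr_KI^{U'}(f∘(1_A ⊞ g)): witnesses exist for one side if and only if they exist for the other, and then the values agree. Moreover, explicitly: if (k,i) witnesses Tr_KI^U((1_B ⊞ g)∘f) (i.e., (1_U − g∘f₂₂)∘i = g∘f₂₁ and k∘(1_U − g∘f₂₂) = f₁₂), then (k∘g, f₂₁ + f₂₂∘i) witnesses Tr_KI^{U'}(f∘(1_A ⊞ g)) (i.e., (1_{U'} − f₂₂∘g)∘(f₂₁ + f₂₂∘i) = f₂₁ and (k∘g)∘(1_{U'} − f₂₂∘g) = f₁₂∘g), and f₁₁ + k∘g∘f₂₁ is the common value of both traces. -/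
open CategoryTheory CategoryTheory.Limits

universe v u

variable {C : Type u} [Category.{v} C] [Preadditive C] [HasBinaryBiproducts C]

lemma cF11 {A B U U' : C} (f : A ⊞ U ⟶ B ⊞ U') (g : U' ⟶ U) :
    c11 (f ≫ biprod.map (𝟙 B) g) = c11 f := by simp [c11]

lemma cF12 {A B U U' : C} (f : A ⊞ U ⟶ B ⊞ U') (g : U' ⟶ U) :
    c12 (f ≫ biprod.map (𝟙 B) g) = c12 f := by simp [c12]

lemma cF21 {A B U U' : C} (f : A ⊞ U ⟶ B ⊞ U') (g : U' ⟶ U) :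
    c21 (f ≫ biprod.map (𝟙 B) g) = c21 f ≫ g := by simp [c21]

lemma cF22 {A B U U' : C} (f : A ⊞ U ⟶ B ⊞ U') (g : U' ⟶ U) :
    c22 (f ≫ biprod.map (𝟙 B) g) = c22 f ≫ g := by simp [c22]

lemma cG11 {A B U U' : C} (f : A ⊞ U ⟶ B ⊞ U') (g : U' ⟶ U) :
    c11 (biprod.map (𝟙 A) g ≫ f) = c11 f := by simp [c11]

lemma cG12 {A B U U' : C} (f : A ⊞ U ⟶ B ⊞ U') (g : U' ⟶ U) :
    c12 (biprod.map (𝟙 A) g ≫ f) = g ≫ c12 f := by simp [c12]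

lemma cG21 {A B U U' : C} (f : A ⊞ U ⟶ B ⊞ U') (g : U' ⟶ U) :
    c21 (biprod.map (𝟙 A) g ≫ f) = c21 f := by simp [c21]

lemma cG22 {A B U U' : C} (f : A ⊞ U ⟶ B ⊞ U') (g : U' ⟶ U) :
    c22 (biprod.map (𝟙 A) g ≫ f) = g ≫ c22 f := by simp [c22]

lemma KIval_indep {X Y W : C} (f : X ⊞ W ⟶ Y ⊞ W) {k : W ⟶ Y} {i : X ⟶ W}
    {k' : W ⟶ Y} {i' : X ⟶ W} (h : KIW f k i) (h' : KIW f k' i') :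
    KIval f i = KIval f i' := by
  obtain ⟨h1, h2⟩ := h
  obtain ⟨h1', h2'⟩ := h'
  unfold KIval
  congr 1
  calc i ≫ c12 f = i ≫ (𝟙 W - c22 f) ≫ k' := by rw [h2']
    _ = (i ≫ (𝟙 W - c22 f)) ≫ k' := by rw [Category.assoc]
    _ = c21 f ≫ k' := by rw [h1]
    _ = (i' ≫ (𝟙 W - c22 f)) ≫ k' := by rw [h1']
    _ = i' ≫ c12 f := by rw [Category.assoc, h2']

lemma forward_aux {A B U U' : C} (f : A ⊞ U ⟶ B ⊞ U') (g : U' ⟶ U)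
    (k : U ⟶ B) (i : A ⟶ U) (h : KIW (f ≫ biprod.map (𝟙 B) g) k i) :
    KIW (biprod.map (𝟙 A) g ≫ f) (g ≫ k) (c21 f + i ≫ c22 f) ∧
    KIval (f ≫ biprod.map (𝟙 B) g) i = c11 f + c21 f ≫ g ≫ k ∧
    KIval (biprod.map (𝟙 A) g ≫ f) (c21 f + i ≫ c22 f) = c11 f + c21 f ≫ g ≫ k := by
  obtain ⟨h1, h2⟩ := h
  rw [cF21, cF22] at h1
  rw [cF12, cF22] at h2
  -- h1 : i ≫ (𝟙 U - c22 f ≫ g) = c21 f ≫ g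
  -- h2 : (𝟙 U - c22 f ≫ g) ≫ k = c12 f
  have hiR : ∀ {Z : C} (h : U ⟶ Z), i ≫ c22 f ≫ g ≫ h = i ≫ h - c21 f ≫ g ≫ h := by
    intro Z h
    have : i ≫ c22 f ≫ g = i - c21 f ≫ g := by
      rw [← h1]; simp [Preadditive.comp_sub]
    calc i ≫ c22 f ≫ g ≫ h = (i ≫ c22 f ≫ g) ≫ h := by simp [Category.assoc]
      _ = (i - c21 f ≫ g) ≫ h := by rw [this]
      _ = i ≫ h - c21 f ≫ g ≫ h := by simp [Preadditive.sub_comp, Category.assoc]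
  have hkEq : c12 f = k - c22 f ≫ g ≫ k := by
    rw [← h2]; simp [Preadditive.sub_comp, Category.assoc]
  refine ⟨⟨?_, ?_⟩, ?_, ?_⟩
  · rw [cG21, cG22]
    simp only [Preadditive.comp_sub, Preadditive.sub_comp, Preadditive.add_comp, Preadditive.comp_add, Category.comp_id, Category.id_comp,
      Category.assoc, hiR]
    abel
  · rw [cG12, cG22]
    simp only [hkEq, Preadditive.comp_sub, Preadditive.sub_comp, Preadditive.add_comp, Preadditive.comp_add, Category.comp_id, Category.id_comp,
      Category.assoc, hiR]
  · unfold KIval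
    rw [cF11, cF12]
    simp only [hkEq, Preadditive.comp_sub, Category.assoc, hiR]
    abel
  · unfold KIval
    rw [cG11, cG12]
    simp only [hkEq, Preadditive.comp_sub, Preadditive.sub_comp, Preadditive.add_comp, Preadditive.comp_add, Category.assoc, hiR]
    abel

lemma backward_aux {A B U U' : C} (f : A ⊞ U ⟶ B ⊞ U') (g : U' ⟶ U)
    (k' : U' ⟶ B) (i' : A ⟶ U') (h : KIW (biprod.map (𝟙 A) g ≫ f) k' i') :
    KIW (f ≫ biprod.map (𝟙 B) g) (c12 f + c22 f ≫ k') (i' ≫ g) := by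
  obtain ⟨h1, h2⟩ := h
  rw [cG21, cG22] at h1
  rw [cG12, cG22] at h2
  have hiR : ∀ {Z : C} (h : U' ⟶ Z), i' ≫ g ≫ c22 f ≫ h = i' ≫ h - c21 f ≫ h := by
    intro Z h
    have : i' ≫ g ≫ c22 f = i' - c21 f := by
      rw [← h1]; simp [Preadditive.comp_sub]
    calc i' ≫ g ≫ c22 f ≫ h = (i' ≫ g ≫ c22 f) ≫ h := by simp [Category.assoc]
      _ = (i' - c21 f) ≫ h := by rw [this]
      _ = i' ≫ h - c21 f ≫ h := by simp [Preadditive.sub_comp]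
  have hkR : g ≫ c22 f ≫ k' = k' - g ≫ c12 f := by
    rw [← h2]; simp [Preadditive.sub_comp, Category.assoc]
  constructor
  · rw [cF21, cF22]
    simp only [Preadditive.comp_sub, Preadditive.sub_comp, Category.comp_id, Category.id_comp, Category.assoc, hiR]
    abel
  · rw [cF12, cF22]
    simp only [Preadditive.comp_sub, Preadditive.sub_comp, Preadditive.add_comp, Preadditive.comp_add, Category.comp_id, Category.id_comp,
      Category.assoc, hkR]
    abel

/-- Dinaturality of the kernel-image trace: for `f : A ⊞ U ⟶ B ⊞ U'` and
`g : U' ⟶ U`, `Tr_KI^U((1_B ⊞ g)∘f)` is Kleene-equal to `Tr_KI^{U'}(f∘(1_A ⊞ g))`: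
witnesses exist for one side iff for the other, values agree, and explicitly, a
witness `(k,i)` for the left side yields the witness `(k∘g, f₂₁ + f₂₂∘i)` for the
right side, with common value `f₁₁ + k∘g∘f₂₁`. -/
theorem trKI_dinaturality {A B U U' : C} (f : A ⊞ U ⟶ B ⊞ U') (g : U' ⟶ U) :
    ((∃ (k : U ⟶ B) (i : A ⟶ U), KIW (f ≫ biprod.map (𝟙 B) g) k i) ↔
      (∃ (k' : U' ⟶ B) (i' : A ⟶ U'), KIW (biprod.map (𝟙 A) g ≫ f) k' i')) ∧
    (∀ (k : U ⟶ B) (i : A ⟶ U), KIW (f ≫ biprod.map (𝟙 B) g) k i →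
      KIW (biprod.map (𝟙 A) g ≫ f) (g ≫ k) (c21 f + i ≫ c22 f) ∧
      KIval (f ≫ biprod.map (𝟙 B) g) i = c11 f + c21 f ≫ g ≫ k ∧
      KIval (biprod.map (𝟙 A) g ≫ f) (c21 f + i ≫ c22 f) = c11 f + c21 f ≫ g ≫ k) ∧
    (∀ (k : U ⟶ B) (i : A ⟶ U) (k' : U' ⟶ B) (i' : A ⟶ U'),
      KIW (f ≫ biprod.map (𝟙 B) g) k i → KIW (biprod.map (𝟙 A) g ≫ f) k' i' →
      KIval (f ≫ biprod.map (𝟙 B) g) i = KIval (biprod.map (𝟙 A) g ≫ f) i') := by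
  refine ⟨⟨?_, ?_⟩, ?_, ?_⟩
  · rintro ⟨k, i, h⟩
    exact ⟨g ≫ k, c21 f + i ≫ c22 f, (forward_aux f g k i h).1⟩
  · rintro ⟨k', i', h⟩
    exact ⟨c12 f + c22 f ≫ k', i' ≫ g, backward_aux f g k' i' h⟩
  · intro k i h
    exact forward_aux f g k i h
  · intro k i k' i' h h'
    obtain ⟨hw, hv1, hv2⟩ := forward_aux f g k i h
    rw [hv1, ← hv2]
    exact KIval_indep _ hw h'
end

section
/- Vanishing II for the kernel-image trace: in a preadditive category with binary biproducts, let f : A ⊞ U ⊞ V ⟶ B ⊞ U ⊞ V with 3×3 matrix components f_ij (i,j ∈ {1,2,3}). Suppose Tr_KI^V(f) is defined (regarding f as a morphism (A⊞U) ⊞ V ⟶ (B⊞U) ⊞ V), and let g := Tr_KI^V(f) : A ⊞ U ⟶ B ⊞ U. Then Tr_KI^U(g) is defined if and only if Tr_KI^{U⊞V}(f) is defined (regarding f as a morphism A ⊞ (U⊞V) ⟶ B ⊞ (U⊞V)), and in that case Tr_KI^U(Tr_KI^V(f)) = Tr_KI^{U⊞V}(f). -/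
open CategoryTheory CategoryTheory.Limits

universe v u

variable {C : Type u} [Category.{v} C] [Preadditive C] [HasBinaryBiproducts C]

section Alg
set_option linter.unusedSectionVars false
variable {A B U V : C}
variable {b : U ⟶ B} {c : A ⟶ U} {d : U ⟶ U}
  {p : A ⟶ V} {q : U ⟶ V} {r : V ⟶ B} {s : V ⟶ U} {e : V ⟶ V}
  {iA : A ⟶ V} {iU : U ⟶ V} {kB : V ⟶ B} {kU : V ⟶ U}

lemma trKI2.bwd1 {i2U : A ⟶ U} {i2V : A ⟶ V}
    (hiA : iA ≫ (𝟙 V - e) = p) (hiU : iU ≫ (𝟙 V - e) = q) (hkU : (𝟙 V - e) ≫ kU = s)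
    (B1 : i2U ≫ (𝟙 U - d) - i2V ≫ s = c)
    (B2 : -(i2U ≫ q) + i2V ≫ (𝟙 V - e) = p) :
    i2U ≫ (𝟙 U - (d + iU ≫ s)) = c + iA ≫ s := by
  have z1 : iA ≫ (𝟙 V - e) - p = 0 := sub_eq_zero.mpr hiA
  have z2 : iU ≫ (𝟙 V - e) - q = 0 := sub_eq_zero.mpr hiU
  have z4 : (𝟙 V - e) ≫ kU - s = 0 := sub_eq_zero.mpr hkU
  have zB1 : i2U ≫ (𝟙 U - d) - i2V ≫ s - c = 0 := sub_eq_zero.mpr B1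
  have zB2 : -(i2U ≫ q) + i2V ≫ (𝟙 V - e) - p = 0 := sub_eq_zero.mpr B2
  refine sub_eq_zero.mp ?_
  calc i2U ≫ (𝟙 U - (d + iU ≫ s)) - (c + iA ≫ s)
      = (i2U ≫ (𝟙 U - d) - i2V ≫ s - c)
        + ((-(i2U ≫ q) + i2V ≫ (𝟙 V - e) - p)
            - (iA ≫ (𝟙 V - e) - p) - i2U ≫ (iU ≫ (𝟙 V - e) - q)) ≫ kU
        - (i2V - iA - i2U ≫ iU) ≫ ((𝟙 V - e) ≫ kU - s) := by
        simp only [Preadditive.comp_sub, Preadditive.sub_comp, Preadditive.comp_add,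
          Preadditive.add_comp, Category.comp_id, Category.id_comp, Category.assoc,
          Preadditive.neg_comp, Preadditive.comp_neg]
        abel
    _ = 0 := by rw [z1, z2, z4, zB1, zB2]; simp

lemma trKI2.bwd2 {k2U : U ⟶ B} {k2V : V ⟶ B}
    (hiU : iU ≫ (𝟙 V - e) = q)
    (B3 : (𝟙 U - d) ≫ k2U - q ≫ k2V = b)
    (B4 : -(s ≫ k2U) + (𝟙 V - e) ≫ k2V = r) :
    (𝟙 U - (d + iU ≫ s)) ≫ k2U = b + iU ≫ r := by
  have z2 : iU ≫ (𝟙 V - e) - q = 0 := sub_eq_zero.mpr hiU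
  have zB3 : (𝟙 U - d) ≫ k2U - q ≫ k2V - b = 0 := sub_eq_zero.mpr B3
  have zB4 : -(s ≫ k2U) + (𝟙 V - e) ≫ k2V - r = 0 := sub_eq_zero.mpr B4
  refine sub_eq_zero.mp ?_
  calc (𝟙 U - (d + iU ≫ s)) ≫ k2U - (b + iU ≫ r)
      = ((𝟙 U - d) ≫ k2U - q ≫ k2V - b)
        + iU ≫ (-(s ≫ k2U) + (𝟙 V - e) ≫ k2V - r)
        - (iU ≫ (𝟙 V - e) - q) ≫ k2V := by
        simp only [Preadditive.comp_sub, Preadditive.sub_comp, Preadditive.comp_add,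
          Preadditive.add_comp, Category.comp_id, Category.id_comp, Category.assoc,
          Preadditive.neg_comp, Preadditive.comp_neg]
        abel
    _ = 0 := by rw [z2, zB3, zB4]; simp

lemma trKI2.val {a : A ⟶ B} {i1 : A ⟶ U} {k1 : U ⟶ B} {i2U : A ⟶ U} {i2V : A ⟶ V}
    (hiA : iA ≫ (𝟙 V - e) = p) (hiU : iU ≫ (𝟙 V - e) = q)
    (hkB : (𝟙 V - e) ≫ kB = r) (hkU : (𝟙 V - e) ≫ kU = s)
    (H1 : i1 ≫ (𝟙 U - (d + iU ≫ s)) = c + iA ≫ s)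
    (H2 : (𝟙 U - (d + iU ≫ s)) ≫ k1 = b + iU ≫ r)
    (B1 : i2U ≫ (𝟙 U - d) - i2V ≫ s = c)
    (B2 : -(i2U ≫ q) + i2V ≫ (𝟙 V - e) = p) :
    a + iA ≫ r + i1 ≫ (b + iU ≫ r) = a + (i2U ≫ b + i2V ≫ r) := by
  have z1 : iA ≫ (𝟙 V - e) - p = 0 := sub_eq_zero.mpr hiA
  have z2 : iU ≫ (𝟙 V - e) - q = 0 := sub_eq_zero.mpr hiU
  have z3 : (𝟙 V - e) ≫ kB - r = 0 := sub_eq_zero.mpr hkB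
  have z4 : (𝟙 V - e) ≫ kU - s = 0 := sub_eq_zero.mpr hkU
  have zH1 : i1 ≫ (𝟙 U - (d + iU ≫ s)) - (c + iA ≫ s) = 0 := sub_eq_zero.mpr H1
  have zH2 : (𝟙 U - (d + iU ≫ s)) ≫ k1 - (b + iU ≫ r) = 0 := sub_eq_zero.mpr H2
  have zB1 : i2U ≫ (𝟙 U - d) - i2V ≫ s - c = 0 := sub_eq_zero.mpr B1
  have zB2 : -(i2U ≫ q) + i2V ≫ (𝟙 V - e) - p = 0 := sub_eq_zero.mpr B2
  refine sub_eq_zero.mp ?_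
  calc a + iA ≫ r + i1 ≫ (b + iU ≫ r) - (a + (i2U ≫ b + i2V ≫ r))
      = ((i1 ≫ (𝟙 U - (d + iU ≫ s)) - (c + iA ≫ s))
          - ((i2U ≫ (𝟙 U - d) - i2V ≫ s - c)
             + ((-(i2U ≫ q) + i2V ≫ (𝟙 V - e) - p)
                 - (iA ≫ (𝟙 V - e) - p) - i2U ≫ (iU ≫ (𝟙 V - e) - q)) ≫ kU
             - (i2V - iA - i2U ≫ iU) ≫ ((𝟙 V - e) ≫ kU - s))) ≫ k1
        - (i1 - i2U) ≫ ((𝟙 U - (d + iU ≫ s)) ≫ k1 - (b + iU ≫ r))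
        - ((-(i2U ≫ q) + i2V ≫ (𝟙 V - e) - p)
            - (iA ≫ (𝟙 V - e) - p) - i2U ≫ (iU ≫ (𝟙 V - e) - q)) ≫ kB
        + (i2V - iA - i2U ≫ iU) ≫ ((𝟙 V - e) ≫ kB - r) := by
        simp only [Preadditive.comp_sub, Preadditive.sub_comp, Preadditive.comp_add,
          Preadditive.add_comp, Category.comp_id, Category.id_comp, Category.assoc,
          Preadditive.neg_comp, Preadditive.comp_neg]
        abel
    _ = 0 := by rw [z1, z2, z3, z4, zH1, zH2, zB1, zB2]; simp
end Alg

/-- Vanishing II for the kernel-image trace: if `Tr_KI^V(f)` is defined, with value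
`g`, then `Tr_KI^U(g)` is defined iff `Tr_KI^{U⊞V}(f)` is defined (with `f`
reassociated as a morphism `A ⊞ (U ⊞ V) ⟶ B ⊞ (U ⊞ V)`), and in that case the
values agree. -/
theorem trKI_vanishing_two {A B U V : C} (f : (A ⊞ U) ⊞ V ⟶ (B ⊞ U) ⊞ V)
    (k : V ⟶ B ⊞ U) (i : A ⊞ U ⟶ V) (h : KIW f k i) :
    (let g : A ⊞ U ⟶ B ⊞ U := KIval f i
     -- f reassociated as A ⊞ (U ⊞ V) ⟶ B ⊞ (U ⊞ V)
     let f' : A ⊞ (U ⊞ V) ⟶ B ⊞ (U ⊞ V) :=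
       biprod.lift (biprod.lift biprod.fst (biprod.snd ≫ biprod.fst))
           (biprod.snd ≫ biprod.snd) ≫ f ≫
         biprod.lift (biprod.fst ≫ biprod.fst)
           (biprod.lift (biprod.fst ≫ biprod.snd) biprod.snd)
     ((∃ (k1 : U ⟶ B) (i1 : A ⟶ U), KIW g k1 i1) ↔
       (∃ (k2 : U ⊞ V ⟶ B) (i2 : A ⟶ U ⊞ V), KIW f' k2 i2)) ∧
     ∀ (k1 : U ⟶ B) (i1 : A ⟶ U) (k2 : U ⊞ V ⟶ B) (i2 : A ⟶ U ⊞ V),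
       KIW g k1 i1 → KIW f' k2 i2 → KIval g i1 = KIval f' i2) := by
  obtain ⟨hi, hk⟩ := h
  intro g f'
  have hgdef : g = KIval f i := rfl
  have hf'def : f' =
      biprod.lift (biprod.lift biprod.fst (biprod.snd ≫ biprod.fst))
          (biprod.snd ≫ biprod.snd) ≫ f ≫
        biprod.lift (biprod.fst ≫ biprod.fst)
          (biprod.lift (biprod.fst ≫ biprod.snd) biprod.snd) := rfl
  have hiA : (biprod.inl ≫ i) ≫ (𝟙 V - c22 f) = biprod.inl ≫ c21 f := by
    rw [Category.assoc, hi]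
  have hiU : (biprod.inr ≫ i) ≫ (𝟙 V - c22 f) = biprod.inr ≫ c21 f := by
    rw [Category.assoc, hi]
  have hkB : (𝟙 V - c22 f) ≫ (k ≫ biprod.fst) = c12 f ≫ biprod.fst := by
    rw [← Category.assoc, hk]
  have hkU : (𝟙 V - c22 f) ≫ (k ≫ biprod.snd) = c12 f ≫ biprod.snd := by
    rw [← Category.assoc, hk]
  have z1 : (biprod.inl ≫ i) ≫ (𝟙 V - c22 f) - biprod.inl ≫ c21 f = 0 := sub_eq_zero.mpr hiA
  have z2 : (biprod.inr ≫ i) ≫ (𝟙 V - c22 f) - biprod.inr ≫ c21 f = 0 := sub_eq_zero.mpr hiU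
  have z3 : (𝟙 V - c22 f) ≫ (k ≫ biprod.fst) - c12 f ≫ biprod.fst = 0 := sub_eq_zero.mpr hkB
  have z4 : (𝟙 V - c22 f) ≫ (k ≫ biprod.snd) - c12 f ≫ biprod.snd = 0 := sub_eq_zero.mpr hkU
  have hg22 : c22 g = c22 (c11 f) + (biprod.inr ≫ i) ≫ (c12 f ≫ biprod.snd) := by
    rw [hgdef]; simp [KIval, c11, c12, c21, c22]
  have hg21 : c21 g = c21 (c11 f) + (biprod.inl ≫ i) ≫ (c12 f ≫ biprod.snd) := by
    rw [hgdef]; simp [KIval, c11, c12, c21, c22]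
  have hg12 : c12 g = c12 (c11 f) + (biprod.inr ≫ i) ≫ (c12 f ≫ biprod.fst) := by
    rw [hgdef]; simp [KIval, c11, c12, c21, c22]
  have extractB : ∀ (k2 : U ⊞ V ⟶ B) (i2 : A ⟶ U ⊞ V), KIW f' k2 i2 →
      ((i2 ≫ biprod.fst) ≫ (𝟙 U - c22 (c11 f))
          - (i2 ≫ biprod.snd) ≫ (c12 f ≫ biprod.snd) = c21 (c11 f)) ∧
      (-((i2 ≫ biprod.fst) ≫ (biprod.inr ≫ c21 f))
          + (i2 ≫ biprod.snd) ≫ (𝟙 V - c22 f) = biprod.inl ≫ c21 f) ∧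
      ((𝟙 U - c22 (c11 f)) ≫ (biprod.inl ≫ k2)
          - (biprod.inr ≫ c21 f) ≫ (biprod.inr ≫ k2) = c12 (c11 f)) ∧
      (-((c12 f ≫ biprod.snd) ≫ (biprod.inl ≫ k2))
          + (𝟙 V - c22 f) ≫ (biprod.inr ≫ k2) = c12 f ≫ biprod.fst) := by
    rintro k2 i2 ⟨hv1, hv2⟩
    have zD1 : i2 ≫ (𝟙 (U ⊞ V) - c22 f') - c21 f' = 0 := sub_eq_zero.mpr hv1
    have zD2 : (𝟙 (U ⊞ V) - c22 f') ≫ k2 - c12 f' = 0 := sub_eq_zero.mpr hv2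
    refine ⟨?_, ?_, ?_, ?_⟩
    · refine sub_eq_zero.mp ?_
      have hz : (i2 ≫ (𝟙 (U ⊞ V) - c22 f') - c21 f') ≫ biprod.fst = 0 := by rw [zD1]; simp
      rw [← hz]
      simp [hf'def, c11, c12, c21, c22, biprod.lift_eq, biprod.desc_eq,
        Preadditive.sub_comp, Preadditive.comp_sub] <;> abel
    · refine sub_eq_zero.mp ?_
      have hz : (i2 ≫ (𝟙 (U ⊞ V) - c22 f') - c21 f') ≫ biprod.snd = 0 := by rw [zD1]; simp
      rw [← hz]
      simp [hf'def, c11, c12, c21, c22, biprod.lift_eq, biprod.desc_eq,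
        Preadditive.sub_comp, Preadditive.comp_sub] <;> abel
    · refine sub_eq_zero.mp ?_
      have hz : biprod.inl ≫ ((𝟙 (U ⊞ V) - c22 f') ≫ k2 - c12 f') = 0 := by rw [zD2]; simp
      rw [← hz]
      simp [hf'def, c11, c12, c21, c22, biprod.lift_eq, biprod.desc_eq,
        Preadditive.sub_comp, Preadditive.comp_sub] <;> abel
    · refine sub_eq_zero.mp ?_
      have hz : biprod.inr ≫ ((𝟙 (U ⊞ V) - c22 f') ≫ k2 - c12 f') = 0 := by rw [zD2]; simp
      rw [← hz]
      simp [hf'def, c11, c12, c21, c22, biprod.lift_eq, biprod.desc_eq,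
        Preadditive.sub_comp, Preadditive.comp_sub] <;> abel
  refine ⟨⟨?_, ?_⟩, ?_⟩
  · rintro ⟨k1, i1, hw1, hw2⟩
    rw [hg22, hg21] at hw1
    rw [hg22, hg12] at hw2
    have zH1 : i1 ≫ (𝟙 U - (c22 (c11 f) + (biprod.inr ≫ i) ≫ (c12 f ≫ biprod.snd)))
        - (c21 (c11 f) + (biprod.inl ≫ i) ≫ (c12 f ≫ biprod.snd)) = 0 := sub_eq_zero.mpr hw1
    have zH2 : (𝟙 U - (c22 (c11 f) + (biprod.inr ≫ i) ≫ (c12 f ≫ biprod.snd))) ≫ k1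
        - (c12 (c11 f) + (biprod.inr ≫ i) ≫ (c12 f ≫ biprod.fst)) = 0 := sub_eq_zero.mpr hw2
    refine ⟨biprod.desc k1 (k ≫ biprod.fst + (k ≫ biprod.snd) ≫ k1),
      biprod.lift i1 (biprod.inl ≫ i + i1 ≫ (biprod.inr ≫ i)), ?_, ?_⟩
    · apply biprod.hom_ext
      · refine sub_eq_zero.mp ?_
        have hz : i1 ≫ (𝟙 U - (c22 (c11 f) + (biprod.inr ≫ i) ≫ (c12 f ≫ biprod.snd)))
            - (c21 (c11 f) + (biprod.inl ≫ i) ≫ (c12 f ≫ biprod.snd)) = 0 := zH1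
        rw [← hz]
        simp [hf'def, c11, c12, c21, c22, biprod.lift_eq, biprod.desc_eq,
          Preadditive.sub_comp, Preadditive.comp_sub] <;> abel
      · refine sub_eq_zero.mp ?_
        have hz : ((biprod.inl ≫ i) ≫ (𝟙 V - c22 f) - biprod.inl ≫ c21 f)
            + i1 ≫ ((biprod.inr ≫ i) ≫ (𝟙 V - c22 f) - biprod.inr ≫ c21 f) = 0 := by
          rw [z1, z2]; simp
        rw [← hz]
        simp [hf'def, c11, c12, c21, c22, biprod.lift_eq, biprod.desc_eq,
          Preadditive.sub_comp, Preadditive.comp_sub] <;> abel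
    · apply biprod.hom_ext'
      · refine sub_eq_zero.mp ?_
        have hz : ((𝟙 U - (c22 (c11 f) + (biprod.inr ≫ i) ≫ (c12 f ≫ biprod.snd))) ≫ k1
              - (c12 (c11 f) + (biprod.inr ≫ i) ≫ (c12 f ≫ biprod.fst)))
            + (((biprod.inr ≫ i) ≫ (𝟙 V - c22 f) - biprod.inr ≫ c21 f)
                ≫ (k ≫ biprod.snd)) ≫ k1
            - ((biprod.inr ≫ i)
                ≫ ((𝟙 V - c22 f) ≫ (k ≫ biprod.snd) - c12 f ≫ biprod.snd)) ≫ k1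
            + ((biprod.inr ≫ i) ≫ (𝟙 V - c22 f) - biprod.inr ≫ c21 f) ≫ (k ≫ biprod.fst)
            - (biprod.inr ≫ i)
                ≫ ((𝟙 V - c22 f) ≫ (k ≫ biprod.fst) - c12 f ≫ biprod.fst) = 0 := by
          rw [z2, z3, z4, zH2]; simp
        rw [← hz]
        simp [hf'def, c11, c12, c21, c22, biprod.lift_eq, biprod.desc_eq,
          Preadditive.sub_comp, Preadditive.comp_sub] <;> abel
      · refine sub_eq_zero.mp ?_
        have hz : ((𝟙 V - c22 f) ≫ (k ≫ biprod.fst) - c12 f ≫ biprod.fst)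
            + ((𝟙 V - c22 f) ≫ (k ≫ biprod.snd) - c12 f ≫ biprod.snd) ≫ k1 = 0 := by
          rw [z3, z4]; simp
        rw [← hz]
        simp [hf'def, c11, c12, c21, c22, biprod.lift_eq, biprod.desc_eq,
          Preadditive.sub_comp, Preadditive.comp_sub] <;> abel
  · rintro ⟨k2, i2, hv⟩
    obtain ⟨B1, B2, B3, B4⟩ := extractB k2 i2 hv
    refine ⟨biprod.inl ≫ k2, i2 ≫ biprod.fst, ?_, ?_⟩
    · rw [hg22, hg21]
      exact trKI2.bwd1 hiA hiU hkU B1 B2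
    · rw [hg22, hg12]
      exact trKI2.bwd2 hiU B3 B4
  · rintro k1 i1 k2 i2 ⟨hw1, hw2⟩ hv
    obtain ⟨B1, B2, B3, B4⟩ := extractB k2 i2 hv
    rw [hg22, hg21] at hw1
    rw [hg22, hg12] at hw2
    have hval := trKI2.val (a := c11 (c11 f)) hiA hiU hkB hkU hw1 hw2 B1 B2
    refine sub_eq_zero.mp ?_
    have hz : (c11 (c11 f) + (biprod.inl ≫ i) ≫ (c12 f ≫ biprod.fst)
          + i1 ≫ (c12 (c11 f) + (biprod.inr ≫ i) ≫ (c12 f ≫ biprod.fst)))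
        - (c11 (c11 f) + ((i2 ≫ biprod.fst) ≫ c12 (c11 f)
          + (i2 ≫ biprod.snd) ≫ (c12 f ≫ biprod.fst))) = 0 := sub_eq_zero.mpr hval
    rw [← hz]
    simp [hgdef, hf'def, KIval, c11, c12, c21, c22, biprod.lift_eq, biprod.desc_eq,
      Preadditive.sub_comp, Preadditive.comp_sub] <;> abel
end

section
/- The kernel-image trace refines the Haghverdi–Scott trace: in a preadditive category with binary biproducts, let f : A ⊞ U ⟶ B ⊞ U with matrix components f_ij. If 1_U − f₂₂ is an isomorphism, then the pair (f₁₂∘(1_U − f₂₂)⁻¹, (1_U − f₂₂)⁻¹∘f₂₁) is a witness for Tr_KI^U(f), so Tr_KI^U(f) is defined and Tr_KI^U(f) = f₁₁ + f₁₂∘(1_U − f₂₂)⁻¹∘f₂₁ = Tr_HS^U(f). In particular Tr_HS^U(f) ⊑ Tr_KI^U(f) for every f. -/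
open CategoryTheory CategoryTheory.Limits

universe v u

variable {C : Type u} [Category.{v} C] [Preadditive C] [HasBinaryBiproducts C]

/-- The kernel-image trace refines the Haghverdi–Scott trace: if `1_U − f₂₂` is an
isomorphism, then `(f₁₂∘(1_U − f₂₂)⁻¹, (1_U − f₂₂)⁻¹∘f₂₁)` is a witness for
`Tr_KI^U(f)`, which is therefore defined and equal to the Haghverdi–Scott trace
`f₁₁ + f₁₂∘(1_U − f₂₂)⁻¹∘f₂₁`. -/
theorem trKI_refines_trHS {A B U : C} (f : A ⊞ U ⟶ B ⊞ U)
    (h : IsIso (𝟙 U - c22 f)) :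
    KIW f ((letI := h; inv (𝟙 U - c22 f)) ≫ c12 f)
        (c21 f ≫ (letI := h; inv (𝟙 U - c22 f))) ∧
    KIval f (c21 f ≫ (letI := h; inv (𝟙 U - c22 f))) =
      c11 f + c21 f ≫ (letI := h; inv (𝟙 U - c22 f)) ≫ c12 f := by
  refine ⟨⟨?_, ?_⟩, ?_⟩
  · rw [Category.assoc, IsIso.inv_hom_id, Category.comp_id]
  · rw [← Category.assoc, IsIso.hom_inv_id, Category.id_comp]
  · simp [KIval]
end
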